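/- arXiv:2311.02245 — 8 statements merged into one kernel-verified Lean document; each statement's English description precedes it below -/
import Mathlib

section
/- For every positive integer p and every natural number n, the number of noncrossing partitions of {1,…,pn} in which every block has exactly p elements equals the Fuss–Catalan number A_n^p = (1/(pn+1))·C(pn+1, n). -/
/-- A finpartition of a finite set of naturals is noncrossing (planar) if there are no
elements `a < b < c < d` with `a, c` in one block and `b, d` in a different block. -/
def IsNoncrossing {s : Finset ℕ} (P : Finpartition s) : Prop :=
  ∀ a b c d : ℕ, a < b → b < c → c < d →
    ∀ B₁ ∈ P.parts, ∀ B₂ ∈ P.parts,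
      a ∈ B₁ → c ∈ B₁ → b ∈ B₂ → d ∈ B₂ → B₁ = B₂

/-!
Record a noncrossing partition of `s` into `p`-blocks by the set `M` of its block minima. The
block opened at the largest minimum `m` must consist of the `p` smallest elements of `s` from `m`
on (an element in between would lie in an earlier block, which would cross it), so `M` determines
the partition; and such a partition exists exactly when `#s = p * #M` and every prefix of `s` has
at most `p` times as many elements as the corresponding prefix of `M`.

For `s = {1, …, pn}` these `M` are the `n`-subsets of `{0, …, pn}` whose walk
`j ↦ p * #(M ∩ [0, j)) - j` never drops below its value at `1`. Extended periodically, the walk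
loses `1` over each period of length `pn + 1`, so by the cycle lemma exactly one of the `pn + 1`
cyclic rotations of any `n`-subset has this property; hence there are `C(pn+1, n) / (pn+1)`.
-/

open Finset

theorem Finpartition.parts_avoid_of_mem {α : Type*} [GeneralizedBooleanAlgebra α] [DecidableEq α]
    {a b : α} (P : Finpartition a) (hb : b ∈ P.parts) : (P.avoid b).parts = P.parts.erase b := by
  ext c
  rw [mem_avoid, mem_erase]
  constructor
  · rintro ⟨d, hd, hdb, rfl⟩
    have hne : d ≠ b := by
      rintro rfl
      exact hdb le_rfl
    have hdisj : Disjoint d b := P.disjoint hd hb hne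
    rw [hdisj.sdiff_eq_left]
    exact ⟨hne, hd⟩
  · rintro ⟨hne, hc⟩
    have hdisj : Disjoint c b := P.disjoint hc hb hne
    exact ⟨c, hc, fun hle => P.ne_bot hc (hdisj.eq_bot_of_le hle), hdisj.sdiff_eq_left⟩

theorem Finset.eq_of_card_eq_of_lowerClosed {α : Type*} [LinearOrder α] {t B C : Finset α}
    (hBt : B ⊆ t) (hCt : C ⊆ t) (hB : ∀ x ∈ t, ∀ y ∈ B, x ≤ y → x ∈ B)
    (hC : ∀ x ∈ t, ∀ y ∈ C, x ≤ y → x ∈ C) (hcard : #B = #C) : B = C := by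
  by_cases hBC : B ⊆ C
  · exact eq_of_subset_of_card_le hBC hcard.ge
  obtain ⟨b, hbB, hbC⟩ := not_subset.1 hBC
  have hCB : C ⊆ B := fun c hc =>
    hB c (hCt hc) b hbB (le_of_not_ge fun hbc => hbC (hC b (hBt hbB) c hc hbc))
  exact (eq_of_subset_of_card_le hCB hcard.le).symm

theorem Finset.exists_card_inter_Ico_eq {s : Finset ℕ} {m k : ℕ}
    (hk : k ≤ #{x ∈ s | m ≤ x}) : ∃ a, #(s ∩ Ico m a) = k := by
  -- `b ↦ #(s ∩ Ico m b)` starts at `0` and climbs in steps of at most one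
  suffices ∀ b, k ≤ #(s ∩ Ico m b) → ∃ a, #(s ∩ Ico m a) = k by
    refine this (s.sup id + 1) (hk.trans (card_le_card fun x hx => ?_))
    rw [mem_filter] at hx
    simp only [mem_inter, mem_Ico]
    exact ⟨hx.1, hx.2, Nat.lt_succ_of_le (le_sup (f := id) hx.1)⟩
  intro b hb
  induction b with
  | zero => exact ⟨0, by simp at hb ⊢; omega⟩
  | succ b ih =>
    by_cases h : k ≤ #(s ∩ Ico m b)
    · exact ih h
    refine ⟨b + 1, le_antisymm ?_ hb⟩
    have : s ∩ Ico m (b + 1) ⊆ insert b (s ∩ Ico m b) := by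
      intro x hx
      rw [mem_inter, mem_Ico] at hx
      rw [mem_insert, mem_inter, mem_Ico]
      rcases Nat.lt_succ_iff_lt_or_eq.1 hx.2.2 with h | h
      · exact Or.inr ⟨hx.1, hx.2.1, h⟩
      · exact Or.inl h
    have := (card_le_card this).trans (card_insert_le _ _)
    omega

namespace Finpartition

variable {α : Type*} [LinearOrder α] {s : Finset α} (P : Finpartition s)

def blockMins : Finset α := P.parts.biUnion fun B => {x ∈ B | ∀ y ∈ B, x ≤ y}

variable {P}

theorem mem_blockMins {x : α} :
    x ∈ P.blockMins ↔ ∃ B ∈ P.parts, x ∈ B ∧ ∀ y ∈ B, x ≤ y := by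
  simp only [blockMins, mem_biUnion, mem_filter]

theorem blockMins_subset : P.blockMins ⊆ s := by
  intro x hx
  obtain ⟨B, hB, hxB, -⟩ := mem_blockMins.1 hx
  exact P.le hB hxB

theorem le_of_mem_part {m y : α} (hm : m ∈ P.blockMins) (hy : y ∈ P.part m) : m ≤ y := by
  obtain ⟨B, hB, hmB, hmin⟩ := mem_blockMins.1 hm
  rw [P.part_eq_of_mem hB hmB] at hy
  exact hmin y hy

theorem exists_mem_blockMins {y : α} (hy : y ∈ s) :
    ∃ z ∈ P.blockMins, z ≤ y ∧ P.part z = P.part y := by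
  have hne : (P.part y).Nonempty := ⟨y, P.mem_part hy⟩
  have hz := (P.part y).min'_mem hne
  refine ⟨_, mem_blockMins.2 ⟨P.part y, P.part_mem.2 hy, hz, fun x hx => min'_le _ x hx⟩,
    min'_le _ y (P.mem_part hy), P.part_eq_of_mem (P.part_mem.2 hy) hz⟩

theorem card_blockMins : #P.blockMins = #P.parts := by
  rw [blockMins, card_biUnion fun B hB C hC hBC =>
    disjoint_filter_filter (s := B) (t := C) (P.disjoint hB hC hBC), card_eq_sum_ones]
  refine sum_congr rfl fun B hB => card_eq_one.2 ⟨B.min' (P.nonempty_of_mem_parts hB), ?_⟩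
  ext x
  simp only [mem_filter, mem_singleton]
  constructor
  · rintro ⟨hx, hmin⟩
    exact le_antisymm (hmin _ (min'_mem _ _)) (min'_le _ x hx)
  · rintro rfl
    exact ⟨min'_mem _ _, fun y hy => min'_le _ y hy⟩

theorem card_eq_mul_card_blockMins {p : ℕ} (hP : ∀ B ∈ P.parts, #B = p) :
    #s = p * #P.blockMins := by
  rw [card_blockMins, ← P.sum_card_parts, sum_congr rfl hP, sum_const, smul_eq_mul, mul_comm]

theorem card_filter_lt_le_mul {p : ℕ} (hP : ∀ B ∈ P.parts, #B = p) (x : α) :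
    #{y ∈ s | y < x} ≤ p * #{z ∈ P.blockMins | z < x} := by
  calc #{y ∈ s | y < x} ≤ #({z ∈ P.blockMins | z < x}.biUnion P.part) := by
        refine card_le_card fun y hy => ?_
        rw [mem_filter] at hy
        obtain ⟨z, hz, hzy, hzy'⟩ := exists_mem_blockMins hy.1
        exact mem_biUnion.2
          ⟨z, mem_filter.2 ⟨hz, hzy.trans_lt hy.2⟩, hzy' ▸ P.mem_part hy.1⟩
    _ ≤ #{z ∈ P.blockMins | z < x} * p := card_biUnion_le_card_mul _ _ _ fun z hz =>
        (hP _ (P.part_mem.2 (blockMins_subset (mem_filter.1 hz).1))).le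
    _ = p * #{z ∈ P.blockMins | z < x} := mul_comm _ _

theorem blockMins_avoid {B : Finset α} (hB : B ∈ P.parts) :
    (P.avoid B).blockMins = P.blockMins \ B := by
  ext x
  simp only [mem_sdiff, mem_blockMins, P.parts_avoid_of_mem hB, mem_erase]
  constructor
  · rintro ⟨C, ⟨hCB, hC⟩, hxC, hmin⟩
    exact ⟨⟨C, hC, hxC, hmin⟩, disjoint_left.1 (P.disjoint hC hB hCB) hxC⟩
  · rintro ⟨⟨C, hC, hxC, hmin⟩, hxB⟩
    exact ⟨C, ⟨fun h => hxB (h ▸ hxC), hC⟩, hxC, hmin⟩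

theorem blockMins_extend {s' B : Finset α} (P : Finpartition s') (hB : B ≠ ⊥)
    (hdisj : Disjoint s' B) (hs : s' ⊔ B = s) {m : α} (hm : m ∈ B)
    (hmin : ∀ y ∈ B, m ≤ y) :
    (P.extend hB hdisj hs).blockMins = insert m P.blockMins := by
  ext x
  simp only [mem_blockMins, extend_parts, mem_insert, exists_eq_or_imp]
  refine or_congr_left ⟨fun h => le_antisymm (h.2 m hm) (hmin x h.1), ?_⟩
  rintro rfl
  exact ⟨hm, hmin⟩

end Finpartition

def Dominates (p : ℕ) (M s : Finset ℕ) : Prop :=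
  ∀ x, #{y ∈ s | y < x} ≤ p * #{y ∈ M | y < x}

namespace Dominates

variable {p m : ℕ} {M s : Finset ℕ}

theorem exists_card_inter_Ico_eq (hdom : Dominates p (insert m M) s) (hlt : ∀ x ∈ M, x < m)
    (hcard : #s = p * #M + p) : ∃ a, #(s ∩ Ico m a) = p := by
  refine Finset.exists_card_inter_Ico_eq ?_
  have h := hdom m
  rw [filter_insert, if_neg (lt_irrefl m), filter_true_of_mem hlt] at h
  have := card_filter_add_card_filter_not (s := s) (p := (· < m))
  simp only [not_lt] at this
  omega

theorem of_insert {t : Finset ℕ} (hdom : Dominates p (insert m M) s) (hlt : ∀ x ∈ M, x < m)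
    (hts : t ⊆ s) (hcard : #t = p * #M) : Dominates p M t := by
  intro x
  rcases le_or_gt x m with hxm | hmx
  · have h := hdom x
    rw [filter_insert, if_neg hxm.not_gt] at h
    exact (card_le_card (filter_subset_filter _ hts)).trans h
  · rw [filter_true_of_mem fun y hy => (hlt y hy).trans hmx, ← hcard]
    exact card_filter_le _ _

end Dominates

namespace IsNoncrossing

theorem avoid {s B : Finset ℕ} {P : Finpartition s} (hP : IsNoncrossing P) (hB : B ∈ P.parts) :
    IsNoncrossing (P.avoid B) := by
  intro a b c d hab hbc hcd B₁ hB₁ B₂ hB₂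
  rw [P.parts_avoid_of_mem hB] at hB₁ hB₂
  exact hP a b c d hab hbc hcd B₁ (mem_of_mem_erase hB₁) B₂ (mem_of_mem_erase hB₂)

theorem extend {s s' B : Finset ℕ} {P : Finpartition s'} (hP : IsNoncrossing P) (hB : B ≠ ⊥)
    (hdisj : Disjoint s' B) (hs : s' ⊔ B = s)
    (hconvex : ∀ y ∈ B, ∀ z ∈ B, ∀ x ∈ s', ¬(y < x ∧ x < z)) :
    IsNoncrossing (P.extend hB hdisj hs) := by
  intro a b c d hab hbc hcd B₁ hB₁ B₂ hB₂ ha hc hb hd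
  rw [Finpartition.extend_parts, mem_insert] at hB₁ hB₂
  rcases hB₁ with rfl | hB₁ <;> rcases hB₂ with rfl | hB₂
  · rfl
  · exact (hconvex a ha c hc b (P.le hB₂ hb) ⟨hab, hbc⟩).elim
  · exact (hconvex b hb d hd c (P.le hB₁ hc) ⟨hbc, hcd⟩).elim
  · exact hP a b c d hab hbc hcd B₁ hB₁ B₂ hB₂ ha hc hb hd

/-- An element between `m` and a member of its block that lay in another block would lie in a
block opened before `m`, and the two blocks would cross. -/
theorem mem_part_of_le {s : Finset ℕ} {P : Finpartition s} (hP : IsNoncrossing P) {m x y : ℕ}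
    (hmax : ∀ z ∈ P.blockMins, z ≤ m) (hx : x ∈ s) (hmx : m ≤ x) (hy : y ∈ P.part m)
    (hxy : x ≤ y) : x ∈ P.part m := by
  have hm : m ∈ s := P.part_nonempty.1 ⟨y, hy⟩
  obtain ⟨z, hz, -, hzx'⟩ := P.exists_mem_blockMins hx
  rcases (hmax z hz).lt_or_eq with hzm | rfl
  · rcases hmx.lt_or_eq with hmx | rfl
    · rcases hxy.lt_or_eq with hxy | rfl
      · rw [← hP z m x y hzm hmx hxy _ (P.part_mem.2 hx) _ (P.part_mem.2 hm)
          (hzx' ▸ P.mem_part (P.blockMins_subset hz)) (P.mem_part hx) (P.mem_part hm) hy]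
        exact P.mem_part hx
      · exact hy
    · exact P.mem_part hm
  · exact hzx' ▸ P.mem_part hx

end IsNoncrossing

section Bijection

variable {p : ℕ}

theorem IsNoncrossing.part_eq_part_of_max {s : Finset ℕ} {P Q : Finpartition s}
    (hP : IsNoncrossing P) (hQ : IsNoncrossing Q) (hPp : ∀ B ∈ P.parts, #B = p)
    (hQp : ∀ B ∈ Q.parts, #B = p) (hPQ : P.blockMins = Q.blockMins) {m : ℕ}
    (hm : m ∈ P.blockMins) (hmax : ∀ z ∈ P.blockMins, z ≤ m) : P.part m = Q.part m := by
  have hms : m ∈ s := P.blockMins_subset hm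
  refine eq_of_card_eq_of_lowerClosed (t := {x ∈ s | m ≤ x}) ?_ ?_
    (fun x hx _ hy hxy => hP.mem_part_of_le hmax (mem_filter.1 hx).1 (mem_filter.1 hx).2 hy hxy)
    (fun x hx _ hy hxy =>
      hQ.mem_part_of_le (hPQ ▸ hmax) (mem_filter.1 hx).1 (mem_filter.1 hx).2 hy hxy)
    ((hPp _ (P.part_mem.2 hms)).trans (hQp _ (Q.part_mem.2 hms)).symm)
  · exact fun y hy => mem_filter.2 ⟨P.part_subset m hy, P.le_of_mem_part hm hy⟩
  · exact fun y hy => mem_filter.2 ⟨Q.part_subset m hy, Q.le_of_mem_part (hPQ ▸ hm) hy⟩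

theorem IsNoncrossing.eq_of_blockMins_eq {s : Finset ℕ} {P Q : Finpartition s}
    (hP : IsNoncrossing P) (hQ : IsNoncrossing Q) (hPp : ∀ B ∈ P.parts, #B = p)
    (hQp : ∀ B ∈ Q.parts, #B = p) (hPQ : P.blockMins = Q.blockMins) : P = Q := by
  induction s using Finset.strongInduction with
  | H s ih =>
    rcases s.eq_empty_or_nonempty with rfl | ⟨y, hy⟩
    · exact Subsingleton.elim (α := Finpartition (⊥ : Finset ℕ)) P Q
    obtain ⟨z, hz, -⟩ := P.exists_mem_blockMins hy
    have hne : P.blockMins.Nonempty := ⟨z, hz⟩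
    set m := P.blockMins.max' hne
    have hm := P.blockMins.max'_mem hne
    have hPQm := hP.part_eq_part_of_max hQ hPp hQp hPQ hm (P.blockMins.le_max' · ·)
    set B := P.part m
    have hms : m ∈ s := P.blockMins_subset hm
    have hBP : B ∈ P.parts := P.part_mem.2 hms
    have hBQ : B ∈ Q.parts := hPQm ▸ Q.part_mem.2 hms
    have hcards : ∀ {R : Finpartition s}, (∀ C ∈ R.parts, #C = p) → B ∈ R.parts →
        ∀ C ∈ (R.avoid B).parts, #C = p := fun {R} hR hB C hC =>
      hR C (mem_of_mem_erase (R.parts_avoid_of_mem hB ▸ hC))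
    have havoid : P.avoid B = Q.avoid B :=
      ih _ (sdiff_ssubset (P.part_subset m) ⟨m, P.mem_part hms⟩) (hP.avoid hBP) (hQ.avoid hBQ)
        (hcards hPp hBP) (hcards hQp hBQ)
        (by rw [P.blockMins_avoid hBP, Q.blockMins_avoid hBQ, hPQ])
    ext1
    rw [← insert_erase hBP, ← insert_erase hBQ, ← P.parts_avoid_of_mem hBP,
      ← Q.parts_avoid_of_mem hBQ, havoid]

theorem exists_isNoncrossing_of_dominates {M : Finset ℕ} :
    ∀ {s : Finset ℕ}, M ⊆ s → #s = p * #M → Dominates p M s →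
      ∃ P : Finpartition s,
        IsNoncrossing P ∧ (∀ B ∈ P.parts, #B = p) ∧ P.blockMins = M := by
  induction M using Finset.induction_on_max with
  | empty =>
    intro s _ hs _
    have hP : (⊥ : Finpartition s).parts = ∅ :=
      Finpartition.parts_eq_empty_iff.2 (card_eq_zero.1 (by simpa using hs))
    refine ⟨⊥, fun _ _ _ _ _ _ _ B hB => ?_, fun B hB => ?_, ?_⟩
    · simp [hP] at hB
    · simp [hP] at hB
    · simp [Finpartition.blockMins, hP]
  | insert m M hlt ih =>
    intro s hMs hcard hdom
    have hm : m ∈ s := hMs (mem_insert_self m M)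
    rw [card_insert_of_notMem fun h => (hlt m h).false, mul_add, mul_one] at hcard
    -- the new block consists of the `p` smallest elements of `s` from `m` on
    obtain ⟨a, hB⟩ := hdom.exists_card_inter_Ico_eq hlt hcard
    set B := s ∩ Ico m a with hBdef
    have hmem : ∀ {x}, x ∈ B ↔ x ∈ s ∧ m ≤ x ∧ x < a := by simp [hBdef]
    have hp : 0 < p := Nat.pos_of_ne_zero fun hp => by simp [hp] at hcard; simp [hcard] at hm
    obtain ⟨y, hy⟩ : B.Nonempty := card_pos.1 (hB ▸ hp)
    have hmB : m ∈ B := hmem.2 ⟨hm, le_rfl, (hmem.1 hy).2.1.trans_lt (hmem.1 hy).2.2⟩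
    have hBmin : ∀ z ∈ B, m ≤ z := fun z hz => (hmem.1 hz).2.1
    have hMs' : M ⊆ s \ B := fun x hx =>
      mem_sdiff.2 ⟨hMs (mem_insert_of_mem hx), fun hxB => (hBmin x hxB).not_gt (hlt x hx)⟩
    have hcard' : #(s \ B) = p * #M := by
      rw [card_sdiff_of_subset inter_subset_left, hB, hcard, Nat.add_sub_cancel]
    obtain ⟨P, hP, hPp, hPM⟩ := ih hMs' hcard' (hdom.of_insert hlt sdiff_subset hcard')
    have hBbot : B ≠ ⊥ := ne_empty_of_mem hmB
    refine ⟨P.extend hBbot sdiff_disjoint (sdiff_sup_cancel inter_subset_left), ?_, ?_, ?_⟩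
    · refine hP.extend _ _ _ fun y hy z hz x hx ⟨hyx, hxz⟩ => (mem_sdiff.1 hx).2 ?_
      have := hmem.1 hy
      have := hmem.1 hz
      exact hmem.2 ⟨(mem_sdiff.1 hx).1, by omega, by omega⟩
    · intro C hC
      rw [Finpartition.extend_parts, mem_insert] at hC
      rcases hC with rfl | hC
      · exact hB
      · exact hPp C hC
    · rw [Finpartition.blockMins_extend P hBbot _ _ hmB hBmin, hPM]

theorem card_isNoncrossing_eq_card_dominates (s : Finset ℕ) :
    Nat.card {P : Finpartition s // IsNoncrossing P ∧ ∀ B ∈ P.parts, #B = p} =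
      Nat.card {M : Finset ℕ // M ⊆ s ∧ #s = p * #M ∧ Dominates p M s} := by
  refine Nat.card_congr (Equiv.ofBijective (fun P => ⟨P.1.blockMins, P.1.blockMins_subset,
    P.1.card_eq_mul_card_blockMins P.2.2, P.1.card_filter_lt_le_mul P.2.2⟩) ⟨?_, ?_⟩)
  · rintro ⟨P, hP, hPp⟩ ⟨Q, hQ, hQp⟩ h
    exact Subtype.ext (hP.eq_of_blockMins_eq hQ hPp hQp (congrArg Subtype.val h))
  · rintro ⟨M, hMs, hcard, hdom⟩
    obtain ⟨P, hP, hPp, hPM⟩ := exists_isNoncrossing_of_dominates hMs hcard hdom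
    exact ⟨⟨P, hP, hPp⟩, Subtype.ext hPM⟩

end Bijection

def IsCyclicMin (N : ℕ) (w : ℕ → ℤ) (r : ℕ) : Prop := ∀ k < N, w r ≤ w (r + k)

instance (N : ℕ) (w : ℕ → ℤ) : DecidablePred (IsCyclicMin N w) :=
  fun _ => Nat.decidableBallLT _ _

theorem IsCyclicMin.eq {N : ℕ} {w : ℕ → ℤ} (hw : ∀ j, w (j + N) = w j - 1) {r r' : ℕ}
    (hr : r < N) (hr' : r' < N) (h : IsCyclicMin N w r) (h' : IsCyclicMin N w r') : r = r' := by
  wlog hle : r ≤ r' generalizing r r'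
  · exact (this hr' hr h' h (by omega)).symm
  by_contra hne
  have h₁ := h (r' - r) (by omega)
  have h₂ := h' (r + N - r') (by omega)
  rw [show r + (r' - r) = r' by omega] at h₁
  rw [show r' + (r + N - r') = r + N by omega, hw] at h₂
  omega

theorem existsUnique_isCyclicMin {N : ℕ} (hN : 0 < N) {w : ℕ → ℤ}
    (hw : ∀ j, w (j + N) = w j - 1) : ∃! r, r < N ∧ IsCyclicMin N w r := by
  obtain ⟨r₀, hr₀, hmin⟩ := exists_min_image (range N) w ⟨0, mem_range.2 hN⟩
  have hex : ∃ r, r < N ∧ ∀ j < N, w r ≤ w j :=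
    ⟨r₀, mem_range.1 hr₀, fun j hj => hmin j (mem_range.2 hj)⟩
  -- Take the first minimiser on `[0, N)`: past the window, `w (j + N) = w j - 1` with `j` before
  -- the minimiser, where `w` is strictly larger.
  obtain ⟨hr, hrmin⟩ := Nat.find_spec hex
  have hcyc : IsCyclicMin N w (Nat.find hex) := by
    intro k hk
    rcases lt_or_ge (Nat.find hex + k) N with hlt | hge
    · exact hrmin _ hlt
    obtain ⟨j, hj⟩ : ∃ j, Nat.find hex + k = j + N := ⟨_, (Nat.sub_add_cancel hge).symm⟩
    obtain ⟨i, hi, hij⟩ : ∃ i < N, w i < w j := by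
      by_contra! h
      exact Nat.find_min hex (show j < Nat.find hex by omega) ⟨by omega, h⟩
    have := hrmin i hi
    rw [hj, hw]
    omega
  exact ⟨_, ⟨hr, hcyc⟩, fun r' ⟨hr', h'⟩ => IsCyclicMin.eq hw hr' hr h' hcyc⟩

def cyclicCount (N : ℕ) (A : Finset ℕ) (j : ℕ) : ℕ := #{x ∈ range j | x % N ∈ A}

def ballotWalk (p N : ℕ) (A : Finset ℕ) (j : ℕ) : ℤ := p * cyclicCount N A j - j

def rotate (N r : ℕ) (A : Finset ℕ) : Finset ℕ := {x ∈ range N | (x + r) % N ∈ A}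

section Walk

variable {N : ℕ} {A : Finset ℕ}

theorem cyclicCount_add (N : ℕ) (A : Finset ℕ) (r j : ℕ) :
    cyclicCount N A (r + j) = cyclicCount N A r + #{x ∈ range j | (r + x) % N ∈ A} := by
  simp only [cyclicCount, card_filter, sum_range_add]

theorem cyclicCount_of_le {j : ℕ} (hj : j ≤ N) :
    cyclicCount N A j = #{x ∈ A | x < j} := by
  unfold cyclicCount
  congr 1
  ext x
  simp only [mem_filter, mem_range]
  constructor
  · rintro ⟨hxj, hx⟩
    rw [Nat.mod_eq_of_lt (by omega)] at hx
    exact ⟨hx, hxj⟩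
  · rintro ⟨hx, hxj⟩
    exact ⟨hxj, by rwa [Nat.mod_eq_of_lt (by omega)]⟩

theorem cyclicCount_self (hA : A ⊆ range N) : cyclicCount N A N = #A := by
  rw [cyclicCount_of_le le_rfl, filter_true_of_mem fun x hx => mem_range.1 (hA hx)]

theorem cyclicCount_add_self (hA : A ⊆ range N) (j : ℕ) :
    cyclicCount N A (j + N) = cyclicCount N A j + #A := by
  rw [add_comm j, cyclicCount_add, cyclicCount_self hA, add_comm]
  simp only [cyclicCount, Nat.add_mod_left]

theorem cyclicCount_rotate (hN : 0 < N) (A : Finset ℕ) (r j : ℕ) :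
    cyclicCount N (rotate N r A) j + cyclicCount N A r = cyclicCount N A (r + j) := by
  rw [cyclicCount_add, add_comm]
  congr 1
  unfold cyclicCount
  congr 1
  refine filter_congr fun x _ => ?_
  simp [rotate, Nat.mod_lt _ hN, add_comm r]

theorem ballotWalk_add_self {p : ℕ} (hA : A ⊆ range N) (hN : N = p * #A + 1) (j : ℕ) :
    ballotWalk p N A (j + N) = ballotWalk p N A j - 1 := by
  rw [ballotWalk, ballotWalk, cyclicCount_add_self hA, hN]
  push_cast
  ring

theorem ballotWalk_rotate (hN : 0 < N) (p : ℕ) (A : Finset ℕ) (r j : ℕ) :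
    ballotWalk p N (rotate N r A) j = ballotWalk p N A (r + j) - ballotWalk p N A r := by
  simp only [ballotWalk, ← cyclicCount_rotate hN A r j]
  push_cast
  ring

theorem isCyclicMin_rotate_iff (hN : 0 < N) (p : ℕ) (A : Finset ℕ) (r r' : ℕ) :
    IsCyclicMin N (ballotWalk p N (rotate N r A)) r' ↔
      IsCyclicMin N (ballotWalk p N A) (r + r') := by
  simp only [IsCyclicMin, ballotWalk_rotate hN, add_assoc, sub_le_sub_iff_right]

theorem rotate_subset_range (N r : ℕ) (A : Finset ℕ) : rotate N r A ⊆ range N :=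
  filter_subset _ _

theorem card_rotate (hN : 0 < N) (hA : A ⊆ range N) (r : ℕ) : #(rotate N r A) = #A := by
  have := cyclicCount_rotate hN A r N
  rw [cyclicCount_self (rotate_subset_range N r A), cyclicCount_add_self hA] at this
  omega

theorem rotate_rotate (hN : 0 < N) (r r' : ℕ) (A : Finset ℕ) :
    rotate N r (rotate N r' A) = rotate N (r + r') A := by
  ext x
  simp [rotate, Nat.mod_lt _ hN, add_assoc]

theorem rotate_self (hA : A ⊆ range N) : rotate N N A = A := by
  ext x
  simp only [rotate, mem_filter, mem_range, Nat.add_mod_right]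
  constructor
  · rintro ⟨hx, h⟩
    rwa [Nat.mod_eq_of_lt hx] at h
  · intro h
    have hx := mem_range.1 (hA h)
    exact ⟨hx, by rwa [Nat.mod_eq_of_lt hx]⟩

theorem card_filter_rotate (hN : 0 < N) {r : ℕ} (hr : r ≤ N) (n : ℕ) (Q : Finset ℕ → Prop)
    [DecidablePred Q] :
    #{A ∈ powersetCard n (range N) | Q (rotate N r A)} =
      #{A ∈ powersetCard n (range N) | Q A} := by
  have hmaps : ∀ r', ∀ A ∈ powersetCard n (range N),
      rotate N r' A ∈ powersetCard n (range N) := by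
    intro r' A hA
    rw [mem_powersetCard] at hA ⊢
    exact ⟨rotate_subset_range N r' A, (card_rotate hN hA.1 r').trans hA.2⟩
  have hinv : ∀ r₁ r₂, r₁ + r₂ = N → ∀ A ∈ powersetCard n (range N),
      rotate N r₁ (rotate N r₂ A) = A := fun r₁ r₂ h A hA => by
    rw [rotate_rotate hN, h, rotate_self (mem_powersetCard.1 hA).1]
  apply card_nbij' (rotate N r) (rotate N (N - r))
  · intro A hA
    simp only [mem_coe, mem_filter] at hA ⊢
    exact ⟨hmaps r A hA.1, hA.2⟩
  · intro A hA
    simp only [mem_coe, mem_filter] at hA ⊢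
    exact ⟨hmaps _ A hA.1, by rw [hinv _ _ (Nat.add_sub_cancel' hr) A hA.1]; exact hA.2⟩
  · exact fun A hA => hinv _ _ (Nat.sub_add_cancel hr) A (mem_filter.1 hA).1
  · exact fun A hA => hinv _ _ (Nat.add_sub_cancel' hr) A (mem_filter.1 hA).1

theorem card_filter_isCyclicMin (hN : 0 < N) {r : ℕ} (hr : r ≤ N) (p n : ℕ) :
    #{A ∈ powersetCard n (range N) | IsCyclicMin N (ballotWalk p N A) r} =
      #{A ∈ powersetCard n (range N) | IsCyclicMin N (ballotWalk p N A) 0} := by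
  simp_rw [← card_filter_rotate hN hr n (fun A => IsCyclicMin N (ballotWalk p N A) 0),
    isCyclicMin_rotate_iff hN, add_zero]

end Walk

theorem mul_card_filter_isCyclicMin (p n : ℕ) :
    (p * n + 1) * #{A ∈ powersetCard n (range (p * n + 1)) |
        IsCyclicMin (p * n + 1) (ballotWalk p (p * n + 1) A) 0} = (p * n + 1).choose n := by
  set N := p * n + 1
  set S := powersetCard n (range N)
  have hN : 0 < N := Nat.succ_pos _
  have hunique : ∀ A ∈ S, #{r ∈ range N | IsCyclicMin N (ballotWalk p N A) r} = 1 := by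
    intro A hA
    rw [mem_powersetCard] at hA
    obtain ⟨r, hr, hru⟩ := existsUnique_isCyclicMin hN (ballotWalk_add_self hA.1 (by rw [hA.2]))
    rw [card_eq_one]
    exact ⟨r, by ext; simpa using ⟨fun h => hru _ h, fun h => h ▸ hr⟩⟩
  calc N * #{A ∈ S | IsCyclicMin N (ballotWalk p N A) 0}
      = ∑ r ∈ range N, #{A ∈ S | IsCyclicMin N (ballotWalk p N A) r} := by
        rw [sum_congr rfl fun r hr => card_filter_isCyclicMin hN (mem_range.1 hr).le p n,
          sum_const, card_range, smul_eq_mul]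
    _ = ∑ A ∈ S, #{r ∈ range N | IsCyclicMin N (ballotWalk p N A) r} :=
        (sum_card_bipartiteAbove_eq_sum_card_bipartiteBelow _).symm
    _ = N.choose n := by
        rw [sum_congr rfl hunique, sum_const, smul_eq_mul, mul_one, card_powersetCard, card_range]

theorem ballotWalk_of_le {p N j : ℕ} (A : Finset ℕ) (hj : j ≤ N) :
    ballotWalk p N A j = p * #{x ∈ A | x < j} - j := by
  rw [ballotWalk, cyclicCount_of_le hj]

theorem card_Icc_one_filter_lt {N k : ℕ} (hk : k ≤ N) : #{y ∈ Icc 1 N | y < k + 1} = k := by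
  rw [show {y ∈ Icc 1 N | y < k + 1} = Icc 1 k by ext y; simp only [mem_filter, mem_Icc]; omega,
    Nat.card_Icc, Nat.add_sub_cancel]

theorem dominates_Icc_iff {p n : ℕ} {M : Finset ℕ} (hMs : M ⊆ Icc 1 (p * n))
    (hcard : #M = n) :
    Dominates p M (Icc 1 (p * n)) ↔ ∀ k ≤ p * n, k ≤ p * #{x ∈ M | x < k + 1} := by
  refine ⟨fun h k hk => ?_, ?_⟩
  · have := h (k + 1)
    rwa [card_Icc_one_filter_lt hk] at this
  rintro h (_ | k)
  · simp
  rcases le_or_gt k (p * n) with hk | hk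
  · exact (card_Icc_one_filter_lt hk).trans_le (h k hk)
  · rw [filter_true_of_mem (s := M) fun x hx => by have := (mem_Icc.1 (hMs hx)).2; omega, hcard]
    exact (card_filter_le _ _).trans (by rw [Nat.card_Icc]; omega)

theorem isCyclicMin_one_iff {p n : ℕ} (hp : 0 < p) {M : Finset ℕ}
    (hMs : M ⊆ range (p * n + 1)) (hcard : #M = n) :
    IsCyclicMin (p * n + 1) (ballotWalk p (p * n + 1) M) 1 ↔
      0 ∉ M ∧ ∀ k ≤ p * n, k ≤ p * #{x ∈ M | x < k + 1} := by
  have hwalk : ∀ k ≤ p * n,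
      ballotWalk p (p * n + 1) M (1 + k) = p * #{x ∈ M | x < k + 1} - (k + 1) := fun k hk => by
    rw [ballotWalk_of_le M (by omega), add_comm 1 k]
    push_cast
    ring
  by_cases h0 : 0 ∈ M
  · simp only [h0, not_true_eq_false, false_and, iff_false]
    intro hmin
    have h := hmin (p * n) (by omega)
    have hpos : 0 < #{x ∈ M | x < 1} := card_pos.2 ⟨0, mem_filter.2 ⟨h0, zero_lt_one⟩⟩
    rw [hwalk _ le_rfl, ballotWalk_of_le M (by omega), filter_true_of_mem (s := M) fun x hx =>
      mem_range.1 (hMs hx), hcard] at h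
    push_cast at h
    have : (0 : ℤ) < p * #{x ∈ M | x < 1} :=
      mul_pos (by exact_mod_cast hp) (by exact_mod_cast hpos)
    linarith
  · have hw1 : ballotWalk p (p * n + 1) M 1 = -1 := by
      rw [ballotWalk_of_le M (by omega),
        filter_false_of_mem fun x hx hx1 => h0 (Nat.lt_one_iff.1 hx1 ▸ hx)]
      simp
    simp only [h0, not_false_eq_true, true_and, IsCyclicMin, hw1]
    refine ⟨fun h k hk => ?_, fun h k hk => ?_⟩
    · have := h k (by omega)
      rw [hwalk k hk] at this
      omega
    · rw [hwalk k (by omega)]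
      have := h k (by omega)
      omega

theorem dominates_Icc_iff_isCyclicMin_one {p n : ℕ} (hp : 0 < p) (M : Finset ℕ) :
    (M ⊆ Icc 1 (p * n) ∧ #(Icc 1 (p * n)) = p * #M ∧ Dominates p M (Icc 1 (p * n))) ↔
      M ∈ {A ∈ powersetCard n (range (p * n + 1)) |
        IsCyclicMin (p * n + 1) (ballotWalk p (p * n + 1) A) 1} := by
  rw [Nat.card_Icc, Nat.add_sub_cancel, mem_filter, mem_powersetCard]
  have hsub : M ⊆ Icc 1 (p * n) ↔ M ⊆ range (p * n + 1) ∧ 0 ∉ M := by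
    refine ⟨fun h => ⟨fun x hx => ?_, fun h0 => ?_⟩, fun ⟨h, h0⟩ x hx => ?_⟩
    · exact mem_range.2 (Nat.lt_succ_of_le (mem_Icc.1 (h hx)).2)
    · exact absurd (mem_Icc.1 (h h0)).1 (by omega)
    · exact mem_Icc.2 ⟨Nat.one_le_iff_ne_zero.2 fun hx0 => h0 (hx0 ▸ hx),
        Nat.lt_succ_iff.1 (mem_range.1 (h hx))⟩
  constructor
  · rintro ⟨hMs, hcard, hdom⟩
    have hn : #M = n := (Nat.eq_of_mul_eq_mul_left hp hcard).symm
    obtain ⟨hMr, h0⟩ := hsub.1 hMs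
    exact ⟨⟨hMr, hn⟩,
      (isCyclicMin_one_iff hp hMr hn).2 ⟨h0, (dominates_Icc_iff hMs hn).1 hdom⟩⟩
  · rintro ⟨⟨hMr, hn⟩, hmin⟩
    obtain ⟨h0, h⟩ := (isCyclicMin_one_iff hp hMr hn).1 hmin
    have hMs := hsub.2 ⟨hMr, h0⟩
    exact ⟨hMs, by rw [hn], (dominates_Icc_iff hMs hn).2 h⟩

/-- For every positive integer `p` and every natural number `n`, the number of noncrossing
partitions of `{1,…,pn}` all of whose blocks have exactly `p` elements equals the
Fuss–Catalan number `A_n^p = (1/(pn+1))·C(pn+1, n)`. -/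
theorem fussCatalan_counts_planar_p_partitions (p : ℕ) (hp : 0 < p) (n : ℕ) :
    Nat.card {P : Finpartition (Finset.Icc 1 (p * n)) //
        IsNoncrossing P ∧ ∀ B ∈ P.parts, B.card = p} =
      (p * n + 1).choose n / (p * n + 1) := by
  rw [card_isNoncrossing_eq_card_dominates,
    Nat.card_congr (Equiv.subtypeEquivRight (dominates_Icc_iff_isCyclicMin_one hp)),
    Nat.card_eq_finsetCard, card_filter_isCyclicMin (N := p * n + 1) (by omega) (by omega)]
  refine (Nat.div_eq_of_eq_mul_left (by omega) ?_).symm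
  rw [← mul_card_filter_isCyclicMin p n, mul_comm]
end

section
/- For every positive integer p and every natural number n, the number of noncrossing partitions of {1,…,pn} in which the cardinality of every block is a multiple of p equals the Fuss–Catalan number A_n^{p+1} = (1/((p+1)n+1))·C((p+1)n+1, n). -/
/-!
Encode a partition `P` of `[1, pn]` by the sequence `c` on `ZMod (pn + 1)` whose entry `k` is
`|B| / p` when `k + 1` is the least element of a block `B`, and `0` otherwise. The partial sums of
the steps `p c_k - 1` form a Łukasiewicz path: they stay nonnegative up to `pn` and the total is
`-1`. For noncrossing `P` with all `|B|` divisible by `p` this is a bijection: the block of a point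
`j` is recovered as the set of points with the same opener, the last `i ≤ j` at which the path was
no higher than after step `j`.

By the cycle lemma, among the `pn + 1` rotations of any `c : ZMod (pn + 1) → ℕ` with sum `n`
exactly one has nonnegative partial sums (start just after the first minimum of the partial sums).
So `(pn + 1)` times the count is the number `C(pn + n, n)` of such `c`, and dividing out gives the
Fuss–Catalan number.
-/

open Finset

theorem Nat.card_eq_card_mul_card_of_existsUnique {ι X Y : Type*} (σ : ι → X ≃ Y) (T : Set Y)
    (h : ∀ x, ∃! i, σ i x ∈ T) : Nat.card X = Nat.card ι * Nat.card T := by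
  choose i hiT hiu using h
  rw [← Nat.card_prod]
  refine Nat.card_congr
    { toFun := fun x => (i x, ⟨σ (i x) x, hiT x⟩)
      invFun := fun q => (σ q.1).symm q.2
      left_inv := fun x => (σ (i x)).symm_apply_apply x
      right_inv := fun ⟨j, t⟩ => ?_ }
  have hj : i ((σ j).symm t) = j := (hiu _ j (by simp)).symm
  ext <;> simp [hj]

section CycleLemma

variable {f : ℕ → ℤ} {L : ℕ}

theorem exists_lt_forall_le_add_of_add_period (hL : 0 < L) (hf : ∀ k, f (k + L) = f k - 1) :
    ∃ a < L, ∀ j < L, f a ≤ f (a + j) := by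
  classical
  have hmin : ∃ a, a < L ∧ ∀ t < L, f a ≤ f t := by
    obtain ⟨a, ha, hmin⟩ := (range L).exists_min_image f ⟨0, mem_range.2 hL⟩
    exact ⟨a, mem_range.1 ha, fun t ht => hmin t (mem_range.2 ht)⟩
  obtain ⟨haL, ha⟩ := Nat.find_spec hmin
  refine ⟨Nat.find hmin, haL, fun j hj => ?_⟩
  by_cases hwrap : Nat.find hmin + j < L
  · exact ha _ hwrap
  -- `t` wraps around to before the first minimiser, where `f` is strictly larger
  set t := Nat.find hmin + j - L
  have ht : ¬(t < L ∧ ∀ u < L, f t ≤ f u) := Nat.find_min hmin (by omega)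
  push Not at ht
  obtain ⟨u, hu, hut⟩ := ht (by omega)
  rw [show Nat.find hmin + j = t + L by omega, hf]
  linarith [ha u hu]

theorem eq_of_forall_le_add_of_add_period (hf : ∀ k, f (k + L) = f k - 1) {a b : ℕ}
    (ha : a < L) (hb : b < L) (hfa : ∀ j < L, f a ≤ f (a + j))
    (hfb : ∀ j < L, f b ≤ f (b + j)) : a = b := by
  wlog hab : a < b generalizing a b
  · rcases lt_trichotomy a b with h | h | h
    · exact this ha hb hfa hfb h
    · exact h
    · exact (this hb ha hfb hfa h).symm
  have h1 := hfa (b - a) (by omega)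
  have h2 := hfb (a + L - b) (by omega)
  rw [Nat.add_sub_cancel' hab.le] at h1
  rw [show b + (a + L - b) = a + L by omega, hf] at h2
  omega

end CycleLemma

section CyclicWalk

variable {L : ℕ}

theorem ZMod.sum_range_natCast [NeZero L] {M : Type*} [AddCommMonoid M] (x : ZMod L → M) :
    ∑ i ∈ range L, x i = ∑ i, x i :=
  sum_nbij' (↑) ZMod.val (by simp) (by simp [ZMod.val_lt])
    (fun i hi => by simp [ZMod.val_natCast, Nat.mod_eq_of_lt (mem_range.1 hi)]) (by simp) (by simp)

/-- Partial sums of `x` read cyclically: the index `i : ℕ` wraps around modulo `L`. -/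
def cyclicWalk (x : ZMod L → ℤ) (j : ℕ) : ℤ := ∑ i ∈ range j, x i

theorem cyclicWalk_add_card [NeZero L] (x : ZMod L → ℤ) (k : ℕ) :
    cyclicWalk x (k + L) = cyclicWalk x k + ∑ i, x i := by
  rw [cyclicWalk, cyclicWalk, add_comm k, sum_range_add, ZMod.sum_range_natCast x, add_comm]
  simp only [Nat.cast_add, ZMod.natCast_self, zero_add]

theorem cyclicWalk_comp_add_natCast (x : ZMod L → ℤ) (a j : ℕ) :
    cyclicWalk (fun i => x (i + (a : ZMod L))) j = cyclicWalk x (a + j) - cyclicWalk x a := by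
  simp only [cyclicWalk, sum_range_add, Nat.cast_add, add_comm (a : ZMod L)]
  ring

theorem existsUnique_forall_cyclicWalk_nonneg [NeZero L] (x : ZMod L → ℤ)
    (hx : ∑ i, x i = -1) :
    ∃! s : ZMod L, ∀ j < L, 0 ≤ cyclicWalk (fun i => x (i + s)) j := by
  have hper : ∀ k, cyclicWalk x (k + L) = cyclicWalk x k - 1 := fun k => by
    rw [cyclicWalk_add_card, hx, sub_eq_add_neg]
  have key : ∀ a : ℕ, (∀ j < L, 0 ≤ cyclicWalk (fun i => x (i + (a : ZMod L))) j) ↔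
      ∀ j < L, cyclicWalk x a ≤ cyclicWalk x (a + j) := fun a => by
    simp only [cyclicWalk_comp_add_natCast, sub_nonneg]
  obtain ⟨a, haL, ha⟩ := exists_lt_forall_le_add_of_add_period (NeZero.pos L) hper
  refine ⟨a, (key a).2 ha, fun s hs => ?_⟩
  rw [← ZMod.natCast_zmod_val s] at hs ⊢
  rw [eq_of_forall_le_add_of_add_period hper (ZMod.val_lt s) haL ((key _).1 hs) ha]

end CyclicWalk

theorem choose_eq_mul_card_cyclicWalk_nonneg (p n : ℕ) :
    (p * n + n).choose n = (p * n + 1) * Nat.card {c : ZMod (p * n + 1) → ℕ //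
      ∑ i, c i = n ∧ ∀ j ≤ p * n, 0 ≤ cyclicWalk (fun i => (p * c i : ℤ) - 1) j} := by
  have hcompositions : Nat.card {c : ZMod (p * n + 1) → ℕ // ∑ i, c i = n} =
      (p * n + n).choose n := by
    rw [← Nat.card_congr (Sym.equivNatSumOfFintype _ n), Sym.natCard_sym_eq_choose,
      Nat.card_zmod]
    congr 1
    omega
  let rotate (s : ZMod (p * n + 1)) :
      {c : ZMod (p * n + 1) → ℕ // ∑ i, c i = n} ≃
        {c : ZMod (p * n + 1) → ℕ // ∑ i, c i = n} :=
    ((Equiv.addRight s).symm.arrowCongr (Equiv.refl ℕ)).subtypeEquiv fun c => by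
      rw [← Equiv.sum_comp (Equiv.addRight s) c]
      rfl
  have hunique : ∀ c, ∃! s, rotate s c ∈
      {c | ∀ j ≤ p * n, 0 ≤ cyclicWalk (fun i => (p * c.1 i : ℤ) - 1) j} := fun c => by
    have hsum : ∑ i, ((p * c.1 i : ℤ) - 1) = -1 := by
      simp [sum_sub_distrib, ← mul_sum, ← Nat.cast_sum, c.2]
    simpa [rotate, Nat.lt_succ_iff] using existsUnique_forall_cyclicWalk_nonneg _ hsum
  rw [← hcompositions, Nat.card_eq_card_mul_card_of_existsUnique rotate _ hunique, Nat.card_zmod,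
    ← Nat.card_congr (Equiv.subtypeSubtypeEquivSubtypeInter _ _)]
  rfl

theorem card_filter_forall_lt_of_skipFree {f : ℕ → ℤ} {a b : ℕ} {c : ℤ} (hab : a ≤ b)
    (hstep : ∀ k, a ≤ k → k < b → f k - 1 ≤ f (k + 1)) (hc : c ≤ f a) (hb : f b ≤ c) :
    (#{k ∈ Icc a b | c ≤ f k ∧ ∀ l ∈ Ico a k, f k < f l} : ℤ) = f a - c + 1 := by
  classical
  have hcard : #{k ∈ Icc a b | c ≤ f k ∧ ∀ l ∈ Ico a k, f k < f l} = #(Icc c (f a)) := by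
    apply card_nbij f
    · intro k hk
      simp only [coe_filter, coe_Icc, mem_Icc, mem_Ico, Set.mem_Icc, Set.mem_ofPred_eq] at hk ⊢
      obtain ⟨⟨hak, -⟩, hck, hrec⟩ := hk
      refine ⟨hck, ?_⟩
      rcases hak.eq_or_lt with rfl | h
      · rfl
      · exact (hrec a ⟨le_rfl, h⟩).le
    · intro k hk k' hk' hkk'
      simp only [coe_filter, mem_Icc, mem_Ico, Set.mem_ofPred_eq] at hk hk'
      by_contra hne
      rcases Nat.lt_or_gt_of_ne hne with h | h
      · exact (hk'.2.2 k ⟨hk.1.1, h⟩).ne hkk'.symm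
      · exact (hk.2.2 k' ⟨hk'.1.1, h⟩).ne hkk'
    · intro t ht
      simp only [coe_Icc, Set.mem_Icc] at ht
      -- the first time the walk comes down to level `t` is a record with value exactly `t`
      have hex : ∃ k, a ≤ k ∧ f k ≤ t := ⟨b, hab, hb.trans ht.1⟩
      obtain ⟨hak, hkt⟩ := Nat.find_spec hex
      have hkb : Nat.find hex ≤ b := Nat.find_min' hex ⟨hab, hb.trans ht.1⟩
      have hbefore : ∀ l, a ≤ l → l < Nat.find hex → t < f l := fun l hal hl => by
        have := Nat.find_min hex hl
        push Not at this
        exact this hal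
      have hval : f (Nat.find hex) = t := by
        rcases hak.eq_or_lt with h | h
        · rw [← h]
          exact le_antisymm (h ▸ hkt) ht.2
        · have := hstep (Nat.find hex - 1) (by omega) (by omega)
          have := hbefore (Nat.find hex - 1) (by omega) (by omega)
          rw [Nat.sub_add_cancel (by omega)] at *
          omega
      refine ⟨Nat.find hex, ?_, hval⟩
      simp only [coe_filter, mem_Icc, mem_Ico, Set.mem_ofPred_eq, hval]
      exact ⟨⟨hak, hkb⟩, ht.1, fun l hl => hbefore l hl.1 hl.2⟩
  rw [hcard, Int.card_Icc]
  omega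

theorem Nat.findGreatest_congr {P Q : ℕ → Prop} [DecidablePred P] [DecidablePred Q] {n : ℕ}
    (h : ∀ i ≤ n, P i ↔ Q i) : Nat.findGreatest P n = Nat.findGreatest Q n := by
  induction n with
  | zero => simp
  | succ n ih =>
    rw [Nat.findGreatest_succ, Nat.findGreatest_succ, ih fun i hi => h i (by omega)]
    by_cases hP : P (n + 1)
    · rw [if_pos hP, if_pos ((h _ le_rfl).1 hP)]
    · rw [if_neg hP, if_neg (mt (h _ le_rfl).2 hP)]

section Lukasiewicz

structure IsLukasiewiczPath (w : ℕ → ℤ) (N : ℕ) : Prop where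
  zero : w 0 = 0
  nonneg : ∀ j ≤ N, 0 ≤ w j
  last : w N = 0
  step : ∀ k < N, w k - 1 ≤ w (k + 1)

/-- Step `j` of a path `w` goes from `w (j - 1)` to `w j`. Its opener is the last step `i ≤ j`
that starts no higher than step `j` ends (`0` if there is none). -/
def opener (w : ℕ → ℤ) (j : ℕ) : ℕ := Nat.findGreatest (fun i => w (i - 1) ≤ w j) j

variable {w : ℕ → ℤ} {N i j l m : ℕ}

theorem opener_le (w : ℕ → ℤ) (j : ℕ) : opener w j ≤ j := Nat.findGreatest_le j

theorem opener_congr {w' : ℕ → ℤ} (h : ∀ i ≤ j, w i = w' i) : opener w j = opener w' j :=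
  Nat.findGreatest_congr fun i hi => by rw [h _ (by omega), h _ le_rfl]

theorem opener_eq_iff (hm : m ≠ 0) :
    opener w j = m ↔ m ≤ j ∧ w (m - 1) ≤ w j ∧ ∀ i ∈ Ico m j, w j < w i := by
  rw [opener, Nat.findGreatest_eq_iff]
  simp only [ne_eq, hm, not_false_eq_true, forall_const, not_le, mem_Ico]
  refine and_congr_right fun _ => and_congr_right fun _ =>
    ⟨fun h i hi => ?_, fun h i hmi hij => ?_⟩
  · simpa using h (by omega : m < i + 1) (by omega)
  · exact h (i - 1) ⟨by omega, by omega⟩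

theorem lt_of_opener_le (hi : opener w j ≤ i) (hij : i < j) : w j < w i := by
  rw [opener] at hi
  simpa using Nat.findGreatest_is_greatest (P := fun i => w (i - 1) ≤ w j) (k := i + 1)
    (by omega) hij

theorem opener_self (h : w (i - 1) ≤ w i) : opener w i = i := Nat.findGreatest_eq h

namespace IsLukasiewiczPath

variable (hw : IsLukasiewiczPath w N)
include hw

theorem one_le_opener (hj : j ∈ Icc 1 N) : 1 ≤ opener w j :=
  Nat.le_findGreatest (mem_Icc.1 hj).1 (by simpa [hw.zero] using hw.nonneg j (mem_Icc.1 hj).2)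

theorem walk_pred_opener_le (hj : j ∈ Icc 1 N) : w (opener w j - 1) ≤ w j :=
  Nat.findGreatest_spec (P := fun i => w (i - 1) ≤ w j) (m := 1) (mem_Icc.1 hj).1
    (by simpa [hw.zero] using hw.nonneg j (mem_Icc.1 hj).2)

theorem walk_pred_opener_le_walk_opener (hj : j ∈ Icc 1 N) :
    w (opener w j - 1) ≤ w (opener w j) := by
  rcases (opener_le w j).eq_or_lt with h | h
  · have hle := hw.walk_pred_opener_le hj
    rw [h] at hle ⊢
    exact hle
  · exact (hw.walk_pred_opener_le hj).trans (lt_of_opener_le le_rfl h).le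

theorem opener_le_opener (hj : j ∈ Icc 1 N) (hl : opener w j ≤ l) (hlj : l ≤ j) :
    opener w j ≤ opener w l := by
  rcases hlj.eq_or_lt with rfl | h
  · rfl
  · exact Nat.le_findGreatest hl ((hw.walk_pred_opener_le hj).trans (lt_of_opener_le hl h).le)

theorem card_filter_opener_eq (hm : m ∈ Icc 1 N) (hup : w (m - 1) ≤ w m) :
    (#{j ∈ Icc 1 N | opener w j = m} : ℤ) = w m - w (m - 1) + 1 := by
  obtain ⟨hm1, hmN⟩ := mem_Icc.1 hm
  have hfiber : {j ∈ Icc 1 N | opener w j = m} =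
      {k ∈ Icc m N | w (m - 1) ≤ w k ∧ ∀ l ∈ Ico m k, w k < w l} := by
    ext j
    simp only [mem_filter, mem_Icc, opener_eq_iff (by omega : m ≠ 0)]
    constructor
    · rintro ⟨⟨-, hjN⟩, hmj, h⟩
      exact ⟨⟨hmj, hjN⟩, h⟩
    · rintro ⟨⟨hmj, hjN⟩, h⟩
      exact ⟨⟨by omega, hjN⟩, hmj, h⟩
  rw [hfiber]
  refine card_filter_forall_lt_of_skipFree hmN (fun k _ hk => hw.step k hk) hup ?_
  rw [hw.last]
  exact hw.nonneg _ (by omega)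

end IsLukasiewiczPath

end Lukasiewicz

namespace Finpartition

variable {s : Finset ℕ} (P : Finpartition s) {x : ℕ}

noncomputable def sizeOfBlockStartingAt (i : ℕ) : ℕ :=
  ∑ B ∈ P.parts with sInf ((B : Finset ℕ) : Set ℕ) = i, #B

noncomputable def lukasiewiczWalk (j : ℕ) : ℤ :=
  ∑ i ∈ Ioc 0 j, ((P.sizeOfBlockStartingAt i : ℤ) - 1)

theorem sInf_mem_of_mem_parts {B : Finset ℕ} (hB : B ∈ P.parts) : sInf (B : Set ℕ) ∈ B :=
  Nat.sInf_mem (coe_nonempty.2 (P.nonempty_of_mem_parts hB))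

theorem sInf_part_mem (hx : x ∈ s) : sInf (P.part x : Set ℕ) ∈ P.part x :=
  P.sInf_mem_of_mem_parts (P.part_mem.2 hx)

theorem sInf_part_mem_of_mem (hx : x ∈ s) : sInf (P.part x : Set ℕ) ∈ s :=
  P.part_subset x (P.sInf_part_mem hx)

theorem part_sInf_part (hx : x ∈ s) : P.part (sInf (P.part x : Set ℕ)) = P.part x :=
  P.part_eq_of_mem (P.part_mem.2 hx) (P.sInf_part_mem hx)

theorem sInf_part_le (hx : x ∈ s) : sInf (P.part x : Set ℕ) ≤ x :=
  Nat.sInf_le (mem_coe.2 (P.mem_part_self.2 hx))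

theorem sizeOfBlockStartingAt_eq (i : ℕ) :
    P.sizeOfBlockStartingAt i = if sInf (P.part i : Set ℕ) = i then #(P.part i) else 0 := by
  rw [sizeOfBlockStartingAt, sum_filter]
  by_cases hi : i ∈ s
  · refine (sum_eq_single_of_mem _ (P.part_mem.2 hi) fun B hB hne => if_neg fun hBi => ?_)
    exact hne (P.part_eq_of_mem hB (hBi ▸ P.sInf_mem_of_mem_parts hB)).symm
  · rw [P.part_eq_empty.2 hi, card_empty, ite_self]
    exact sum_eq_zero fun B hB => if_neg fun (hBi : sInf ((B : Finset ℕ) : Set ℕ) = i) =>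
      hi (P.le hB (hBi ▸ P.sInf_mem_of_mem_parts hB))

theorem sum_sizeOfBlockStartingAt (I : Finset ℕ) :
    ∑ i ∈ I, P.sizeOfBlockStartingAt i = #{x ∈ s | sInf (P.part x : Set ℕ) ∈ I} := by
  classical
  simp only [sizeOfBlockStartingAt, sum_fiberwise_eq_sum_filter]
  rw [card_eq_sum_card_fiberwise (f := P.part)
    (t := {B ∈ P.parts | sInf ((B : Finset ℕ) : Set ℕ) ∈ I})
    fun x hx => by simpa [P.part_mem] using hx]
  refine sum_congr rfl fun B hB => congrArg card ?_
  obtain ⟨hB, hBI⟩ := mem_filter.1 hB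
  ext x
  simp only [mem_filter]
  constructor
  · intro hx
    have hxs : x ∈ s := P.le hB hx
    exact ⟨⟨hxs, P.part_eq_of_mem hB hx ▸ hBI⟩, P.part_eq_of_mem hB hx⟩
  · rintro ⟨⟨hxs, -⟩, rfl⟩
    exact P.mem_part_self.2 hxs

theorem lukasiewiczWalk_sub {i j : ℕ} (hij : i ≤ j) :
    P.lukasiewiczWalk j - P.lukasiewiczWalk i =
      #{x ∈ s | sInf (P.part x : Set ℕ) ∈ Ioc i j} - (j - i : ℤ) := by
  rw [lukasiewiczWalk, lukasiewiczWalk, ← sum_Ioc_consecutive _ (Nat.zero_le i) hij,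
    add_sub_cancel_left, sum_sub_distrib, ← Nat.cast_sum, sum_sizeOfBlockStartingAt]
  simp [Nat.cast_sub hij]

theorem isLukasiewiczPath_lukasiewiczWalk {N : ℕ} (P : Finpartition (Icc 1 N)) :
    IsLukasiewiczPath P.lukasiewiczWalk N := by
  have hzero : P.lukasiewiczWalk 0 = 0 := by simp [lukasiewiczWalk]
  refine ⟨hzero, fun j hj => ?_, ?_, fun k _ => ?_⟩
  · have hcover : Icc 1 j ⊆ {x ∈ Icc 1 N | sInf (P.part x : Set ℕ) ∈ Ioc 0 j} :=
      fun x hx => by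
        have hxN : x ∈ Icc 1 N := by simp only [mem_Icc] at hx ⊢; omega
        have := P.sInf_part_le hxN
        have := mem_Icc.1 (P.sInf_part_mem_of_mem hxN)
        simp only [mem_filter, mem_Ioc]
        exact ⟨hxN, by omega, by simp only [mem_Icc] at hx; omega⟩
    have := card_le_card hcover
    have := P.lukasiewiczWalk_sub (Nat.zero_le j)
    simp only [Nat.card_Icc, hzero] at *
    omega
  · have hall : {x ∈ Icc 1 N | sInf (P.part x : Set ℕ) ∈ Ioc 0 N} = Icc 1 N :=
      filter_true_of_mem fun x hx => by
        have := mem_Icc.1 (P.sInf_part_mem_of_mem hx)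
        simp only [mem_Ioc]
        omega
    have := P.lukasiewiczWalk_sub (Nat.zero_le N)
    rw [hall, hzero] at this
    simp only [Nat.card_Icc] at this
    omega
  · simp only [lukasiewiczWalk, sum_Ioc_succ_top (Nat.zero_le k)]
    omega

variable {P}

theorem ext_part {Q : Finpartition s} (h : ∀ a ∈ s, P.part a = Q.part a) : P = Q := by
  ext B
  constructor <;> intro hB
  · obtain ⟨a, ha, rfl⟩ := P.part_surjOn hB
    exact h a ha ▸ Q.part_mem.2 ha
  · obtain ⟨a, ha, rfl⟩ := Q.part_surjOn hB
    exact (h a ha).symm ▸ P.part_mem.2 ha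

theorem sInf_part_eq_sInf_part_iff {x y : ℕ} (hx : x ∈ s) (hy : y ∈ s) :
    sInf (P.part x : Set ℕ) = sInf (P.part y : Set ℕ) ↔ P.part x = P.part y := by
  refine ⟨fun h => P.eq_of_mem_parts (P.part_mem.2 hx) (P.part_mem.2 hy) (P.sInf_part_mem hx) ?_,
    fun h => h ▸ rfl⟩
  exact h ▸ P.sInf_part_mem hy

end Finpartition

theorem IsNoncrossing.part_eq_part {s : Finset ℕ} {P : Finpartition s} (hP : IsNoncrossing P)
    {a b c d : ℕ} (hab : a < b) (hbc : b < c) (hcd : c < d) (ha : a ∈ s) (hb : b ∈ s)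
    (hc : c ∈ s) (hd : d ∈ s) (hac : P.part a = P.part c) (hbd : P.part b = P.part d) :
    P.part a = P.part b :=
  hP a b c d hab hbc hcd _ (P.part_mem.2 ha) _ (P.part_mem.2 hb) (P.mem_part_self.2 ha)
    (hac ▸ P.mem_part_self.2 hc) (P.mem_part_self.2 hb) (hbd ▸ P.mem_part_self.2 hd)

namespace IsNoncrossing

variable {N i j : ℕ} {P : Finpartition (Icc 1 N)} (hP : IsNoncrossing P)
include hP

theorem lukasiewiczWalk_pred_sInf_part_le (hj : j ∈ Icc 1 N) :
    P.lukasiewiczWalk (sInf (P.part j : Set ℕ) - 1) ≤ P.lukasiewiczWalk j := by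
  obtain ⟨m, hm⟩ : ∃ m, sInf (P.part j : Set ℕ) = m := ⟨_, rfl⟩
  have hmN : m ∈ Icc 1 N := hm ▸ P.sInf_part_mem_of_mem hj
  have hmj : m ≤ j := hm ▸ P.sInf_part_le hj
  have hpart_m : P.part m = P.part j := hm ▸ P.part_sInf_part hj
  -- a block starting before `m` and meeting `(m, j)` would cross the block of `j`
  have hcover : Icc m j ⊆ {x ∈ Icc 1 N | sInf (P.part x : Set ℕ) ∈ Ioc (m - 1) j} := by
    intro x hx
    obtain ⟨hmx, hxj⟩ := mem_Icc.1 hx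
    have hxN : x ∈ Icc 1 N := by simp only [mem_Icc] at hmN hj ⊢; omega
    refine mem_filter.2
      ⟨hxN, mem_Ioc.2 ⟨lt_of_not_ge fun hlt => ?_, (P.sInf_part_le hxN).trans hxj⟩⟩
    obtain ⟨m', hm'⟩ : ∃ m', sInf (P.part x : Set ℕ) = m' := ⟨_, rfl⟩
    have hm'N : m' ∈ Icc 1 N := hm' ▸ P.sInf_part_mem_of_mem hxN
    have hpart_m' : P.part m' = P.part x := hm' ▸ P.part_sInf_part hxN
    have hne : P.part x ≠ P.part j := fun h => by
      rw [← P.sInf_part_eq_sInf_part_iff hxN hj, hm, hm'] at h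
      simp only [mem_Icc] at hmN
      omega
    have hmx' : m < x := lt_of_le_of_ne hmx fun h => hne (h ▸ hpart_m)
    have hxj' : x < j := lt_of_le_of_ne hxj fun h => hne (h ▸ rfl)
    simp only [mem_Icc] at hmN
    exact hne (hpart_m' ▸ hpart_m ▸ hP.part_eq_part (by omega) hmx' hxj' hm'N (mem_Icc.2 hmN)
      hxN hj hpart_m' hpart_m)
  have := card_le_card hcover
  have := P.lukasiewiczWalk_sub (by omega : m - 1 ≤ j)
  rw [hm]
  simp only [Nat.card_Icc, mem_Icc] at *
  omega

theorem lukasiewiczWalk_lt (hj : j ∈ Icc 1 N) (hi : sInf (P.part j : Set ℕ) ≤ i)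
    (hij : i < j) :
    P.lukasiewiczWalk j < P.lukasiewiczWalk i := by
  obtain ⟨m, hm⟩ : ∃ m, sInf (P.part j : Set ℕ) = m := ⟨_, rfl⟩
  have hmN : m ∈ Icc 1 N := hm ▸ P.sInf_part_mem_of_mem hj
  have hpart_m : P.part m = P.part j := hm ▸ P.part_sInf_part hj
  -- a block that starts in `(i, j]` cannot reach `j` or beyond without crossing the block of `j`
  have hinside : {x ∈ Icc 1 N | sInf (P.part x : Set ℕ) ∈ Ioc i j} ⊆ Ioo i j := by
    intro x hx
    obtain ⟨hxN, hstartx⟩ := mem_filter.1 hx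
    obtain ⟨m', hm'⟩ : ∃ m', sInf (P.part x : Set ℕ) = m' := ⟨_, rfl⟩
    rw [hm', mem_Ioc] at hstartx
    have hm'N : m' ∈ Icc 1 N := hm' ▸ P.sInf_part_mem_of_mem hxN
    have hpart_m' : P.part m' = P.part x := hm' ▸ P.part_sInf_part hxN
    have hne : P.part x ≠ P.part j := fun h => by
      rw [← P.sInf_part_eq_sInf_part_iff hxN hj, hm, hm'] at h
      omega
    have hm'x : m' ≤ x := hm' ▸ P.sInf_part_le hxN
    refine mem_Ioo.2 ⟨by omega, lt_of_not_ge fun hjx => ?_⟩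
    have hjx' : j < x := lt_of_le_of_ne hjx fun h => hne (h ▸ rfl)
    have hm'j : m' < j := lt_of_le_of_ne hstartx.2 fun h => hne (h ▸ hpart_m').symm
    exact hne (hpart_m' ▸ hpart_m ▸ (hP.part_eq_part (by omega) hm'j hjx' hmN hm'N hj hxN
      hpart_m hpart_m').symm)
  have := card_le_card hinside
  have := P.lukasiewiczWalk_sub hij.le
  simp only [Nat.card_Ioo] at *
  omega

theorem opener_lukasiewiczWalk (hj : j ∈ Icc 1 N) :
    opener P.lukasiewiczWalk j = sInf (P.part j : Set ℕ) := by
  have hmN := mem_Icc.1 (P.sInf_part_mem_of_mem hj)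
  rw [opener_eq_iff (by omega)]
  exact ⟨P.sInf_part_le hj, hP.lukasiewiczWalk_pred_sInf_part_le hj,
    fun i hi => hP.lukasiewiczWalk_lt hj (mem_Ico.1 hi).1 (mem_Ico.1 hi).2⟩

end IsNoncrossing

open Classical in
noncomputable def lukasiewiczPartition (w : ℕ → ℤ) (N : ℕ) : Finpartition (Icc 1 N) :=
  Finpartition.ofSetSetoid (Setoid.ker (opener w)) (Icc 1 N)

section LukasiewiczPartition

variable {w : ℕ → ℤ} {N j l : ℕ}

theorem mem_part_lukasiewiczPartition :
    l ∈ (lukasiewiczPartition w N).part j ↔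
      j ∈ Icc 1 N ∧ l ∈ Icc 1 N ∧ opener w j = opener w l :=
  open Classical in Finpartition.mem_part_ofSetSetoid_iff_rel _

theorem part_lukasiewiczPartition (hj : j ∈ Icc 1 N) :
    (lukasiewiczPartition w N).part j = {l ∈ Icc 1 N | opener w l = opener w j} := by
  ext l
  rw [mem_part_lukasiewiczPartition, mem_filter, eq_comm]
  exact ⟨fun h => h.2, fun h => ⟨hj, h⟩⟩

theorem lukasiewiczPartition_congr {w' : ℕ → ℤ} (h : ∀ i ≤ N, w i = w' i) :
    lukasiewiczPartition w N = lukasiewiczPartition w' N :=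
  Finpartition.ext_part fun j hj => by
    have hcongr : ∀ l ∈ Icc 1 N, opener w l = opener w' l := fun l hl =>
      opener_congr fun i hi => h i (hi.trans (mem_Icc.1 hl).2)
    rw [part_lukasiewiczPartition hj, part_lukasiewiczPartition hj, hcongr j hj]
    exact filter_congr fun l hl => by rw [hcongr l hl]

namespace IsLukasiewiczPath

variable (hw : IsLukasiewiczPath w N)
include hw

theorem isNoncrossing_lukasiewiczPartition : IsNoncrossing (lukasiewiczPartition w N) := by
  intro a b c d hab hbc hcd B₁ hB₁ B₂ hB₂ ha hc hb hd
  set P := lukasiewiczPartition w N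
  rw [← P.part_eq_of_mem hB₁ ha] at hc ⊢
  rw [← P.part_eq_of_mem hB₂ hb] at hd ⊢
  obtain ⟨haN, hcN, hac⟩ := mem_part_lukasiewiczPartition.1 hc
  obtain ⟨hbN, hdN, hbd⟩ := mem_part_lukasiewiczPartition.1 hd
  have hcb : opener w c ≤ opener w b :=
    hw.opener_le_opener hcN (by have := opener_le w a; omega) hbc.le
  have hdc : opener w d ≤ opener w c :=
    hw.opener_le_opener hdN (by have := opener_le w b; omega) hcd.le
  exact ((P.mem_part_iff_part_eq_part hbN haN).1
    (mem_part_lukasiewiczPartition.2 ⟨haN, hbN, by omega⟩)).symm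

theorem opener_mem_Icc (hj : j ∈ Icc 1 N) : opener w j ∈ Icc 1 N :=
  mem_Icc.2 ⟨hw.one_le_opener hj, (opener_le w j).trans (mem_Icc.1 hj).2⟩

theorem sInf_part_lukasiewiczPartition (hj : j ∈ Icc 1 N) :
    sInf ((lukasiewiczPartition w N).part j : Set ℕ) = opener w j := by
  rw [part_lukasiewiczPartition hj]
  refine IsLeast.csInf_eq ⟨?_, fun l hl => ?_⟩
  · exact mem_filter.2
      ⟨hw.opener_mem_Icc hj, opener_self (hw.walk_pred_opener_le_walk_opener hj)⟩
  · exact (mem_filter.1 hl).2 ▸ opener_le w l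

theorem card_part_lukasiewiczPartition (hj : j ∈ Icc 1 N) :
    (#((lukasiewiczPartition w N).part j) : ℤ) = w (opener w j) - w (opener w j - 1) + 1 := by
  rw [part_lukasiewiczPartition hj]
  exact hw.card_filter_opener_eq (hw.opener_mem_Icc hj) (hw.walk_pred_opener_le_walk_opener hj)

theorem sizeOfBlockStartingAt_lukasiewiczPartition (i : ℕ) :
    ((lukasiewiczPartition w N).sizeOfBlockStartingAt i : ℤ) =
      if i ∈ Icc 1 N ∧ w (i - 1) ≤ w i then w i - w (i - 1) + 1 else 0 := by
  rw [Finpartition.sizeOfBlockStartingAt_eq]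
  by_cases hi : i ∈ Icc 1 N
  · rw [hw.sInf_part_lukasiewiczPartition hi]
    by_cases hup : w (i - 1) ≤ w i
    · rw [if_pos (opener_self hup), if_pos ⟨hi, hup⟩, hw.card_part_lukasiewiczPartition hi,
        opener_self hup]
    · have hopener : opener w i ≠ i := fun h => hup (by
        simpa [h] using hw.walk_pred_opener_le_walk_opener hi)
      rw [if_neg hopener, if_neg fun h => hup h.2, Nat.cast_zero]
  · simp [(lukasiewiczPartition w N).part_eq_empty.2 hi, hi]

end IsLukasiewiczPath

end LukasiewiczPartition

theorem IsNoncrossing.lukasiewiczPartition_lukasiewiczWalk {N : ℕ} {P : Finpartition (Icc 1 N)}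
    (hP : IsNoncrossing P) : lukasiewiczPartition P.lukasiewiczWalk N = P :=
  Finpartition.ext_part fun j hj => by
    rw [part_lukasiewiczPartition hj]
    ext l
    rw [mem_filter]
    constructor
    · rintro ⟨hl, h⟩
      rw [hP.opener_lukasiewiczWalk hl, hP.opener_lukasiewiczWalk hj,
        P.sInf_part_eq_sInf_part_iff hl hj] at h
      exact h ▸ P.mem_part_self.2 hl
    · intro hl
      have hlN := P.part_subset j hl
      refine ⟨hlN, ?_⟩
      rw [hP.opener_lukasiewiczWalk hlN, hP.opener_lukasiewiczWalk hj,
        P.part_eq_of_mem (P.part_mem.2 hj) hl]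

theorem cyclicWalk_succ {L : ℕ} (x : ZMod L → ℤ) (j : ℕ) :
    cyclicWalk x (j + 1) = cyclicWalk x j + x j :=
  sum_range_succ _ _

namespace Finpartition

variable {p N : ℕ} {P : Finpartition (Icc 1 N)}

/-- Entry `k` records the point `k + 1` of `[1, N]`; entry `N` has no point and is `0`. -/
noncomputable def blockSizeCode (p : ℕ) (P : Finpartition (Icc 1 N)) : ZMod (N + 1) → ℕ :=
  fun k => P.sizeOfBlockStartingAt (k.val + 1) / p

theorem cyclicWalk_blockSizeCode (hdvd : ∀ B ∈ P.parts, p ∣ #B) {j : ℕ} (hj : j ≤ N + 1) :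
    cyclicWalk (fun k => (p * P.blockSizeCode p k : ℤ) - 1) j = P.lukasiewiczWalk j := by
  have hsize : ∀ i,
      (p * ((P.sizeOfBlockStartingAt i / p : ℕ) : ℤ)) = P.sizeOfBlockStartingAt i :=
    fun i => by exact_mod_cast Nat.mul_div_cancel' (dvd_sum fun B hB => hdvd B (mem_filter.1 hB).1)
  rw [cyclicWalk, lukasiewiczWalk, ← Ico_add_one_add_one_eq_Ioc, ← sum_Ico_add',
    ← range_eq_Ico]
  refine sum_congr rfl fun i hi => ?_
  rw [blockSizeCode, ZMod.val_natCast_of_lt (by simp only [mem_range] at hi; omega), hsize]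

theorem mul_sum_blockSizeCode (hdvd : ∀ B ∈ P.parts, p ∣ #B) :
    p * ∑ k, P.blockSizeCode p k = N := by
  have hwalk := cyclicWalk_blockSizeCode hdvd le_rfl
  have hper := cyclicWalk_add_card (fun k => (p * P.blockSizeCode p k : ℤ) - 1) 0
  rw [zero_add] at hper
  rw [hper, show cyclicWalk _ 0 = 0 from sum_range_zero _, zero_add, lukasiewiczWalk,
    sum_Ioc_succ_top (Nat.zero_le N)] at hwalk
  have hlast : P.sizeOfBlockStartingAt (N + 1) = 0 := by
    rw [sizeOfBlockStartingAt_eq, P.part_eq_empty.2 (by simp), card_empty, ite_self]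
  have hN := (isLukasiewiczPath_lukasiewiczWalk P).last
  rw [lukasiewiczWalk] at hN
  rw [hN, hlast, sum_sub_distrib, ← mul_sum] at hwalk
  simp only [sum_const, card_univ, ZMod.card, nsmul_eq_mul, mul_one] at hwalk
  push_cast at hwalk
  rw [← Nat.cast_sum] at hwalk
  omega

end Finpartition

section CyclicCodes

variable {p n : ℕ} {c : ZMod (p * n + 1) → ℕ}
  (hp : 0 < p) (hsum : ∑ i, c i = n)
  (hgood : ∀ j ≤ p * n, 0 ≤ cyclicWalk (fun i => (p * c i : ℤ) - 1) j)
include hp hsum hgood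

theorem cyclicWalk_eq_zero_and_apply_eq_zero :
    cyclicWalk (fun i => (p * c i : ℤ) - 1) (p * n) = 0 ∧ c (p * n : ℕ) = 0 := by
  have hper := cyclicWalk_add_card (fun i => (p * c i : ℤ) - 1) 0
  rw [zero_add, cyclicWalk_succ, show cyclicWalk _ 0 = 0 from sum_range_zero _, zero_add,
    sum_sub_distrib, ← mul_sum, ← Nat.cast_sum, hsum] at hper
  simp only [sum_const, card_univ, ZMod.card, nsmul_eq_mul, mul_one] at hper
  generalize c (p * n : ℕ) = cN at hper ⊢
  -- the last step, of size `p * cN - 1 ≥ -1`, goes from height `≥ 0` down to `-1`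
  have hN := hgood (p * n) le_rfl
  have hpc : (1 : ℤ) ≤ p := by exact_mod_cast hp
  have hc : (0 : ℤ) ≤ cN := by positivity
  push_cast at hper
  constructor
  · nlinarith
  · have : (cN : ℤ) = 0 := by nlinarith
    exact_mod_cast this

theorem isLukasiewiczPath_cyclicWalk :
    IsLukasiewiczPath (cyclicWalk (fun i => (p * c i : ℤ) - 1)) (p * n) where
  zero := sum_range_zero _
  nonneg := hgood
  last := (cyclicWalk_eq_zero_and_apply_eq_zero hp hsum hgood).1
  step k _ := by
    rw [cyclicWalk_succ]
    have : (0 : ℤ) ≤ p * c k := by positivity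
    linarith

theorem sizeOfBlockStartingAt_lukasiewiczPartition_cyclicWalk (k : ZMod (p * n + 1)) :
    (lukasiewiczPartition (cyclicWalk (fun i => (p * c i : ℤ) - 1)) (p * n)).sizeOfBlockStartingAt
      (k.val + 1) = p * c k := by
  have h := (isLukasiewiczPath_cyclicWalk hp hsum hgood).sizeOfBlockStartingAt_lukasiewiczPartition
    (k.val + 1)
  rw [Nat.add_sub_cancel, cyclicWalk_succ, ZMod.natCast_zmod_val] at h
  zify
  rw [h]
  split_ifs with hup
  · ring
  · suffices c k = 0 by simp [this]
    by_cases hk : k.val < p * n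
    · by_contra hck
      have : (1 : ℤ) ≤ p * c k := by
        have : 1 ≤ p * c k := Nat.one_le_iff_ne_zero.2 (Nat.mul_ne_zero hp.ne' hck)
        exact_mod_cast this
      exact hup ⟨mem_Icc.2 ⟨by omega, by omega⟩, by linarith⟩
    · have hkN : k = (p * n : ℕ) := by
        rw [← ZMod.natCast_zmod_val k, show k.val = p * n by have := ZMod.val_lt k; omega]
      rw [hkN]
      exact (cyclicWalk_eq_zero_and_apply_eq_zero hp hsum hgood).2

theorem blockSizeCode_lukasiewiczPartition_cyclicWalk :
    (lukasiewiczPartition (cyclicWalk (fun i => (p * c i : ℤ) - 1)) (p * n)).blockSizeCode p =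
      c :=
  funext fun k => by
    rw [Finpartition.blockSizeCode, sizeOfBlockStartingAt_lukasiewiczPartition_cyclicWalk hp hsum
      hgood, Nat.mul_div_cancel_left _ hp]

theorem dvd_card_of_mem_parts_lukasiewiczPartition_cyclicWalk {B : Finset ℕ}
    (hB : B ∈ (lukasiewiczPartition (cyclicWalk (fun i => (p * c i : ℤ) - 1)) (p * n)).parts) :
    p ∣ #B := by
  have hw := isLukasiewiczPath_cyclicWalk hp hsum hgood
  obtain ⟨j, hj, rfl⟩ := Finpartition.part_surjOn _ hB
  obtain ⟨k, hk⟩ : ∃ k, opener (cyclicWalk (fun i => (p * c i : ℤ) - 1)) j = k + 1 :=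
    ⟨_, (Nat.sub_add_cancel (hw.one_le_opener hj)).symm⟩
  have hcard := hw.card_part_lukasiewiczPartition hj
  rw [hk, Nat.add_sub_cancel, cyclicWalk_succ] at hcard
  refine Dvd.intro (c k) ?_
  zify
  linarith

end CyclicCodes

theorem Nat.choose_succ_div_eq_of_choose_eq_mul {a k g : ℕ} (h : (a + k).choose k = (a + 1) * g) :
    (a + k + 1).choose k / (a + k + 1) = g := by
  have key := Nat.choose_mul_succ_eq (a + k) k
  rw [h, show a + k + 1 - k = a + 1 by omega] at key
  refine Nat.div_eq_of_eq_mul_left (by omega) ?_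
  have : (a + 1) * (g * (a + k + 1)) = (a + 1) * (a + k + 1).choose k := by
    rw [mul_comm _ ((a + k + 1).choose k), ← key]; ring
  exact (Nat.eq_of_mul_eq_mul_left (by omega) this).symm

noncomputable def noncrossingEquivCyclicCodes {p n : ℕ} (hp : 0 < p) :
    {P : Finpartition (Icc 1 (p * n)) // IsNoncrossing P ∧ ∀ B ∈ P.parts, p ∣ #B} ≃
      {c : ZMod (p * n + 1) → ℕ //
        ∑ i, c i = n ∧ ∀ j ≤ p * n, 0 ≤ cyclicWalk (fun i => (p * c i : ℤ) - 1) j} where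
  toFun P := ⟨P.1.blockSizeCode p,
    Nat.eq_of_mul_eq_mul_left hp (Finpartition.mul_sum_blockSizeCode P.2.2),
    fun j hj => Finpartition.cyclicWalk_blockSizeCode P.2.2 (Nat.le_succ_of_le hj) ▸
      (Finpartition.isLukasiewiczPath_lukasiewiczWalk P.1).nonneg j hj⟩
  invFun c := ⟨lukasiewiczPartition (cyclicWalk (fun i => (p * c.1 i : ℤ) - 1)) (p * n),
    (isLukasiewiczPath_cyclicWalk hp c.2.1 c.2.2).isNoncrossing_lukasiewiczPartition,
    fun _ => dvd_card_of_mem_parts_lukasiewiczPartition_cyclicWalk hp c.2.1 c.2.2⟩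
  left_inv P := Subtype.ext <| by
    dsimp only
    rw [lukasiewiczPartition_congr fun i hi => Finpartition.cyclicWalk_blockSizeCode P.2.2
      (by omega), P.2.1.lukasiewiczPartition_lukasiewiczWalk]
  right_inv c := Subtype.ext (blockSizeCode_lukasiewiczPartition_cyclicWalk hp c.2.1 c.2.2)

/-- For every positive integer `p` and every natural number `n`, the number of noncrossing
partitions of `{1,…,pn}` all of whose block cardinalities are multiples of `p` equals the
Fuss–Catalan number `A_n^{p+1} = (1/((p+1)n+1))·C((p+1)n+1, n)`. -/
theorem fussCatalan_counts_planar_partitions_with_block_sizes_multiple (p : ℕ) (hp : 0 < p)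
    (n : ℕ) :
    Nat.card {P : Finpartition (Finset.Icc 1 (p * n)) //
        IsNoncrossing P ∧ ∀ B ∈ P.parts, p ∣ B.card} =
      ((p + 1) * n + 1).choose n / ((p + 1) * n + 1) := by
  rw [Nat.card_congr (noncrossingEquivCyclicCodes hp), add_one_mul,
    Nat.choose_succ_div_eq_of_choose_eq_mul (choose_eq_mul_card_cyclicWalk_nonneg p n)]
end

section
/- Let q and n be positive integers and let P be a noncrossing partition of {1,…,2qn} all of whose blocks have exactly 2q elements. Define P' to be the partition of {1,…,qn} whose blocks are obtained from the blocks of P by deleting all even numbers and replacing each odd number 2j−1 by j. Then P' is a noncrossing partition of {1,…,qn} all of whose blocks have exactly q elements. -/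
open Finset

theorem Finset.exists_eq_insert_insert_of_one_lt_card {α : Type*} [LinearOrder α] {B : Finset α}
    (h : 1 < #B) : ∃ x y C, x < y ∧ (∀ z ∈ C, y < z) ∧ B = insert x (insert y C) := by
  have hB : B.Nonempty := card_pos.1 (by omega)
  set x := B.min' hB
  have hx : x ∈ B := B.min'_mem hB
  have hB' : (B.erase x).Nonempty := card_pos.1 (by rw [card_erase_of_mem hx]; omega)
  set y := (B.erase x).min' hB'
  have hy : y ∈ B.erase x := (B.erase x).min'_mem hB'
  refine ⟨x, y, (B.erase x).erase y, ?_, fun z hz => ?_, ?_⟩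
  · exact lt_of_le_of_ne (B.min'_le y (mem_of_mem_erase hy)) (ne_of_mem_erase hy).symm
  · exact lt_of_le_of_ne ((B.erase x).min'_le z (mem_of_mem_erase hz)) (ne_of_mem_erase hz).symm
  · rw [insert_erase hy, insert_erase hx]

theorem Finset.card_filter_odd_mul_two {B : Finset ℕ} (heven : Even #B)
    (hgap : ∀ x ∈ B, ∀ y ∈ B, x < y → Disjoint B (Ioo x y) → Odd (y - x)) :
    #(B.filter Odd) * 2 = #B := by
  obtain ⟨k, hk⟩ := heven
  induction k generalizing B with
  | zero => simp_all
  | succ k ih =>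
    obtain ⟨x, y, C, hxy, hyC, rfl⟩ :=
      exists_eq_insert_insert_of_one_lt_card (by omega : 1 < #B)
    have hy : y ∉ C := fun h => (hyC y h).false
    have hx : x ∉ insert y C := by
      simp only [mem_insert, not_or]
      exact ⟨hxy.ne, fun h => (hxy.trans (hyC x h)).false⟩
    have hCgap : Disjoint C (Ioo x y) :=
      disjoint_left.2 fun z hz hz' => (mem_Ioo.1 hz').2.not_gt (hyC z hz)
    have hxy_odd : Odd (y - x) := hgap x (mem_insert_self _ _) y
      (mem_insert_of_mem (mem_insert_self _ _)) hxy (by simp [hCgap])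
    rw [card_insert_of_notMem hx, card_insert_of_notMem hy] at hk ⊢
    have hC := ih (B := C) (fun x' hx' y' hy' hxy' hgap' => hgap x' (by simp [hx']) y'
      (by simp [hy']) hxy' (by simp [hgap', (hyC x' hx').le, (hxy.trans (hyC x' hx')).le]))
      (by omega)
    have hparity : Odd y ↔ ¬Odd x := by
      rw [Nat.not_odd_iff_even]
      exact (Nat.odd_sub hxy.le).1 hxy_odd
    have hone : (if Odd x then 1 else 0) + (if Odd y then 1 else 0) = 1 := by
      by_cases Odd x <;> simp_all
    rw [card_filter] at hC ⊢
    rw [sum_insert hx, sum_insert hy]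
    omega

def Finset.halveOdds (B : Finset ℕ) : Finset ℕ :=
  (B.filter fun x => Odd x).image fun x => (x + 1) / 2

theorem Finset.mem_halveOdds {B : Finset ℕ} {j : ℕ} :
    j ∈ B.halveOdds ↔ 0 < j ∧ 2 * j - 1 ∈ B := by
  simp only [halveOdds, mem_image, mem_filter]
  constructor
  · rintro ⟨x, ⟨hx, k, rfl⟩, rfl⟩
    exact ⟨by omega, by convert hx using 1; omega⟩
  · rintro ⟨hj, h⟩
    exact ⟨2 * j - 1, ⟨h, j - 1, by omega⟩, by omega⟩

theorem Finset.card_halveOdds (B : Finset ℕ) : #B.halveOdds = #(B.filter Odd) := by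
  refine card_image_of_injOn fun x hx y hy hxy => ?_
  obtain ⟨-, k, rfl⟩ := mem_filter.1 hx
  obtain ⟨-, l, rfl⟩ := mem_filter.1 hy
  omega

theorem Finset.halveOdds_Icc (N : ℕ) : (Icc 1 N).halveOdds = Icc 1 ((N + 1) / 2) := by
  ext j
  simp only [mem_halveOdds, mem_Icc]
  omega

namespace Finpartition

variable {s : Finset ℕ} (P : Finpartition s) (hodd : ∀ B ∈ P.parts, (B.filter Odd).Nonempty)

def halveOdds : Finpartition s.halveOdds :=
  ofExistsUnique (P.parts.image Finset.halveOdds)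
    (by
      simp only [mem_image, forall_exists_index, and_imp]
      rintro _ B hB rfl j hj
      rw [mem_halveOdds] at hj ⊢
      exact ⟨hj.1, P.le hB hj.2⟩)
    (by
      intro j hj
      rw [mem_halveOdds] at hj
      obtain ⟨B, hB, hjB⟩ := P.exists_mem hj.2
      refine ⟨B.halveOdds, ⟨mem_image_of_mem _ hB, mem_halveOdds.2 ⟨hj.1, hjB⟩⟩, ?_⟩
      rintro _ ⟨hC', hjC⟩
      obtain ⟨C, hC, rfl⟩ := mem_image.1 hC'
      rw [P.eq_of_mem_parts hC hB (mem_halveOdds.1 hjC).2 hjB])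
    (by
      rw [mem_image]
      rintro ⟨B, hB, hempty⟩
      exact (hodd B hB).image _ |>.ne_empty hempty)

@[simp]
theorem parts_halveOdds : (P.halveOdds hodd).parts = P.parts.image Finset.halveOdds := rfl

end Finpartition

section Noncrossing

variable {s : Finset ℕ} {P : Finpartition s}

theorem IsNoncrossing.subset_Ioo_or_disjoint (hNC : IsNoncrossing P) {B C : Finset ℕ}
    (hB : B ∈ P.parts) (hC : C ∈ P.parts) {x y : ℕ} (hx : x ∈ B) (hy : y ∈ B)
    (hgap : Disjoint B (Ioo x y)) : C ⊆ Ioo x y ∨ Disjoint C (Ioo x y) := by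
  refine or_iff_not_imp_right.2 fun hmeet w hw => ?_
  obtain ⟨z, hzC, hz⟩ := not_disjoint_iff.1 hmeet
  have hCB : C ≠ B := by rintro rfl; exact disjoint_left.1 hgap hzC hz
  have hwx : w ≠ x := by rintro rfl; exact hCB (P.eq_of_mem_parts hC hB hw hx)
  have hwy : w ≠ y := by rintro rfl; exact hCB (P.eq_of_mem_parts hC hB hw hy)
  rw [mem_Ioo] at hz ⊢
  by_contra hout
  rcases (show w < x ∨ y < w by omega) with h | h
  · exact hCB (hNC w x z y h hz.1 hz.2 C hC B hB hw hzC hx hy)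
  · exact hCB (hNC x z y w hz.1 hz.2 h B hB C hC hx hy hzC hw).symm

theorem IsNoncrossing.dvd_card_Ioo (hs : Set.OrdConnected (s : Set ℕ)) (hNC : IsNoncrossing P)
    {d : ℕ} (hd : ∀ C ∈ P.parts, d ∣ #C) {B : Finset ℕ} (hB : B ∈ P.parts) {x y : ℕ}
    (hx : x ∈ B) (hy : y ∈ B) (hgap : Disjoint B (Ioo x y)) : d ∣ #(Ioo x y) := by
  have hsub : Ioo x y ⊆ s := by
    rw [← coe_subset, coe_Ioo]
    exact Set.Ioo_subset_Icc_self.trans (hs.out (P.le hB hx) (P.le hB hy))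
  rw [← (P.restrict hsub).sum_card_parts, P.sum_restrict hsub card card_empty]
  refine dvd_sum fun C hC => ?_
  rcases hNC.subset_Ioo_or_disjoint hB hC hx hy hgap with h | h
  · rw [inf_eq_left.2 h]
    exact hd C hC
  · rw [disjoint_iff.1 h, bot_eq_empty, card_empty]
    exact dvd_zero d

theorem IsNoncrossing.card_filter_odd_mul_two (hs : Set.OrdConnected (s : Set ℕ))
    (hNC : IsNoncrossing P) (heven : ∀ C ∈ P.parts, Even #C) {B : Finset ℕ}
    (hB : B ∈ P.parts) : #(B.filter Odd) * 2 = #B := by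
  refine Finset.card_filter_odd_mul_two (heven B hB) fun x hx y hy hxy hgap => ?_
  have := hNC.dvd_card_Ioo hs (fun C hC => (heven C hC).two_dvd) hB hx hy hgap
  rw [Nat.card_Ioo] at this
  rw [Nat.odd_iff]
  omega

theorem IsNoncrossing.halveOdds (hNC : IsNoncrossing P)
    (hodd : ∀ B ∈ P.parts, (B.filter Odd).Nonempty) : IsNoncrossing (P.halveOdds hodd) := by
  intro a b c d hab hbc hcd B₁ hB₁ B₂ hB₂ ha hc hb hd
  obtain ⟨C₁, hC₁, rfl⟩ := mem_image.1 hB₁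
  obtain ⟨C₂, hC₂, rfl⟩ := mem_image.1 hB₂
  rw [mem_halveOdds] at ha hb hc hd
  rw [hNC (2 * a - 1) (2 * b - 1) (2 * c - 1) (2 * d - 1) (by omega) (by omega) (by omega)
    C₁ hC₁ C₂ hC₂ ha.2 hc.2 hb.2 hd.2]

end Noncrossing

theorem halved_partition_is_noncrossing_q_partition_general (q n : ℕ)
    (P : Finpartition (Finset.Icc 1 (2 * q * n)))
    (hP : IsNoncrossing P) (hblocks : ∀ B ∈ P.parts, B.card = 2 * q) :
    ∃ P' : Finpartition (Finset.Icc 1 (q * n)),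
      P'.parts = P.parts.image (fun B => (B.filter (fun x => Odd x)).image (fun x => (x + 1) / 2)) ∧
      IsNoncrossing P' ∧ ∀ B ∈ P'.parts, B.card = q := by
  have hs : Set.OrdConnected (↑(Icc 1 (2 * q * n)) : Set ℕ) := by
    rw [coe_Icc]
    exact Set.ordConnected_Icc
  have hcard_odd : ∀ B ∈ P.parts, #(B.filter Odd) * 2 = #B :=
    fun B hB => hP.card_filter_odd_mul_two hs (fun C hC => by simp [hblocks C hC]) hB
  have hne : ∀ B ∈ P.parts, (B.filter Odd).Nonempty := fun B hB => by
    have := (P.nonempty_of_mem_parts hB).card_pos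
    have := hcard_odd B hB
    exact card_pos.1 (by omega)
  have hIcc : (Icc 1 (2 * q * n)).halveOdds = Icc 1 (q * n) := by
    rw [halveOdds_Icc, mul_assoc]
    congr 1
    omega
  refine ⟨(P.halveOdds hne).copy hIcc, rfl, hP.halveOdds hne, ?_⟩
  simp only [Finpartition.copy_parts, Finpartition.parts_halveOdds, mem_image, forall_exists_index,
    and_imp]
  rintro _ B hB rfl
  have := hcard_odd B hB
  rw [hblocks B hB] at this
  rw [card_halveOdds]
  omega

/-- Let `P` be a noncrossing partition of `{1,…,2qn}` all of whose blocks have exactly `2q`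
elements. The partition `P'` of `{1,…,qn}`, whose blocks are obtained from those of `P` by
deleting the even numbers and sending each odd number `2j−1` to `j`, is a noncrossing
partition all of whose blocks have exactly `q` elements. -/
theorem halved_partition_is_noncrossing_q_partition (q n : ℕ) (hq : 0 < q) (hn : 0 < n)
    (P : Finpartition (Finset.Icc 1 (2 * q * n)))
    (hP : IsNoncrossing P) (hblocks : ∀ B ∈ P.parts, B.card = 2 * q) :
    ∃ P' : Finpartition (Finset.Icc 1 (q * n)),
      P'.parts = P.parts.image (fun B => (B.filter (fun x => Odd x)).image (fun x => (x + 1) / 2)) ∧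
      IsNoncrossing P' ∧ ∀ B ∈ P'.parts, B.card = q :=
  halved_partition_is_noncrossing_q_partition_general q n P hP hblocks
end

section
/- Let m, p and n be positive integers and let P be a noncrossing partition of {1,…,mpn} all of whose blocks have exactly mp elements. Define P^{(1)} to be the partition of {1,…,pn} whose blocks are obtained from the blocks of P by keeping only the elements of the form mj+1 (with 0 ≤ j ≤ pn−1) and replacing each such element mj+1 by j+1. Then P^{(1)} is a noncrossing partition of {1,…,pn} all of whose blocks have exactly p elements. -/
open Finset

namespace Nat

variable {m : ℕ}

theorem card_filter_modEq_Ico_add_mul (hm : 0 < m) (a p r : ℕ) :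
    #{x ∈ Ico a (a + m * p) | x ≡ r [MOD m]} = p := by
  have h := Nat.Ico_filter_modEq_card a (a + m * p) hm r
  have hdiv : ((a + m * p : ℕ) - r : ℚ) / m = (a - r) / m + p := by
    field_simp
    push_cast
    ring
  rw [hdiv, Int.ceil_add_natCast, add_sub_cancel_left, max_eq_left (by positivity)] at h
  exact_mod_cast h

theorem filter_Icc_mod_eq_one_mod (hm : 0 < m) (k : ℕ) :
    {x ∈ Icc 1 (m * k) | x % m = 1 % m} = (range k).image (m * · + 1) := by
  ext x
  simp only [mem_filter, mem_Icc, mem_image, mem_range]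
  constructor
  · rintro ⟨⟨hx1, hxk⟩, hxm⟩
    have hdvd : m ∣ x - 1 := (Nat.modEq_iff_dvd' hx1).mp hxm.symm
    refine ⟨(x - 1) / m, Nat.div_lt_of_lt_mul (by omega), ?_⟩
    rw [Nat.mul_div_cancel' hdvd]
    omega
  · rintro ⟨j, hj, rfl⟩
    refine ⟨⟨by omega, Nat.mul_lt_mul_of_pos_left hj hm⟩, Nat.mul_add_mod_self_left m j 1⟩

theorem sub_one_div_add_one_of_mul_add_one (hm : 0 < m) (j : ℕ) :
    (m * j + 1 - 1) / m + 1 = j + 1 := by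
  rw [Nat.add_sub_cancel, Nat.mul_div_cancel_left j hm]

theorem strictMonoOn_sub_one_div_add_one (hm : 0 < m) (k : ℕ) :
    StrictMonoOn (fun x => (x - 1) / m + 1) ((range k).image (m * · + 1) : Set ℕ) := by
  rintro _ hx _ hy hxy
  obtain ⟨i, -, rfl⟩ := mem_image.mp (mem_coe.mp hx)
  obtain ⟨j, -, rfl⟩ := mem_image.mp (mem_coe.mp hy)
  simp only [sub_one_div_add_one_of_mul_add_one hm]
  exact Nat.add_lt_add_right (Nat.lt_of_mul_lt_mul_left (Nat.lt_of_add_lt_add_right hxy)) 1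

theorem image_sub_one_div_add_one (hm : 0 < m) (k : ℕ) :
    ((range k).image (m * · + 1)).image (fun x => (x - 1) / m + 1) = Icc 1 k := by
  rw [image_image]
  ext y
  simp only [mem_image, mem_range, Function.comp_apply, sub_one_div_add_one_of_mul_add_one hm,
    mem_Icc]
  exact ⟨by rintro ⟨j, hj, rfl⟩; omega, fun hy => ⟨y - 1, by omega, by omega⟩⟩

end Nat

namespace Finset

variable {B : Finset ℕ} {m k : ℕ}
  (hcons : ∀ u ∈ B, ∀ v ∈ B, u < v → (∀ w ∈ B, w ≤ u ∨ v ≤ w) → u + 1 ≡ v [MOD m])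
include hcons

theorem add_modEq_orderEmbOfFin_of_consecutive (hB : #B = k) (hk : 0 < k) (i : ℕ) (hi : i < k) :
    B.orderEmbOfFin hB ⟨0, hk⟩ + i ≡ B.orderEmbOfFin hB ⟨i, hi⟩ [MOD m] := by
  set e := B.orderEmbOfFin hB
  induction i with
  | zero => exact Nat.ModEq.refl _
  | succ i ih =>
    refine ((ih (by omega)).add_right 1).trans (hcons _ (B.orderEmbOfFin_mem hB _) _
      (B.orderEmbOfFin_mem hB _) (e.strictMono (Fin.mk_lt_mk.mpr i.lt_succ_self)) ?_)
    intro w hw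
    obtain ⟨j, rfl⟩ : w ∈ Set.range e := by rwa [B.range_orderEmbOfFin hB]
    rcases le_or_gt j ⟨i, by omega⟩ with hj | hj
    · exact Or.inl (e.monotone hj)
    · exact Or.inr (e.monotone (Fin.mk_le_of_le_val (Fin.lt_def.mp hj)))

theorem card_filter_modEq_of_consecutive {p : ℕ} (hm : 0 < m) (hB : #B = m * p) (r : ℕ) :
    #{x ∈ B | x ≡ r [MOD m]} = p := by
  rcases B.eq_empty_or_nonempty with rfl | hne
  · simp only [card_empty, zero_eq_mul] at hB
    simp [hB.resolve_left hm.ne']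
  set e := B.orderEmbOfFin hB
  have hpos : 0 < m * p := hB ▸ hne.card_pos
  set a := e ⟨0, hpos⟩
  have hres (i : Fin (m * p)) : a + i ≡ e i [MOD m] :=
    add_modEq_orderEmbOfFin_of_consecutive hcons hB hpos i i.2
  calc #{x ∈ B | x ≡ r [MOD m]}
      = #{i : Fin (m * p) | e i ≡ r [MOD m]} := by
        rw [← B.map_orderEmbOfFin_univ hB, filter_map, card_map]
        rfl
    _ = #{i : Fin (m * p) | a + i ≡ r [MOD m]} :=
        congrArg card (filter_congr fun i _ => ⟨(hres i).trans, (hres i).symm.trans⟩)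
    _ = #{x ∈ Ico a (a + m * p) | x ≡ r [MOD m]} := by
        refine card_nbij (fun i => a + i) (fun i hi => ?_) (fun i _ j _ h => ?_) ?_
        · simp only [mem_coe, mem_filter, mem_univ, true_and, mem_Ico] at hi ⊢
          exact ⟨⟨by omega, by omega⟩, hi⟩
        · exact Fin.ext (by simpa using h)
        · intro x hx
          simp only [mem_coe, mem_filter, mem_Ico] at hx
          refine ⟨⟨x - a, by omega⟩, ?_, by simp only; omega⟩
          simp only [mem_coe, mem_filter, mem_univ, true_and]
          rw [Nat.add_sub_cancel' hx.1.1]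
          exact hx.2
    _ = p := Nat.card_filter_modEq_Ico_add_mul hm a p r

end Finset

namespace Finpartition

variable {α β : Type*} [DecidableEq α] [DecidableEq β] {s t : Finset α}

def image (P : Finpartition s) (f : α → β) (hf : Set.InjOn f s) :
    Finpartition (s.image f) where
  parts := P.parts.image (Finset.image f)
  supIndep := by
    rw [supIndep_iff_pairwiseDisjoint]
    rintro _ hB' _ hC' hne
    obtain ⟨B, hB, rfl⟩ := mem_image.mp hB'
    obtain ⟨C, hC, rfl⟩ := mem_image.mp hC'
    refine disjoint_left.mpr fun z hzB hzC => ?_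
    obtain ⟨x, hxB, rfl⟩ := mem_image.mp hzB
    obtain ⟨y, hyC, hxy⟩ := mem_image.mp hzC
    have hxC : x ∈ C := hf (P.subset hC hyC) (P.subset hB hxB) hxy ▸ hyC
    exact hne (congrArg _ (P.eq_of_mem_parts hB hC hxB hxC))
  sup_parts := by
    conv_rhs => rw [← P.biUnion_parts]
    rw [sup_image, Function.id_comp, biUnion_image, sup_eq_biUnion]
    rfl
  bot_notMem h := by
    obtain ⟨B, hB, hB_empty⟩ := mem_image.mp h
    exact P.ne_empty hB (image_eq_empty.mp hB_empty)

@[simp]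
theorem parts_image (P : Finpartition s) (f : α → β) (hf : Set.InjOn f s) :
    (P.image f hf).parts = P.parts.image (Finset.image f) :=
  rfl

theorem parts_restrict_filter (P : Finpartition s) (q : α → Prop) [DecidablePred q]
    (hq : ∀ B ∈ P.parts, ∃ x ∈ B, q x) :
    (P.restrict (filter_subset q s)).parts = P.parts.image (Finset.filter q) := by
  have hinter : ∀ B ∈ P.parts, B ⊓ s.filter q = B.filter q := fun B hB => by
    rw [inf_eq_inter, inter_filter, inter_eq_left.mpr (P.subset hB)]
  change (P.parts.image (· ⊓ s.filter q)).erase ⊥ = _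
  rw [image_congr hinter, erase_eq_of_notMem]
  simp only [bot_eq_empty, mem_image, not_exists, not_and, ← nonempty_iff_ne_empty,
    filter_nonempty_iff]
  exact hq

theorem dvd_card_of_subset_or_disjoint (P : Finpartition s) (hts : t ⊆ s)
    (ht : ∀ C ∈ P.parts, C ⊆ t ∨ Disjoint C t) {m : ℕ} (hdvd : ∀ B ∈ P.parts, m ∣ #B) :
    m ∣ #t := by
  rw [← (P.restrict hts).sum_card_parts, sum_restrict P hts card card_empty]
  refine dvd_sum fun C hC => ?_
  rcases ht C hC with hCt | hCt
  · rw [inf_eq_inter, inter_eq_left.mpr hCt]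
    exact hdvd C hC
  · rw [inf_eq_inter, disjoint_iff_inter_eq_empty.mp hCt, card_empty]
    exact dvd_zero m

end Finpartition

namespace IsNoncrossing

variable {s : Finset ℕ} {P : Finpartition s}

theorem restrict (hP : IsNoncrossing P) {t : Finset ℕ} (hts : t ⊆ s) :
    IsNoncrossing (P.restrict hts) := by
  intro a b c d hab hbc hcd C₁ hC₁ C₂ hC₂ ha hc hb hd
  obtain ⟨B₁, hB₁, rfl⟩ := mem_image.mp (mem_of_mem_erase hC₁)
  obtain ⟨B₂, hB₂, rfl⟩ := mem_image.mp (mem_of_mem_erase hC₂)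
  rw [hP a b c d hab hbc hcd B₁ hB₁ B₂ hB₂ (mem_of_mem_inter_left ha)
    (mem_of_mem_inter_left hc) (mem_of_mem_inter_left hb) (mem_of_mem_inter_left hd)]

theorem image (hP : IsNoncrossing P) {f : ℕ → ℕ} (hf : StrictMonoOn f s) :
    IsNoncrossing (P.image f hf.injOn) := by
  intro _ _ _ _ hab hbc hcd C₁ hC₁ C₂ hC₂ ha' hc' hb' hd'
  obtain ⟨B₁, hB₁, rfl⟩ := mem_image.mp hC₁
  obtain ⟨B₂, hB₂, rfl⟩ := mem_image.mp hC₂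
  obtain ⟨a, ha, rfl⟩ := mem_image.mp ha'
  obtain ⟨b, hb, rfl⟩ := mem_image.mp hb'
  obtain ⟨c, hc, rfl⟩ := mem_image.mp hc'
  obtain ⟨d, hd, rfl⟩ := mem_image.mp hd'
  have hs : ∀ {B}, B ∈ P.parts → ∀ {x}, x ∈ B → x ∈ (s : Set ℕ) := fun hB _ hx =>
    mem_coe.mpr (P.subset hB hx)
  rw [hP a b c d ((hf.lt_iff_lt (hs hB₁ ha) (hs hB₂ hb)).mp hab)
    ((hf.lt_iff_lt (hs hB₂ hb) (hs hB₁ hc)).mp hbc)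
    ((hf.lt_iff_lt (hs hB₁ hc) (hs hB₂ hd)).mp hcd) B₁ hB₁ B₂ hB₂ ha hc hb hd]

theorem subset_or_disjoint_Ioo (hP : IsNoncrossing P) {B : Finset ℕ} (hB : B ∈ P.parts)
    {u v : ℕ} (hu : u ∈ B) (hv : v ∈ B) (hgap : ∀ w ∈ B, w ≤ u ∨ v ≤ w) :
    ∀ C ∈ P.parts, C ⊆ Ioo u v ∨ Disjoint C (Ioo u v) := by
  intro C hC
  refine or_iff_not_imp_right.mpr fun hmeet y hyC => ?_
  obtain ⟨x, hxC, hx⟩ := not_disjoint_iff.mp hmeet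
  obtain ⟨hux, hxv⟩ := mem_Ioo.mp hx
  have hCB : C ≠ B := by
    rintro rfl
    rcases hgap x hxC with h | h <;> omega
  have hyu : y ≠ u := fun h => hCB (P.eq_of_mem_parts hC hB hyC (h ▸ hu))
  have hyv : y ≠ v := fun h => hCB (P.eq_of_mem_parts hC hB hyC (h ▸ hv))
  rw [mem_Ioo]
  by_contra hy
  rcases lt_or_gt_of_ne hyu with hyu' | hyu'
  · exact hCB (hP y u x v hyu' hux hxv C hC B hB hyC hxC hu hv)
  · exact hCB (hP u x v y hux hxv (by omega) B hB C hC hu hv hxC hyC).symm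

theorem modEq_of_consecutive (hP : IsNoncrossing P) (hs : (s : Set ℕ).OrdConnected) {m : ℕ}
    (hdvd : ∀ B ∈ P.parts, m ∣ #B) {B : Finset ℕ} (hB : B ∈ P.parts) {u v : ℕ} (hu : u ∈ B)
    (hv : v ∈ B) (huv : u < v) (hgap : ∀ w ∈ B, w ≤ u ∨ v ≤ w) : u + 1 ≡ v [MOD m] := by
  have hsub : Ioo u v ⊆ s := fun x hx =>
    mem_coe.mp (hs.out (P.subset hB hu) (P.subset hB hv) (mem_Icc.mp (Ioo_subset_Icc_self hx)))
  have h := P.dvd_card_of_subset_or_disjoint hsub (hP.subset_or_disjoint_Ioo hB hu hv hgap) hdvd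
  rw [Nat.card_Ioo, Nat.sub_sub] at h
  exact (Nat.modEq_iff_dvd' huv).mpr h

end IsNoncrossing

theorem reduced_partition_is_noncrossing_p_partition_general (m p n : ℕ) (hm : 0 < m) (hp : 0 < p)
    (P : Finpartition (Finset.Icc 1 (m * p * n)))
    (hP : IsNoncrossing P) (hblocks : ∀ B ∈ P.parts, B.card = m * p) :
    ∃ P₁ : Finpartition (Finset.Icc 1 (p * n)),
      P₁.parts = P.parts.image
        (fun B => (B.filter (fun x => x % m = 1 % m)).image (fun x => (x - 1) / m + 1)) ∧
      IsNoncrossing P₁ ∧ ∀ B ∈ P₁.parts, B.card = p := by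
  set q : ℕ → Prop := fun x => x % m = 1 % m
  set g : ℕ → ℕ := fun x => (x - 1) / m + 1
  have hcard : ∀ B ∈ P.parts, #(B.filter q) = p := fun B hB =>
    card_filter_modEq_of_consecutive
      (fun _ hu _ hv => hP.modEq_of_consecutive (by simpa using Set.ordConnected_Icc)
        (fun C hC => hblocks C hC ▸ dvd_mul_right m p) hB hu hv) hm (hblocks B hB) 1
  have hq : ∀ B ∈ P.parts, ∃ x ∈ B, q x := fun B hB =>
    filter_nonempty_iff.mp (card_pos.mp (hcard B hB ▸ hp))
  have hS : (Icc 1 (m * p * n)).filter q = (range (p * n)).image (m * · + 1) := by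
    rw [mul_assoc]
    exact Nat.filter_Icc_mod_eq_one_mod hm (p * n)
  have hg : StrictMonoOn g ((Icc 1 (m * p * n)).filter q : Set ℕ) :=
    hS ▸ Nat.strictMonoOn_sub_one_div_add_one hm (p * n)
  have himage : ((Icc 1 (m * p * n)).filter q).image g = Icc 1 (p * n) :=
    hS ▸ Nat.image_sub_one_div_add_one hm (p * n)
  set P₁ := ((P.restrict (filter_subset q _)).image g hg.injOn).copy himage
  have hparts : P₁.parts = P.parts.image (fun B => (B.filter q).image g) := by
    rw [Finpartition.copy_parts, Finpartition.parts_image,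
      Finpartition.parts_restrict_filter P q hq, image_image]
    rfl
  refine ⟨P₁, hparts, (hP.restrict _).image hg, fun C hC => ?_⟩
  obtain ⟨B, hB, rfl⟩ := mem_image.mp (hparts ▸ hC)
  rw [card_image_of_injOn (hg.injOn.mono (filter_subset_filter q (P.subset hB))), hcard B hB]

/-- Let `P` be a noncrossing partition of `{1,…,mpn}` all of whose blocks have exactly `mp`
elements. The partition `P⁽¹⁾` of `{1,…,pn}`, whose blocks are obtained from those of `P` by
keeping only the elements of the form `mj+1` and sending each such element `mj+1` to `j+1`,
is a noncrossing partition all of whose blocks have exactly `p` elements. -/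
theorem reduced_partition_is_noncrossing_p_partition (m p n : ℕ) (hm : 0 < m) (hp : 0 < p)
    (hn : 0 < n) (P : Finpartition (Finset.Icc 1 (m * p * n)))
    (hP : IsNoncrossing P) (hblocks : ∀ B ∈ P.parts, B.card = m * p) :
    ∃ P₁ : Finpartition (Finset.Icc 1 (p * n)),
      P₁.parts = P.parts.image
        (fun B => (B.filter (fun x => x % m = 1 % m)).image (fun x => (x - 1) / m + 1)) ∧
      IsNoncrossing P₁ ∧ ∀ B ∈ P₁.parts, B.card = p :=
  reduced_partition_is_noncrossing_p_partition_general m p n hm hp P hP hblocks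
end

section
/- Let p and n be positive integers and let P be a noncrossing partition of {1,…,pn} in which the cardinality of every block is a multiple of p. Then every block of P of cardinality kp contains exactly k elements congruent to 1 modulo p. -/
open Finset

/-- Let `P` be a noncrossing partition of `{1,…,pn}` in which the cardinality of every block
is a multiple of `p`. Then every block of cardinality `kp` contains exactly `k` elements
congruent to `1` modulo `p`. -/
theorem blocks_contain_k_elements_congruent_one (p n : ℕ) (hp : 0 < p) (hn : 0 < n)
    (P : Finpartition (Finset.Icc 1 (p * n)))
    (hP : IsNoncrossing P) (hblocks : ∀ B ∈ P.parts, p ∣ B.card) :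
    ∀ B ∈ P.parts, ∀ k : ℕ, B.card = k * p →
      (B.filter (fun x => x % p = 1 % p)).card = k := by
  intro B hB k hcard
  have hne : B.Nonempty := P.nonempty_of_mem_parts hB
  set a := B.min' hne with ha
  have haB : a ∈ B := B.min'_mem hne
  have hamin : ∀ y ∈ B, a ≤ y := fun y hy => B.min'_le y hy
  have hBs : ∀ y ∈ B, 1 ≤ y ∧ y ≤ p * n := by
    intro y hy
    have := P.le hB hy
    simpa using Finset.mem_Icc.1 this
  -- Key: for every x in B, the number of non-B elements strictly between a and x
  -- is divisible by p.
  have key : ∀ x ∈ B, p ∣ ((Finset.Ioo a x) \ B).card := by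
    intro x hx
    set T := (Finset.Ioo a x) \ B with hT
    have hTmem : ∀ y, y ∈ T ↔ a < y ∧ y < x ∧ y ∉ B := by
      intro y
      simp [hT, Finset.mem_sdiff, Finset.mem_Ioo, and_assoc]
    have hTs : T ⊆ Finset.Icc 1 (p * n) := by
      intro y hy
      rw [hTmem] at hy
      have h1 := (hBs a haB).1
      have h2 := (hBs x hx).2
      exact Finset.mem_Icc.2 ⟨by omega, by omega⟩
    have hpart : ∀ B₂ ∈ P.parts, ∀ y ∈ B₂, y ∈ T → B₂ ⊆ T := by
      intro B₂ hB₂ y hy hyT z hz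
      rw [hTmem] at hyT
      obtain ⟨hay, hyx, hyB⟩ := hyT
      have hB₂B : B₂ ≠ B := fun h => hyB (h ▸ hy)
      have hzB : z ∉ B := by
        intro hzB
        exact hB₂B (P.eq_of_mem_parts hB₂ hB hz hzB)
      have hza : z ≠ a := fun h => hzB (h ▸ haB)
      have hzx : z ≠ x := fun h => hzB (h ▸ hx)
      rw [hTmem]
      rcases lt_trichotomy z a with h | h | h
      · exact absurd (hP z a y x h hay hyx B₂ hB₂ B hB hz hy haB hx) hB₂B
      · exact absurd h hza
      · rcases lt_trichotomy z x with h' | h' | h'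
        · exact ⟨h, h', hzB⟩
        · exact absurd h' hzx
        · exact absurd (hP a y x z hay hyx h' B hB B₂ hB₂ haB hx hy hz).symm hB₂B
    have hTeq : T = (P.parts.filter (· ⊆ T)).biUnion id := by
      ext y
      constructor
      · intro hy
        obtain ⟨B₂, hB₂, hyB₂⟩ := P.exists_mem (hTs hy)
        have : B₂ ⊆ T := hpart B₂ hB₂ y hyB₂ hy
        exact Finset.mem_biUnion.2 ⟨B₂, Finset.mem_filter.2 ⟨hB₂, this⟩, hyB₂⟩
      · intro hy
        obtain ⟨B₂, hB₂, hyB₂⟩ := Finset.mem_biUnion.1 hy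
        exact (Finset.mem_filter.1 hB₂).2 hyB₂
    rw [hTeq, Finset.card_biUnion]
    · exact Finset.dvd_sum fun B₂ hB₂ => hblocks B₂ (Finset.mem_filter.1 hB₂).1
    · intro u hu v hv huv
      exact P.disjoint (Finset.mem_filter.1 hu).1 (Finset.mem_filter.1 hv).1 huv
  -- For x in B, x ≡ a + #{y ∈ B | y < x} (mod p)
  have hmod : ∀ x ∈ B, (a + (B.filter (· < x)).card) % p = x % p := by
    intro x hx
    rcases eq_or_lt_of_le (hamin x hx) with h | h
    · have : B.filter (· < x) = ∅ := by
        apply Finset.filter_eq_empty_iff.2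
        intro y hy
        have := hamin y hy
        omega
      rw [this]
      simp [← h]
    · obtain ⟨t, ht⟩ := key x hx
      have hsplit : (Finset.Ioo a x ∩ B).card + ((Finset.Ioo a x) \ B).card
          = (Finset.Ioo a x).card := Finset.card_inter_add_card_sdiff _ _
      have hIoo : (Finset.Ioo a x).card = x - a - 1 := Nat.card_Ioo a x
      have hfil : B.filter (· < x) = insert a (Finset.Ioo a x ∩ B) := by
        ext y
        simp only [Finset.mem_filter, Finset.mem_insert, Finset.mem_inter, Finset.mem_Ioo]
        constructor
        · rintro ⟨hyB, hyx⟩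
          rcases eq_or_lt_of_le (hamin y hyB) with h' | h'
          · exact Or.inl h'.symm
          · exact Or.inr ⟨⟨h', hyx⟩, hyB⟩
        · rintro (rfl | ⟨⟨h1, h2⟩, h3⟩)
          · exact ⟨haB, h⟩
          · exact ⟨h3, h2⟩
      have hna : a ∉ Finset.Ioo a x ∩ B := by simp
      have hfc : (B.filter (· < x)).card = (Finset.Ioo a x ∩ B).card + 1 := by
        rw [hfil, Finset.card_insert_of_notMem hna]
      have hx' : x = a + (B.filter (· < x)).card + p * t := by omega
      conv_rhs => rw [hx']
      rw [Nat.add_mul_mod_self_left]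
  set φ : ℕ → ℕ := fun x => (B.filter (· < x)).card with hφ
  have hφlt : ∀ x ∈ B, φ x < B.card := by
    intro x hx
    apply Finset.card_lt_card
    rw [Finset.ssubset_iff_of_subset (Finset.filter_subset _ _)]
    exact ⟨x, hx, by simp⟩
  have hφmono : ∀ x ∈ B, ∀ y ∈ B, x < y → φ x < φ y := by
    intro x hx y hy hxy
    apply Finset.card_lt_card
    have hsub : B.filter (· < x) ⊆ B.filter (· < y) := by
      intro z hz
      simp only [Finset.mem_filter] at *
      exact ⟨hz.1, hz.2.trans hxy⟩
    rw [Finset.ssubset_iff_of_subset hsub]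
    exact ⟨x, Finset.mem_filter.2 ⟨hx, hxy⟩, by simp⟩
  have hφinj : ∀ x ∈ B, ∀ y ∈ B, φ x = φ y → x = y := by
    intro x hx y hy h
    rcases lt_trichotomy x y with h' | h' | h'
    · exact absurd h (hφmono x hx y hy h').ne
    · exact h'
    · exact absurd h.symm (hφmono y hy x hx h').ne
  have himage : B.image φ = Finset.range B.card := by
    apply Finset.eq_of_subset_of_card_le
    · intro j hj
      obtain ⟨x, hx, rfl⟩ := Finset.mem_image.1 hj
      exact Finset.mem_range.2 (hφlt x hx)
    · rw [Finset.card_range, Finset.card_image_of_injOn hφinj]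
  -- the shifted residue
  set c : ℕ := 1 % p + (p - a % p) with hc
  have hamp : a % p < p := Nat.mod_lt _ hp
  have hdm : a % p + p * (a / p) = a := Nat.mod_add_div a p
  have hac : (a + c) % p = 1 % p := by
    have h1 : a + c = 1 % p + (p * (a / p) + p) := by
      rw [hc]
      generalize p * (a / p) = X at hdm ⊢
      omega
    rw [h1, show 1 % p + (p * (a / p) + p) = 1 % p + p * (a / p + 1) by ring,
      Nat.add_mul_mod_self_left]
    exact Nat.mod_mod_of_dvd 1 dvd_rfl
  have hcond : ∀ x ∈ B, (x % p = 1 % p ↔ φ x % p = c % p) := by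
    intro x hx
    have h1 := hmod x hx
    constructor
    · intro h
      have h2 : a + φ x ≡ a + c [MOD p] := by
        show (a + φ x) % p = (a + c) % p
        rw [h1, hac, h]
      exact Nat.ModEq.add_left_cancel' a h2
    · intro h
      have h2 : a + φ x ≡ a + c [MOD p] := Nat.ModEq.add_left a h
      have h3 : (a + φ x) % p = (a + c) % p := h2
      rw [← h1, h3, hac]
  -- transfer the count to range m
  have hcount : (B.filter (fun x => x % p = 1 % p)).card
      = ((Finset.range B.card).filter (fun j => j % p = c % p)).card := by
    apply Finset.card_bij (fun x _ => φ x)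
    · intro x hx
      obtain ⟨hxB, hxr⟩ := Finset.mem_filter.1 hx
      exact Finset.mem_filter.2 ⟨Finset.mem_range.2 (hφlt x hxB),
        (hcond x hxB).1 hxr⟩
    · intro x hx y hy h
      exact hφinj x (Finset.mem_filter.1 hx).1 y (Finset.mem_filter.1 hy).1 h
    · intro j hj
      obtain ⟨hjr, hjc⟩ := Finset.mem_filter.1 hj
      have : j ∈ B.image φ := himage ▸ hjr
      obtain ⟨x, hx, rfl⟩ := Finset.mem_image.1 this
      exact ⟨x, Finset.mem_filter.2 ⟨hx, (hcond x hx).2 hjc⟩, rfl⟩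
  rw [hcount]
  have h4 : ((Finset.range B.card).filter (fun j => j % p = c % p)).card
      = (B.card).count (· ≡ c [MOD p]) := by
    rw [Nat.count_eq_card_filter_range]
    rfl
  rw [h4, Nat.count_modEq_card B.card hp c, hcard]
  simp [Nat.mul_mod_left, Nat.mul_div_cancel _ hp]
end

section
/- For every integer p ≥ 2, define the triangle F^p(n,k) for n ≥ 0 and 0 ≤ k ≤ n by the initial conditions F^p(0,0) = 1, F^p(n,0) = 0 for n > 0, and the recurrence F^p(n,k) = Σ_{j=k−1}^{n−1} C(j−k+p−1, p−2)·F^p(n−1, j) for n > 0 and 0 < k ≤ n. Then for every n ≥ 0, the row sum Σ_{k=0}^{n} F^p(n,k) equals the Fuss–Catalan number A_n^p = (1/(pn+1))·C(pn+1, n). -/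
/-!
For `n ≥ 1` and `m = (p - 1) n` the entries have the closed form
`F(n,k) = p·C(m - 1 + n - k, m - 1) - (p - 1)·C(m + n - k, m)`, i.e. the ballot number
`(k / n)·C(pn - k - 1, n - k)`. By the upper Chu–Vandermonde identity the recurrence sends a
column `j ↦ C(c + (n - j), c)` of row `n` to the column `k ↦ C(c + p - 1 + (n + 1 - k), c + p - 1)`
of row `n + 1`, so the closed form propagates from row to row. Summing a row with the
hockey-stick identity gives `p·C(pn, n) - (p - 1)·C(pn + 1, n)`, which is `C(pn + 1, n)/(pn + 1)`
because `((p - 1) n + 1)·C(pn + 1, n) = (pn + 1)·C(pn, n)`.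
-/

/-- The triangle `F^p(n,k)`: `F^p(0,0) = 1`, `F^p(n,0) = 0` for `n > 0`, and for `n > 0`,
`0 < k ≤ n`, `F^p(n,k) = Σ_{j=k−1}^{n−1} C(j−k+p−1, p−2)·F^p(n−1, j)`.
(Note `j + p - 1 - k` equals `j − k + p − 1` over ℤ whenever `j ≥ k − 1` and `p ≥ 2`.) -/
def F (p : ℕ) : ℕ → ℕ → ℕ
  | 0, k => if k = 0 then 1 else 0
  | n + 1, k =>
    if k = 0 then 0
    else ∑ j ∈ Finset.Icc (k - 1) n, Nat.choose (j + p - 1 - k) (p - 2) * F p n j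

open Finset PowerSeries

-- Compare coefficients in `(1 - X)⁻¹ ^ (a + 1) * (1 - X)⁻¹ ^ (b + 1) = (1 - X)⁻¹ ^ (a + b + 2)`.
theorem Nat.sum_antidiagonal_add_choose_mul_add_choose (a b r : ℕ) :
    ∑ ij ∈ antidiagonal r, (a + ij.1).choose a * (b + ij.2).choose b =
      (a + b + 1 + r).choose (a + b + 1) := by
  have h := congrArg (fun f => coeff r f.val) (invOneSubPow_add ℤ (a + 1) (b + 1))
  rw [show a + 1 + (b + 1) = a + b + 1 + 1 by ring] at h
  simp only [Units.val_mul, invOneSubPow_val_succ_eq_mk_add_choose, coeff_mul, coeff_mk] at h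
  exact_mod_cast h.symm

theorem Nat.sum_Icc_add_choose_mul_add_choose (a b m n : ℕ) (h : m ≤ n) :
    ∑ j ∈ Icc m n, (a + (j - m)).choose a * (b + (n - j)).choose b =
      (a + b + 1 + (n - m)).choose (a + b + 1) := by
  rw [← sum_antidiagonal_add_choose_mul_add_choose,
    Finset.Nat.sum_antidiagonal_eq_sum_range_succ (fun i j => (a + i).choose a * (b + j).choose b),
    ← Ico_add_one_right_eq_Icc, sum_Ico_eq_sum_range, Nat.succ_eq_add_one,
    show n + 1 - m = n - m + 1 by omega]
  refine sum_congr rfl fun t _ => ?_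
  rw [Nat.add_sub_cancel_left, Nat.sub_add_eq]

theorem Nat.sum_range_add_sub_choose (b n : ℕ) :
    ∑ k ∈ range (n + 1), (b + (n - k)).choose b = (b + 1 + n).choose (b + 1) := by
  rw [show b + 1 = 0 + b + 1 by ring, ← sum_antidiagonal_add_choose_mul_add_choose,
    Finset.Nat.sum_antidiagonal_eq_sum_range_succ (fun i j => (0 + i).choose 0 * (b + j).choose b)]
  simp

theorem F_succ_zero (p n : ℕ) : F p (n + 1) 0 = 0 := rfl

theorem F_succ_of_ne_zero {k : ℕ} (p n : ℕ) (hk : k ≠ 0) :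
    F p (n + 1) k = ∑ j ∈ Icc (k - 1) n, (j + p - 1 - k).choose (p - 2) * F p n j := by
  simp [F, hk]

theorem sum_Icc_choose_mul_add_choose {p k n : ℕ} (c : ℕ) (hp : 2 ≤ p) (hk : 1 ≤ k)
    (hkn : k ≤ n + 1) :
    ∑ j ∈ Icc (k - 1) n, (j + p - 1 - k).choose (p - 2) * (c + (n - j)).choose c =
      (c + p - 1 + (n + 1 - k)).choose (c + p - 1) := by
  have h := Nat.sum_Icc_add_choose_mul_add_choose (p - 2) c (k - 1) n (by omega)
  rw [show p - 2 + c + 1 = c + p - 1 by omega, show n - (k - 1) = n + 1 - k by omega] at h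
  rw [← h]
  refine sum_congr rfl fun j hj => ?_
  rw [show j + p - 1 - k = p - 2 + (j - (k - 1)) by have := mem_Icc.1 hj; omega]

theorem sub_one_mul_choose_eq {p n : ℕ} (hp : 2 ≤ p) (hn : 1 ≤ n) :
    (p - 1) * ((p - 1) * n + n).choose ((p - 1) * n) =
      p * ((p - 1) * n - 1 + n).choose ((p - 1) * n - 1) := by
  obtain ⟨q, rfl⟩ : ∃ q, p = q + 1 := ⟨p - 1, by omega⟩
  obtain ⟨l, hl⟩ : ∃ l, q * n = l + 1 := ⟨q * n - 1, by
    have : 0 < q * n := Nat.mul_pos (by omega) hn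
    omega⟩
  have h := Nat.add_one_mul_choose_eq (l + n) l
  rw [show l + n + 1 = l + 1 + n by ring] at h
  simp only [Nat.add_sub_cancel]
  rw [hl, Nat.add_sub_cancel]
  apply Nat.eq_of_mul_eq_mul_right hn
  calc q * (l + 1 + n).choose (l + 1) * n = (l + 1 + n).choose (l + 1) * (l + 1) := by
        rw [← hl]; ring
    _ = (l + 1 + n) * (l + n).choose l := h.symm
    _ = (q + 1) * (l + n).choose l * n := by rw [← hl]; ring

theorem F_add_mul_choose {p n k : ℕ} (hp : 2 ≤ p) (hn : 1 ≤ n) (hk : k ≤ n) :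
    F p n k + (p - 1) * ((p - 1) * n + (n - k)).choose ((p - 1) * n) =
      p * ((p - 1) * n - 1 + (n - k)).choose ((p - 1) * n - 1) := by
  induction n, hn using Nat.le_induction generalizing k with
  | base =>
    interval_cases k
    · simpa [F_succ_zero] using sub_one_mul_choose_eq hp le_rfl
    · have h11 : F p 1 1 = 1 := by simp [F, show p - 1 - 1 = p - 2 by omega]
      rw [h11, Nat.sub_self, add_zero, add_zero, Nat.choose_self, Nat.choose_self]
      omega
  | succ n hn ih =>
    rcases Nat.eq_zero_or_pos k with rfl | hk0
    · rw [F_succ_zero, zero_add, Nat.sub_zero]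
      exact sub_one_mul_choose_eq hp (by omega)
    have hm : (p - 1) * (n + 1) = (p - 1) * n + (p - 1) := by ring
    have hm0 : 0 < (p - 1) * n := Nat.mul_pos (by omega) hn
    calc F p (n + 1) k + (p - 1) * ((p - 1) * (n + 1) + (n + 1 - k)).choose ((p - 1) * (n + 1))
        = ∑ j ∈ Icc (k - 1) n, (j + p - 1 - k).choose (p - 2) * F p n j
          + (p - 1) * ∑ j ∈ Icc (k - 1) n,
              (j + p - 1 - k).choose (p - 2) * ((p - 1) * n + (n - j)).choose ((p - 1) * n) := by
          rw [F_succ_of_ne_zero p n hk0.ne', sum_Icc_choose_mul_add_choose _ hp hk0 hk,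
            show (p - 1) * n + p - 1 = (p - 1) * (n + 1) by omega]
      _ = ∑ j ∈ Icc (k - 1) n, (j + p - 1 - k).choose (p - 2) *
            (F p n j + (p - 1) * ((p - 1) * n + (n - j)).choose ((p - 1) * n)) := by
          rw [mul_sum, ← sum_add_distrib]
          refine sum_congr rfl fun j _ => by ring
      _ = p * ∑ j ∈ Icc (k - 1) n,
            (j + p - 1 - k).choose (p - 2) * ((p - 1) * n - 1 + (n - j)).choose ((p - 1) * n - 1) := by
          rw [mul_sum]
          refine sum_congr rfl fun j hj => ?_
          rw [ih (mem_Icc.1 hj).2]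
          ring
      _ = p * ((p - 1) * (n + 1) - 1 + (n + 1 - k)).choose ((p - 1) * (n + 1) - 1) := by
          rw [sum_Icc_choose_mul_add_choose _ hp hk0 hk,
            show (p - 1) * n - 1 + p - 1 = (p - 1) * (n + 1) - 1 by omega]

theorem sum_range_F_add_mul_choose {p n : ℕ} (hp : 2 ≤ p) (hn : 1 ≤ n) :
    ∑ k ∈ range (n + 1), F p n k + (p - 1) * (p * n + 1).choose n = p * (p * n).choose n := by
  have hpn : (p - 1) * n + n = p * n := by
    rw [← Nat.succ_mul, Nat.succ_eq_add_one, Nat.sub_add_cancel (by omega)]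
  have hm0 : 0 < (p - 1) * n := Nat.mul_pos (by omega) hn
  have h := sum_congr rfl fun k hk => F_add_mul_choose hp hn (Nat.lt_succ_iff.1 (mem_range.1 hk))
  rw [sum_add_distrib, ← mul_sum, ← mul_sum, Nat.sum_range_add_sub_choose,
    Nat.sum_range_add_sub_choose, Nat.sub_add_cancel hm0,
    show (p - 1) * n + 1 + n = p * n + 1 by omega, hpn] at h
  rwa [Nat.choose_symm_of_eq_add (show p * n + 1 = n + ((p - 1) * n + 1) by omega),
    Nat.choose_symm_of_eq_add (show p * n = n + (p - 1) * n by omega)]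

theorem eq_choose_div_of_add_sub_one_mul_choose {p n r : ℕ} (hp : 1 ≤ p)
    (h : r + (p - 1) * (p * n + 1).choose n = p * (p * n).choose n) :
    r = (p * n + 1).choose n / (p * n + 1) := by
  obtain ⟨q, rfl⟩ : ∃ q, p = q + 1 := ⟨p - 1, by omega⟩
  have hrel := Nat.choose_mul_succ_eq ((q + 1) * n) n
  rw [show (q + 1) * n + 1 - n = q * n + 1 by rw [add_mul]; omega] at hrel
  simp only [Nat.add_sub_cancel] at h
  refine (Nat.div_eq_of_eq_mul_left (by omega) ?_).symm
  zify at h hrel ⊢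
  linear_combination (-((q + 1 : ℤ) * n + 1)) * h - (q + 1) * hrel

/-- For every integer `p ≥ 2` and every `n ≥ 0`, the row sum `Σ_{k=0}^{n} F^p(n,k)` equals
the Fuss–Catalan number `A_n^p = (1/(pn+1))·C(pn+1, n)`. -/
theorem row_sums_of_F_triangle_are_fussCatalan (p : ℕ) (hp : 2 ≤ p) (n : ℕ) :
    ∑ k ∈ Finset.range (n + 1), F p n k = (p * n + 1).choose n / (p * n + 1) := by
  rcases Nat.eq_zero_or_pos n with rfl | hn
  · simp [F]
  exact eq_choose_div_of_add_sub_one_mul_choose (by omega) (sum_range_F_add_mul_choose hp hn)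
end

section
/- For every positive integer q and every natural number n, there is a bijection between the set of noncrossing partitions of {1,…,2qn} all of whose blocks have exactly 2q elements, and the set of pairs (P1, P2) where P1 is a noncrossing partition of {1,…,qn} all of whose blocks have exactly q elements, P2 is a noncrossing partition of {1,…,qn}, and P1 refines P2. In particular these two sets have the same cardinality. -/
/-- `P` refines `Q` if every block of `P` is contained in a block of `Q`. -/
def Refines {s : Finset ℕ} (P Q : Finpartition s) : Prop :=
  ∀ B ∈ P.parts, ∃ C ∈ Q.parts, B ⊆ C

/-!
Write `m = q n`. A pair `(P, Q)` is sent to the partition of `{1, …, 2m}` in which the even point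
`2j` joins the block of `j` in `P` and the odd point `2i - 1` joins the block of the cyclic
predecessor of `i` within its `Q`-block. Above a single block of `Q` these labels run cyclically
monotonically, so the result is noncrossing, and since the cyclic predecessor permutes each block
of `Q`, every block of `P` is exactly doubled.

Conversely, in a noncrossing partition `π` with blocks of even size the gap between cyclically
consecutive elements of a block is a union of blocks, hence of even size, so the elements of each
block alternate in parity. `P` is recovered as the trace of `π` on the even points, and `Q` as the
equivalence generated by linking `i` to `j` when `2i - 1` and `2j` share a block; the parity
alternation shows that `2i - 1` lies in the block of twice the cyclic predecessor of `i` in its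
class, which makes the two constructions mutually inverse.
-/

open Finset Relation

namespace Finpartition

variable {α : Type*} [DecidableEq α] {s : Finset α}

def IsSaturated (P : Finpartition s) (T : Finset α) : Prop :=
  ∀ z ∈ T, P.part z ⊆ T

theorem dvd_card_of_isSaturated {P : Finpartition s} {T : Finset α} {d : ℕ} (hTs : T ⊆ s)
    (hT : P.IsSaturated T) (hd : ∀ B ∈ P.parts, d ∣ #B) : d ∣ #T := by
  rw [← (P.restrict hTs).sum_card_parts, P.sum_restrict hTs card card_empty]
  refine dvd_sum fun B hB => ?_
  rcases (B ⊓ T).eq_empty_or_nonempty with hBT | ⟨z, hz⟩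
  · rw [hBT, card_empty]
    exact dvd_zero d
  · obtain ⟨hzB, hzT⟩ := mem_inter.1 hz
    rw [inf_eq_left.2 ((P.part_eq_of_mem hB hzB).symm ▸ hT z hzT)]
    exact hd B hB

theorem ofSetSetoid_part_eq_part_iff {S : Setoid α} [DecidableRel S.r] {a b : α} (ha : a ∈ s)
    (hb : b ∈ s) : (ofSetSetoid S s).part a = (ofSetSetoid S s).part b ↔ S a b := by
  rw [← (ofSetSetoid S s).mem_part_iff_part_eq_part ha hb, mem_part_ofSetSetoid_iff_rel]
  exact ⟨fun h => S.symm h.2.2, fun h => ⟨hb, ha, S.symm h⟩⟩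

theorem ext_of_part_eq_part_iff {P Q : Finpartition s}
    (h : ∀ a ∈ s, ∀ b ∈ s, P.part a = P.part b ↔ Q.part a = Q.part b) : P = Q := by
  have hpart : ∀ a ∈ s, P.part a = Q.part a := fun a ha => by
    ext b
    by_cases hb : b ∈ s
    · rw [P.mem_part_iff_part_eq_part hb ha, Q.mem_part_iff_part_eq_part hb ha, h b hb a ha]
    · exact iff_of_false (fun h => hb (P.part_subset a h)) (fun h => hb (Q.part_subset a h))
  ext B
  constructor
  · intro hB
    obtain ⟨a, ha, rfl⟩ := P.part_surjOn hB
    exact hpart a ha ▸ Q.part_mem.2 ha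
  · intro hB
    obtain ⟨a, ha, rfl⟩ := Q.part_surjOn hB
    exact hpart a ha ▸ P.part_mem.2 ha

end Finpartition

theorem apply_eq_of_eqvGen {α β : Type*} {r : α → α → Prop} {f : α → β}
    (hf : ∀ a b, r a b → f a = f b) {a b : α} (h : EqvGen r a b) : f a = f b :=
  congrArg (Quot.lift f hf) (Quot.eqvGen_sound h)

section Partitions

variable {s : Finset ℕ}

theorem refines_of_part_eq_part {P Q : Finpartition s}
    (h : ∀ a ∈ s, ∀ b ∈ s, P.part a = P.part b → Q.part a = Q.part b) : Refines P Q := by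
  intro B hB
  obtain ⟨a, ha, rfl⟩ := P.part_surjOn hB
  refine ⟨Q.part a, Q.part_mem.2 ha, fun b hb => ?_⟩
  have hbs := P.part_subset a hb
  rw [Q.mem_part_iff_part_eq_part hbs ha]
  exact h b hbs a ha ((P.mem_part_iff_part_eq_part hbs ha).1 hb)

theorem Refines.part_eq_part {P Q : Finpartition s} (h : Refines P Q) {a b : ℕ} (ha : a ∈ s)
    (hb : b ∈ s) (hab : P.part a = P.part b) : Q.part a = Q.part b := by
  obtain ⟨C, hC, hPC⟩ := h (P.part b) (P.part_mem.2 hb)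
  rw [Q.part_eq_of_mem hC (hPC (hab ▸ P.mem_part ha)), Q.part_eq_of_mem hC (hPC (P.mem_part hb))]

theorem isNoncrossing_iff_part {P : Finpartition s} :
    IsNoncrossing P ↔ ∀ ⦃a b c d : ℕ⦄, a < b → b < c → c < d → a ∈ s → b ∈ s → c ∈ s → d ∈ s →
      P.part a = P.part c → P.part b = P.part d → P.part a = P.part b := by
  constructor
  · intro hP a b c d hab hbc hcd ha hb hc hd hac hbd
    exact hP a b c d hab hbc hcd _ (P.part_mem.2 ha) _ (P.part_mem.2 hb) (P.mem_part ha)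
      (hac ▸ P.mem_part hc) (P.mem_part hb) (hbd ▸ P.mem_part hd)
  · intro h a b c d hab hbc hcd B₁ hB₁ B₂ hB₂ ha hc hb hd
    rw [← P.part_eq_of_mem hB₁ ha, ← P.part_eq_of_mem hB₂ hb]
    exact h hab hbc hcd (P.le hB₁ ha) (P.le hB₂ hb) (P.le hB₁ hc) (P.le hB₂ hd)
      ((P.part_eq_of_mem hB₁ ha).trans (P.part_eq_of_mem hB₁ hc).symm)
      ((P.part_eq_of_mem hB₂ hb).trans (P.part_eq_of_mem hB₂ hd).symm)

theorem IsNoncrossing.part_eq_part_of_le {P : Finpartition s} (hP : IsNoncrossing P)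
    {a b c d : ℕ} (hab : a ≤ b) (hbc : b ≤ c) (hcd : c ≤ d) (ha : a ∈ s) (hb : b ∈ s)
    (hc : c ∈ s) (hd : d ∈ s) (hac : P.part a = P.part c) (hbd : P.part b = P.part d) :
    P.part a = P.part b := by
  rcases hab.eq_or_lt with rfl | hab
  · rfl
  rcases hbc.eq_or_lt with rfl | hbc
  · exact hac
  rcases hcd.eq_or_lt with rfl | hcd
  · exact hac.trans hbd.symm
  exact isNoncrossing_iff_part.1 hP hab hbc hcd ha hb hc hd hac hbd

theorem IsNoncrossing.part_subset_Ioo {P : Finpartition s} (hP : IsNoncrossing P) {x y z : ℕ}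
    (hxz : x < z) (hzy : z < y) (hx : x ∈ s) (hy : y ∈ s) (hxy : P.part x = P.part y)
    (hzx : P.part z ≠ P.part x) : P.part z ⊆ Ioo x y := by
  intro w hw
  have hz : z ∈ s := P.part_nonempty.1 ⟨w, hw⟩
  have hws : w ∈ s := P.part_subset z hw
  have hwz : P.part w = P.part z := (P.mem_part_iff_part_eq_part hws hz).1 hw
  have hcross := isNoncrossing_iff_part.1 hP
  rw [mem_Ioo]
  by_contra hout
  have hwx : w ≠ x := by rintro rfl; exact hzx hwz.symm
  have hwy : w ≠ y := by rintro rfl; exact hzx (hwz.symm.trans hxy.symm)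
  rcases lt_or_gt_of_ne hwx with hwx | hxw
  · exact hzx (hwz.symm.trans (hcross hwx hxz hzy hws hx hz hy hwz hxy))
  · exact hzx (hcross hxz hzy (by omega) hx hz hy hws hxy hwz.symm).symm

end Partitions

namespace Finset

def cyclicPred (C : Finset ℕ) (i : ℕ) : ℕ :=
  if ∃ c ∈ C, c < i then (C.filter (· < i)).sup id else C.sup id

variable {C : Finset ℕ} {i j : ℕ}

theorem cyclicPred_of_not_exists_lt (h : ¬∃ c ∈ C, c < i) : C.cyclicPred i = C.sup id :=
  if_neg h

theorem cyclicPred_le_sup : C.cyclicPred i ≤ C.sup id := by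
  unfold cyclicPred
  split_ifs
  · exact sup_mono (filter_subset _ C)
  · exact le_rfl

theorem le_cyclicPred {c : ℕ} (hc : c ∈ C) (hci : c < i) : c ≤ C.cyclicPred i := by
  rw [cyclicPred, if_pos ⟨c, hc, hci⟩]
  exact le_sup (f := id) (mem_filter.2 ⟨hc, hci⟩)

theorem cyclicPred_mem_and_lt (h : ∃ c ∈ C, c < i) : C.cyclicPred i ∈ C ∧ C.cyclicPred i < i := by
  obtain ⟨c, hc, hci⟩ := h
  obtain ⟨x, hx, hxsup⟩ := exists_mem_eq_sup (C.filter (· < i)) ⟨c, mem_filter.2 ⟨hc, hci⟩⟩ id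
  rw [cyclicPred, if_pos ⟨c, hc, hci⟩, hxsup]
  exact mem_filter.1 hx

theorem cyclicPred_lt (h : ∃ c ∈ C, c < i) : C.cyclicPred i < i :=
  (cyclicPred_mem_and_lt h).2

theorem cyclicPred_mem (hC : C.Nonempty) : C.cyclicPred i ∈ C := by
  by_cases h : ∃ c ∈ C, c < i
  · exact (cyclicPred_mem_and_lt h).1
  · obtain ⟨x, hx, hxsup⟩ := exists_mem_eq_sup C hC id
    rw [cyclicPred_of_not_exists_lt h, hxsup]
    exact hx

theorem cyclicPred_eq_of_lt (hj : j ∈ C) (hji : j < i) (hgap : ∀ c ∈ C, j < c → i ≤ c) :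
    C.cyclicPred i = j := by
  have hlt := cyclicPred_lt ⟨j, hj, hji⟩
  have hmem := cyclicPred_mem (i := i) ⟨j, hj⟩
  refine le_antisymm (not_lt.1 fun h => ?_) (le_cyclicPred hj hji)
  exact not_lt.2 (hgap _ hmem h) hlt

theorem cyclicPred_eq_of_forall_mem_Icc (hj : j ∈ C) (hC : ∀ c ∈ C, i ≤ c ∧ c ≤ j) :
    C.cyclicPred i = j := by
  rw [cyclicPred_of_not_exists_lt fun ⟨c, hc, hci⟩ => absurd (hC c hc).1 (not_le.2 hci)]
  exact le_antisymm (Finset.sup_le fun c hc => (hC c hc).2) (le_sup (f := id) hj)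

theorem cyclicPred_injOn : Set.InjOn C.cyclicPred C := by
  suffices ∀ ⦃i j⦄, i ∈ C → j ∈ C → i < j → C.cyclicPred i ≠ C.cyclicPred j from
    fun i hi j hj hij => by_contra fun hne =>
      (lt_or_gt_of_ne hne).elim (fun h => this hi hj h hij) (fun h => this hj hi h hij.symm)
  intro i j hi hj hij heq
  have hjlt := cyclicPred_lt ⟨i, hi, hij⟩
  by_cases h : ∃ c ∈ C, c < i
  · have := le_cyclicPred hi hij
    have := cyclicPred_lt h
    omega
  · have : j ≤ C.sup id := le_sup (f := id) hj
    rw [← cyclicPred_of_not_exists_lt h] at this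
    omega

theorem image_cyclicPred : C.image C.cyclicPred = C := by
  refine eq_of_subset_of_card_le (fun x hx => ?_) (card_image_of_injOn cyclicPred_injOn).ge
  obtain ⟨i, hi, rfl⟩ := mem_image.1 hx
  exact cyclicPred_mem ⟨i, hi⟩

theorem card_filter_cyclicPred_mem {B : Finset ℕ} (hB : B ⊆ C) :
    #(C.filter (C.cyclicPred · ∈ B)) = #B := by
  rw [← card_image_of_injOn (cyclicPred_injOn.mono (coe_subset.2 (filter_subset _ C)))]
  congr 1
  ext b
  simp only [mem_image, mem_filter]
  constructor
  · rintro ⟨i, ⟨-, hi⟩, rfl⟩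
    exact hi
  · intro hb
    have hbC : b ∈ C.image C.cyclicPred := by rw [image_cyclicPred]; exact hB hb
    obtain ⟨i, hi, hib⟩ := mem_image.1 hbC
    exact ⟨i, ⟨hi, hib ▸ hb⟩, hib⟩

theorem cyclicPred_mono (hij : i ≤ j) (h : ∃ c ∈ C, c < i) : C.cyclicPred i ≤ C.cyclicPred j :=
  le_cyclicPred (cyclicPred_mem_and_lt h).1 ((cyclicPred_lt h).trans_le hij)

theorem cyclicPred_cyclic_order {x₁ x₂ x₃ x₄ : ℕ} (h₁₂ : x₁ ≤ x₂) (h₂₃ : x₂ ≤ x₃)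
    (h₃₄ : x₃ ≤ x₄) (h₁ : C.cyclicPred x₁ ≠ C.cyclicPred x₂)
    (h₂ : C.cyclicPred x₂ ≠ C.cyclicPred x₃) (h₃ : C.cyclicPred x₃ ≠ C.cyclicPred x₄)
    (h₄ : C.cyclicPred x₄ ≠ C.cyclicPred x₁) :
    (C.cyclicPred x₁ < C.cyclicPred x₂ ∧ C.cyclicPred x₂ < C.cyclicPred x₃ ∧
        C.cyclicPred x₃ < C.cyclicPred x₄) ∨
      (C.cyclicPred x₂ < C.cyclicPred x₃ ∧ C.cyclicPred x₃ < C.cyclicPred x₄ ∧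
        C.cyclicPred x₄ < C.cyclicPred x₁) := by
  have hx₂ : ∃ c ∈ C, c < x₂ := by
    by_contra hx₂
    refine h₁ ?_
    rw [cyclicPred_of_not_exists_lt hx₂, cyclicPred_of_not_exists_lt fun ⟨c, hc, hcx⟩ =>
      hx₂ ⟨c, hc, hcx.trans_le h₁₂⟩]
  have hx₃ : ∃ c ∈ C, c < x₃ := hx₂.imp fun c ⟨hc, hcx⟩ => ⟨hc, hcx.trans_le h₂₃⟩
  have h₂₃' := lt_of_le_of_ne (cyclicPred_mono h₂₃ hx₂) h₂
  have h₃₄' := lt_of_le_of_ne (cyclicPred_mono h₃₄ hx₃) h₃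
  by_cases hx₁ : ∃ c ∈ C, c < x₁
  · exact Or.inl ⟨lt_of_le_of_ne (cyclicPred_mono h₁₂ hx₁) h₁, h₂₃', h₃₄'⟩
  · refine Or.inr ⟨h₂₃', h₃₄', lt_of_le_of_ne ?_ h₄⟩
    rw [cyclicPred_of_not_exists_lt hx₁]
    exact cyclicPred_le_sup

theorem exists_cyclicPred_interleave {C' : Finset ℕ} (hCC' : Disjoint C C') {a b c d : ℕ}
    (hab : a < b) (hbc : b < c) (hcd : c < d) (ha : a ∈ C) (hc : c ∈ C) (hb : b ∈ C')
    (hd : d ∈ C') : ∃ u ∈ C, ∃ u' ∈ C',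
      C.cyclicPred u < C'.cyclicPred u' ∧ C'.cyclicPred u' < u ∧ u < u' := by
  obtain ⟨u', hu'f, hu'min⟩ :=
    (C'.filter (c < ·)).exists_min_image id ⟨d, mem_filter.2 ⟨hd, hcd⟩⟩
  obtain ⟨hu', hcu'⟩ := mem_filter.1 hu'f
  have hv' := cyclicPred_mem (i := u') ⟨b, hb⟩
  have hbv' := le_cyclicPred hb (hbc.trans hcu')
  have hv'c : C'.cyclicPred u' < c := by
    refine lt_of_le_of_ne (not_lt.1 fun h => ?_) (fun h => disjoint_left.1 hCC' hc (h ▸ hv'))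
    exact absurd (hu'min _ (mem_filter.2 ⟨hv', h⟩)) (not_le.2 (cyclicPred_lt ⟨b, hb, by omega⟩))
  obtain ⟨u, huf, humin⟩ :=
    (C.filter (C'.cyclicPred u' < ·)).exists_min_image id ⟨c, mem_filter.2 ⟨hc, hv'c⟩⟩
  obtain ⟨hu, hv'u⟩ := mem_filter.1 huf
  have huc : u ≤ c := humin c (mem_filter.2 ⟨hc, hv'c⟩)
  have hv := cyclicPred_mem (i := u) ⟨a, ha⟩
  have hvu := cyclicPred_lt (i := u) ⟨a, ha, by omega⟩
  refine ⟨u, hu, u', hu', lt_of_le_of_ne (not_lt.1 fun h => ?_)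
    (fun h => disjoint_left.1 hCC' hv (h ▸ hv')), hv'u, by omega⟩
  exact absurd (humin _ (mem_filter.2 ⟨hv, h⟩)) (not_le.2 hvu)

theorem eqvGen_of_cyclicPred {r : ℕ → ℕ → Prop} (hr : ∀ i ∈ C, r i (C.cyclicPred i))
    (hi : i ∈ C) (hj : j ∈ C) : EqvGen r i j := by
  suffices h : ∀ i ∈ C, ∀ j ∈ C, j ≤ i → EqvGen r i j by
    rcases le_total j i with hji | hij
    · exact h i hi j hj hji
    · exact EqvGen.symm _ _ (h j hj i hi hij)
  intro i
  induction i using Nat.strong_induction_on with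
  | _ i ih =>
    intro hi j hj hji
    rcases hji.eq_or_lt with rfl | hji
    · exact EqvGen.refl j
    · exact EqvGen.trans _ _ _ (EqvGen.rel _ _ (hr i hi))
        (ih _ (cyclicPred_lt ⟨j, hj, hji⟩) (cyclicPred_mem ⟨j, hj⟩) j hj (le_cyclicPred hj hji))

end Finset

section Saturation

variable {s : Finset ℕ} {P : Finpartition s} {x : ℕ}

theorem IsNoncrossing.isSaturated_Ioo_cyclicPred (hP : IsNoncrossing P) (hx : x ∈ s) :
    P.IsSaturated (Ioo ((P.part x).cyclicPred x) x) := by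
  have hp := cyclicPred_mem (i := x) ⟨x, P.mem_part hx⟩
  have hpx := P.part_eq_of_mem (P.part_mem.2 hx) hp
  intro z hz
  rw [mem_Ioo] at hz
  refine hP.part_subset_Ioo hz.1 hz.2 (P.part_subset x hp) hx hpx fun hzp => ?_
  have hzs : z ∈ s := P.part_nonempty.1 (hzp ▸ P.part_nonempty.2 (P.part_subset x hp))
  have hz' : z ∈ P.part x := by
    rw [← hpx, ← hzp]
    exact P.mem_part hzs
  exact not_lt.2 (le_cyclicPred hz' hz.2) hz.1

theorem IsNoncrossing.isSaturated_Icc_cyclicPred (hP : IsNoncrossing P) (hx : x ∈ s)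
    (h : ∀ c ∈ P.part x, x ≤ c) : P.IsSaturated (Icc x ((P.part x).cyclicPred x)) := by
  have hp := cyclicPred_mem (i := x) ⟨x, P.mem_part hx⟩
  have hpx := P.part_eq_of_mem (P.part_mem.2 hx) hp
  have hsup := cyclicPred_of_not_exists_lt (C := P.part x) (i := x)
    fun ⟨c, hc, hcx⟩ => absurd (h c hc) (not_le.2 hcx)
  intro z hz
  by_cases hzx : P.part z = P.part x
  · rw [hzx, hsup]
    exact fun c hc => mem_Icc.2 ⟨h c hc, le_sup (f := id) hc⟩
  · have hxz : x ≠ z := by rintro rfl; exact hzx rfl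
    have hzp : z ≠ (P.part x).cyclicPred x := by rintro rfl; exact hzx hpx
    rw [mem_Icc] at hz
    exact (hP.part_subset_Ioo (by omega) (by omega) hx (P.part_subset x hp) hpx.symm hzx).trans
      Ioo_subset_Icc_self

end Saturation

section EvenBlocks

variable {N : ℕ} {π : Finpartition (Icc 1 N)}

/-- The gap between cyclically consecutive elements of a block is a union of blocks, hence of
even size. -/
theorem IsNoncrossing.odd_add_cyclicPred (hπ : IsNoncrossing π)
    (heven : ∀ B ∈ π.parts, Even #B) {x : ℕ} (hx : x ∈ Icc 1 N) :
    Odd (x + (π.part x).cyclicPred x) := by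
  have hevenSat : ∀ T ⊆ Icc 1 N, π.IsSaturated T → Even #T := fun T hT hsat =>
    even_iff_two_dvd.2 <| π.dvd_card_of_isSaturated hT hsat fun B hB =>
      even_iff_two_dvd.1 (heven B hB)
  have hp := π.part_subset x (cyclicPred_mem (i := x) ⟨x, π.mem_part hx⟩)
  rw [mem_Icc] at hx hp
  by_cases h : ∃ c ∈ π.part x, c < x
  · have hlt := cyclicPred_lt h
    obtain ⟨k, hk⟩ := hevenSat _ (fun z hz => by rw [mem_Ioo] at hz; rw [mem_Icc]; omega)
      (hπ.isSaturated_Ioo_cyclicPred (mem_Icc.2 hx))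
    rw [Nat.card_Ioo] at hk
    exact ⟨(π.part x).cyclicPred x + k, by omega⟩
  · simp only [not_exists, not_and, not_lt] at h
    have hle := h _ (cyclicPred_mem (i := x) ⟨x, π.mem_part (mem_Icc.2 hx)⟩)
    obtain ⟨k, hk⟩ := hevenSat _ (fun z hz => by rw [mem_Icc] at hz ⊢; omega)
      (hπ.isSaturated_Icc_cyclicPred (mem_Icc.2 hx) h)
    rw [Nat.card_Icc] at hk
    exact ⟨x + k - 1, by omega⟩

theorem IsNoncrossing.two_mul_card_filter_even (hπ : IsNoncrossing π)
    (heven : ∀ B ∈ π.parts, Even #B) {F : Finset ℕ} (hF : F ∈ π.parts) :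
    2 * #(F.filter Even) = #F := by
  have hodd : ∀ x ∈ F, F.cyclicPred x ∈ F ∧ (Even (F.cyclicPred x) ↔ ¬Even x) := by
    intro x hx
    have h := hπ.odd_add_cyclicPred heven (π.le hF hx)
    rw [π.part_eq_of_mem hF hx, Nat.odd_iff] at h
    refine ⟨cyclicPred_mem ⟨x, hx⟩, ?_⟩
    rw [Nat.even_iff, Nat.even_iff]
    omega
  have hle : #(F.filter Even) ≤ #(F.filter (¬Even ·)) :=
    card_le_card_of_injOn F.cyclicPred (fun x hx => by
      obtain ⟨hx, hxe⟩ := mem_filter.1 hx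
      exact mem_filter.2 ⟨(hodd x hx).1, fun h => (hodd x hx).2.1 h hxe⟩)
      (cyclicPred_injOn.mono fun x hx => (mem_filter.1 hx).1)
  have hge : #(F.filter (¬Even ·)) ≤ #(F.filter Even) :=
    card_le_card_of_injOn F.cyclicPred (fun x hx => by
      obtain ⟨hx, hxe⟩ := mem_filter.1 hx
      exact mem_filter.2 ⟨(hodd x hx).1, (hodd x hx).2.2 hxe⟩)
      (cyclicPred_injOn.mono fun x hx => (mem_filter.1 hx).1)
  have := card_filter_add_card_filter_not (s := F) Even
  omega

end EvenBlocks

namespace NoncrossingDoubling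

variable {m : ℕ}

theorem two_mul_mem_Icc {j : ℕ} (hj : j ∈ Icc 1 m) : 2 * j ∈ Icc 1 (2 * m) := by
  rw [mem_Icc] at hj ⊢
  omega

theorem two_mul_sub_one_mem_Icc {i : ℕ} (hi : i ∈ Icc 1 m) : 2 * i - 1 ∈ Icc 1 (2 * m) := by
  rw [mem_Icc] at hi ⊢
  omega

theorem add_one_div_two_mem_Icc {p : ℕ} (hp : p ∈ Icc 1 (2 * m)) : (p + 1) / 2 ∈ Icc 1 m := by
  rw [mem_Icc] at hp ⊢
  omega

section Halving

variable (π : Finpartition (Icc 1 (2 * m)))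

def linked (i j : ℕ) : Prop :=
  2 * i - 1 ∈ π.part (2 * j)

open scoped Classical in
noncomputable def evenPart : Finpartition (Icc 1 m) :=
  Finpartition.ofSetSetoid (Setoid.ker fun j => π.part (2 * j)) (Icc 1 m)

open scoped Classical in
noncomputable def linkPart : Finpartition (Icc 1 m) :=
  Finpartition.ofSetSetoid (EqvGen.setoid (linked π)) (Icc 1 m)

variable {π} {i j k : ℕ}

theorem evenPart_part_eq_iff (hi : i ∈ Icc 1 m) (hj : j ∈ Icc 1 m) :
    (evenPart π).part i = (evenPart π).part j ↔ π.part (2 * i) = π.part (2 * j) := by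
  classical exact Finpartition.ofSetSetoid_part_eq_part_iff hi hj

theorem linkPart_part_eq_iff (hi : i ∈ Icc 1 m) (hj : j ∈ Icc 1 m) :
    (linkPart π).part i = (linkPart π).part j ↔ EqvGen (linked π) i j := by
  classical exact Finpartition.ofSetSetoid_part_eq_part_iff hi hj

theorem mem_linkPart_part :
    k ∈ (linkPart π).part i ↔ i ∈ Icc 1 m ∧ k ∈ Icc 1 m ∧ EqvGen (linked π) i k := by
  classical exact Finpartition.mem_part_ofSetSetoid_iff_rel _

theorem mem_evenPart_part (hj : j ∈ Icc 1 m) :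
    k ∈ (evenPart π).part j ↔ 2 * k ∈ π.part (2 * j) := by
  classical
  refine (Finpartition.mem_part_ofSetSetoid_iff_rel _).trans ⟨fun ⟨_, hk, hjk⟩ => ?_, fun h => ?_⟩
  · exact (Setoid.ker_def.1 hjk).symm ▸ π.mem_part (two_mul_mem_Icc hk)
  · have hk : k ∈ Icc 1 m := by
      have := π.part_subset _ h
      rw [mem_Icc] at this ⊢
      omega
    exact ⟨hj, hk,
      ((π.mem_part_iff_part_eq_part (two_mul_mem_Icc hk) (two_mul_mem_Icc hj)).1 h).symm⟩

theorem two_mul_mem_iff_of_eqvGen_linked {T : Finset ℕ} (hT : π.IsSaturated T)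
    (hpair : ∀ t, 1 ≤ t → (2 * t - 1 ∈ T ↔ 2 * t ∈ T)) (h : EqvGen (linked π) i j) :
    2 * i ∈ T ↔ 2 * j ∈ T := by
  refine (apply_eq_of_eqvGen (f := fun k => 2 * k ∈ T) (fun a b hab => propext ?_) h).to_iff
  have hb : 2 * b ∈ Icc 1 (2 * m) := π.part_nonempty.1 ⟨_, hab⟩
  have ha : 2 * a - 1 ∈ Icc 1 (2 * m) := π.part_subset _ hab
  have ha1 : 1 ≤ a := by rw [mem_Icc] at ha; omega
  have hpart : π.part (2 * a - 1) = π.part (2 * b) := (π.mem_part_iff_part_eq_part ha hb).1 hab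
  rw [← hpair a ha1]
  exact ⟨fun h => hT _ h (hpart ▸ π.mem_part hb), fun h => hT _ h hab⟩

/-- The cyclic predecessor of `2i - 1` in its block is an even point `2j`, and the points
cyclically between them form a union of blocks made of whole pairs `{2t - 1, 2t}`, which the
linked class of `i` cannot enter. -/
theorem cyclicPred_linkPart_part (hπ : IsNoncrossing π) (hi : i ∈ Icc 1 m)
    (hpj : (π.part (2 * i - 1)).cyclicPred (2 * i - 1) = 2 * j) :
    ((linkPart π).part i).cyclicPred i = j := by
  have hi' := two_mul_sub_one_mem_Icc hi
  have hp := cyclicPred_mem (i := 2 * i - 1) ⟨_, π.mem_part hi'⟩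
  rw [hpj] at hp
  have hj : j ∈ Icc 1 m := by
    have := π.part_subset _ hp
    rw [mem_Icc] at this ⊢
    omega
  have hjD : j ∈ (linkPart π).part i := by
    refine mem_linkPart_part.2 ⟨hi, hj, EqvGen.rel _ _ ?_⟩
    rw [linked, π.part_eq_of_mem (π.part_mem.2 hi') hp]
    exact π.mem_part hi'
  have hD : ∀ k ∈ (linkPart π).part i, EqvGen (linked π) i k := fun k hk =>
    (mem_linkPart_part.1 hk).2.2
  rw [mem_Icc] at hi
  by_cases h : ∃ c ∈ π.part (2 * i - 1), c < 2 * i - 1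
  · have hlt := cyclicPred_lt h
    have hsat := hπ.isSaturated_Ioo_cyclicPred hi'
    rw [hpj] at hlt hsat
    refine cyclicPred_eq_of_lt hjD (by omega) fun k hk hjk => not_lt.1 fun hki => ?_
    have := two_mul_mem_iff_of_eqvGen_linked hsat
      (fun t ht => by simp only [mem_Ioo]; omega) (hD k hk)
    simp only [mem_Ioo] at this
    omega
  · simp only [not_exists, not_and, not_lt] at h
    have hle := h _ hp
    have hsat := hπ.isSaturated_Icc_cyclicPred hi' h
    rw [hpj] at hsat
    refine cyclicPred_eq_of_forall_mem_Icc hjD fun k hk => ?_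
    have := two_mul_mem_iff_of_eqvGen_linked hsat
      (fun t ht => by simp only [mem_Icc]; omega) (hD k hk)
    simp only [mem_Icc] at this
    omega

theorem part_two_mul_cyclicPred_linkPart (hπ : IsNoncrossing π)
    (heven : ∀ B ∈ π.parts, Even #B) (hi : i ∈ Icc 1 m) :
    π.part (2 * ((linkPart π).part i).cyclicPred i) = π.part (2 * i - 1) := by
  have hi' := two_mul_sub_one_mem_Icc hi
  have hodd := hπ.odd_add_cyclicPred heven hi'
  obtain ⟨j, hpj⟩ : ∃ j, (π.part (2 * i - 1)).cyclicPred (2 * i - 1) = 2 * j := by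
    have hi1 := (mem_Icc.1 hi).1
    rw [Nat.odd_iff] at hodd
    exact ⟨(π.part (2 * i - 1)).cyclicPred (2 * i - 1) / 2, by omega⟩
  rw [cyclicPred_linkPart_part hπ hi hpj, ← hpj]
  exact π.part_eq_of_mem (π.part_mem.2 hi') (cyclicPred_mem ⟨_, π.mem_part hi'⟩)

theorem two_mul_card_evenPart_part (hπ : IsNoncrossing π)
    (heven : ∀ B ∈ π.parts, Even #B) (hj : j ∈ Icc 1 m) :
    2 * #((evenPart π).part j) = #(π.part (2 * j)) := by
  rw [← hπ.two_mul_card_filter_even heven (π.part_mem.2 (two_mul_mem_Icc hj))]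
  congr 1
  refine card_nbij' (2 * ·) (· / 2) (fun k hk => ?_) (fun x hx => ?_) (fun k _ => by simp)
    (fun x hx => ?_)
  · exact mem_filter.2 ⟨(mem_evenPart_part hj).1 hk, even_two_mul k⟩
  · obtain ⟨hx, hxe⟩ := mem_filter.1 hx
    rw [mem_coe, mem_evenPart_part hj, Nat.two_mul_div_two_of_even hxe]
    exact hx
  · exact Nat.two_mul_div_two_of_even (mem_filter.1 hx).2

theorem isNoncrossing_evenPart (hπ : IsNoncrossing π) : IsNoncrossing (evenPart π) := by
  refine isNoncrossing_iff_part.2 fun a b c d hab hbc hcd ha hb hc hd hac hbd => ?_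
  rw [evenPart_part_eq_iff ha hc] at hac
  rw [evenPart_part_eq_iff hb hd] at hbd
  rw [evenPart_part_eq_iff ha hb]
  exact isNoncrossing_iff_part.1 hπ (by omega) (by omega) (by omega) (two_mul_mem_Icc ha)
    (two_mul_mem_Icc hb) (two_mul_mem_Icc hc) (two_mul_mem_Icc hd) hac hbd

theorem refines_evenPart_linkPart (hπ : IsNoncrossing π)
    (heven : ∀ B ∈ π.parts, Even #B) : Refines (evenPart π) (linkPart π) := by
  refine refines_of_part_eq_part fun i hi j hj hij => ?_
  rw [evenPart_part_eq_iff hi hj] at hij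
  rw [linkPart_part_eq_iff hi hj]
  have hi' := two_mul_mem_Icc hi
  have hodd := hπ.odd_add_cyclicPred heven hi'
  have ho := cyclicPred_mem (i := 2 * i) ⟨_, π.mem_part hi'⟩
  obtain ⟨k, hk⟩ : ∃ k, (π.part (2 * i)).cyclicPred (2 * i) = 2 * k - 1 := by
    rw [Nat.odd_iff] at hodd
    exact ⟨((π.part (2 * i)).cyclicPred (2 * i) + 1) / 2, by omega⟩
  rw [hk] at ho
  have ho' : linked π k j := by rw [linked, ← hij]; exact ho
  exact EqvGen.trans _ _ _ (EqvGen.symm _ _ (EqvGen.rel _ _ ho)) (EqvGen.rel _ _ ho')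

/-- Interleaved consecutive pairs `(v, u)` and `(v', u')` of two classes give the crossing
`2v < 2v' < 2u - 1 < 2u' - 1` of `π`, which links `u` to `u'`. -/
theorem isNoncrossing_linkPart (hπ : IsNoncrossing π) (heven : ∀ B ∈ π.parts, Even #B) :
    IsNoncrossing (linkPart π) := by
  set D := linkPart π
  refine isNoncrossing_iff_part.2 fun a b c d hab hbc hcd ha hb hc hd hac hbd =>
    by_contra fun hne => ?_
  have hdisj : Disjoint (D.part a) (D.part b) := D.disjoint (D.part_mem.2 ha) (D.part_mem.2 hb) hne
  have hc' : c ∈ D.part a := by rw [hac]; exact D.mem_part hc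
  have hd' : d ∈ D.part b := by rw [hbd]; exact D.mem_part hd
  obtain ⟨u, hu, u', hu', hvv', hv'u, huu'⟩ :=
    exists_cyclicPred_interleave hdisj hab hbc hcd (D.mem_part ha) hc' (D.mem_part hb) hd'
  have hum := D.part_subset a hu
  have hu'm := D.part_subset b hu'
  have hv := D.part_subset a (cyclicPred_mem (i := u) ⟨u, hu⟩)
  have hv' := D.part_subset b (cyclicPred_mem (i := u') ⟨u', hu'⟩)
  have hua := D.part_eq_of_mem (D.part_mem.2 ha) hu
  have hu'b := D.part_eq_of_mem (D.part_mem.2 hb) hu'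
  rw [← hua] at hvv' hv
  rw [← hu'b] at hvv' hv'u hv'
  have key := part_two_mul_cyclicPred_linkPart hπ heven hum
  have key' := part_two_mul_cyclicPred_linkPart hπ heven hu'm
  rw [mem_Icc] at hum hu'm
  have hcross := isNoncrossing_iff_part.1 hπ (by omega) (by omega) (by omega)
    (two_mul_mem_Icc hv) (two_mul_mem_Icc hv') (two_mul_sub_one_mem_Icc (mem_Icc.2 hum))
    (two_mul_sub_one_mem_Icc (mem_Icc.2 hu'm)) key key'
  have hlink : linked π u ((D.part u').cyclicPred u') := by
    rw [linked, ← hcross, key]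
    exact π.mem_part (two_mul_sub_one_mem_Icc (mem_Icc.2 hum))
  have hlink' : linked π u' ((D.part u').cyclicPred u') := by
    rw [linked, key']
    exact π.mem_part (two_mul_sub_one_mem_Icc (mem_Icc.2 hu'm))
  refine hne (hua.symm.trans (hu'b ▸ ?_))
  exact (linkPart_part_eq_iff (mem_Icc.2 hum) (mem_Icc.2 hu'm)).2
    (EqvGen.trans _ _ _ (EqvGen.rel _ _ hlink) (EqvGen.symm _ _ (EqvGen.rel _ _ hlink')))

end Halving

section Doubling

variable (P Q : Finpartition (Icc 1 m))

/-- The point `p` of `Icc 1 (2 * m)` belongs to the pair `⌈p / 2⌉`; the even point `2 * j` is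
labelled `j`, the odd point `2 * i - 1` by the cyclic predecessor of `i` in its `Q`-block. -/
def label (p : ℕ) : ℕ :=
  (Q.part ((p + 1) / 2)).cyclicPred (p / 2 + 1)

open scoped Classical in
noncomputable def doubling : Finpartition (Icc 1 (2 * m)) :=
  Finpartition.ofSetSetoid (Setoid.ker fun p => P.part (label Q p)) (Icc 1 (2 * m))

variable {P Q} {i j p p' : ℕ}

theorem label_two_mul (hj : j ∈ Icc 1 m) : label Q (2 * j) = j := by
  rw [label, show (2 * j + 1) / 2 = j by omega, show 2 * j / 2 + 1 = j + 1 by omega]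
  exact cyclicPred_eq_of_lt (Q.mem_part hj) (Nat.lt_succ_self j) fun _ _ hc => hc

theorem label_two_mul_sub_one (hi : 1 ≤ i) : label Q (2 * i - 1) = (Q.part i).cyclicPred i := by
  rw [label, show (2 * i - 1 + 1) / 2 = i by omega, show (2 * i - 1) / 2 + 1 = i by omega]

theorem label_mem_part (hp : p ∈ Icc 1 (2 * m)) : label Q p ∈ Q.part ((p + 1) / 2) :=
  cyclicPred_mem ⟨_, Q.mem_part (add_one_div_two_mem_Icc hp)⟩

theorem label_mem_Icc (hp : p ∈ Icc 1 (2 * m)) : label Q p ∈ Icc 1 m :=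
  Q.part_subset _ (label_mem_part hp)

theorem doubling_part_eq_iff (hp : p ∈ Icc 1 (2 * m)) (hp' : p' ∈ Icc 1 (2 * m)) :
    (doubling P Q).part p = (doubling P Q).part p' ↔ P.part (label Q p) = P.part (label Q p') := by
  classical exact Finpartition.ofSetSetoid_part_eq_part_iff hp hp'

theorem mem_doubling_part (hp : p ∈ Icc 1 (2 * m)) :
    p' ∈ (doubling P Q).part p ↔ p' ∈ Icc 1 (2 * m) ∧ label Q p' ∈ P.part (label Q p) := by
  by_cases hp' : p' ∈ Icc 1 (2 * m)
  · rw [(doubling P Q).mem_part_iff_part_eq_part hp' hp, doubling_part_eq_iff hp' hp,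
      P.mem_part_iff_part_eq_part (label_mem_Icc hp') (label_mem_Icc hp)]
    exact (and_iff_right hp').symm
  · exact iff_of_false (fun h => hp' ((doubling P Q).part_subset p h)) (fun h => hp' h.1)

theorem card_filter_label_mem_even {B : Finset ℕ} (hB : B ∈ P.parts) :
    #(((Icc 1 (2 * m)).filter (label Q · ∈ B)).filter Even) = #B := by
  refine card_nbij' (· / 2) (2 * ·) (fun p hp => ?_) (fun j hj => ?_) (fun p hp => ?_)
    (fun j _ => by simp)
  · rw [mem_coe, mem_filter, mem_filter] at hp
    obtain ⟨⟨hp, hpB⟩, k, rfl⟩ := hp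
    have hk : k ∈ Icc 1 m := by rw [mem_Icc] at hp ⊢; omega
    rw [← two_mul, label_two_mul hk] at hpB
    dsimp only
    rwa [mem_coe, show (k + k) / 2 = k by omega]
  · have hj' := P.le hB hj
    rw [mem_coe, mem_filter, mem_filter, label_two_mul hj']
    exact ⟨⟨two_mul_mem_Icc hj', hj⟩, even_two_mul j⟩
  · rw [mem_coe, mem_filter] at hp
    obtain ⟨-, k, rfl⟩ := hp
    dsimp only
    omega

theorem card_filter_label_mem_odd (href : Refines P Q) {B : Finset ℕ} (hB : B ∈ P.parts) :
    #(((Icc 1 (2 * m)).filter (label Q · ∈ B)).filter (¬Even ·)) = #B := by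
  obtain ⟨C, hC, hBC⟩ := href B hB
  rw [← card_filter_cyclicPred_mem hBC]
  refine card_nbij' (fun p => (p + 1) / 2) (2 * · - 1) (fun p hp => ?_) (fun i hi => ?_)
    (fun p hp => ?_) (fun i hi => ?_)
  · rw [mem_coe, mem_filter, mem_filter, Nat.not_even_iff_odd] at hp
    obtain ⟨⟨hp, hpB⟩, k, rfl⟩ := hp
    have hk : k + 1 ∈ Icc 1 m := by rw [mem_Icc] at hp ⊢; omega
    rw [show 2 * k + 1 = 2 * (k + 1) - 1 by omega, label_two_mul_sub_one (by omega)] at hpB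
    have hQ : Q.part (k + 1) = C := Q.eq_of_mem_parts (Q.part_mem.2 hk) hC
      (cyclicPred_mem ⟨k + 1, Q.mem_part hk⟩) (hBC hpB)
    dsimp only
    rw [mem_coe, mem_filter, show (2 * k + 1 + 1) / 2 = k + 1 by omega, ← hQ]
    exact ⟨Q.mem_part hk, hpB⟩
  · rw [mem_coe, mem_filter] at hi
    obtain ⟨hi, hiB⟩ := hi
    have him := Q.le hC hi
    dsimp only
    rw [mem_coe, mem_filter, mem_filter, label_two_mul_sub_one (mem_Icc.1 him).1,
      Q.part_eq_of_mem hC hi, Nat.not_even_iff_odd]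
    exact ⟨⟨two_mul_sub_one_mem_Icc him, hiB⟩, ⟨i - 1, by rw [mem_Icc] at him; omega⟩⟩
  · rw [mem_coe, mem_filter, Nat.not_even_iff_odd] at hp
    obtain ⟨-, k, rfl⟩ := hp
    dsimp only
    omega
  · rw [mem_coe, mem_filter] at hi
    have := (mem_Icc.1 (Q.le hC hi.1)).1
    dsimp only
    omega

theorem card_doubling_part (href : Refines P Q) (hp : p ∈ Icc 1 (2 * m)) :
    #((doubling P Q).part p) = 2 * #(P.part (label Q p)) := by
  have hB := P.part_mem.2 (label_mem_Icc (Q := Q) hp)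
  have hpart : (doubling P Q).part p = (Icc 1 (2 * m)).filter (label Q · ∈ P.part (label Q p)) := by
    ext p'
    rw [mem_doubling_part hp, mem_filter]
  rw [hpart, ← card_filter_add_card_filter_not Even, card_filter_label_mem_even hB,
    card_filter_label_mem_odd href hB, two_mul]

theorem part_label (hp : p ∈ Icc 1 (2 * m)) : Q.part (label Q p) = Q.part ((p + 1) / 2) :=
  Q.part_eq_of_mem (Q.part_mem.2 (add_one_div_two_mem_Icc hp)) (label_mem_part hp)

/-- A crossing of the doubled partition projects to a crossing of `Q` unless all four points lie
above one block of `Q`, where the labels are cyclic predecessors along a weakly increasing sequence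
and so form a crossing of `P`. -/
theorem isNoncrossing_doubling (hP : IsNoncrossing P) (hQ : IsNoncrossing Q) (href : Refines P Q) :
    IsNoncrossing (doubling P Q) := by
  refine isNoncrossing_iff_part.2 fun a b c d hab hbc hcd ha hb hc hd hac hbd =>
    by_contra fun hne => ?_
  rw [doubling_part_eq_iff ha hc] at hac
  rw [doubling_part_eq_iff hb hd] at hbd
  rw [doubling_part_eq_iff ha hb] at hne
  have hQac := href.part_eq_part (label_mem_Icc ha) (label_mem_Icc hc) hac
  have hQbd := href.part_eq_part (label_mem_Icc hb) (label_mem_Icc hd) hbd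
  rw [part_label ha, part_label hc] at hQac
  rw [part_label hb, part_label hd] at hQbd
  have hya := label_mem_Icc (Q := Q) ha
  have hyb := label_mem_Icc (Q := Q) hb
  have hyc := label_mem_Icc (Q := Q) hc
  have hyd := label_mem_Icc (Q := Q) hd
  have hPnc := isNoncrossing_iff_part.1 hP
  have hab' := hQ.part_eq_part_of_le (by omega) (by omega) (by omega) (add_one_div_two_mem_Icc ha)
    (add_one_div_two_mem_Icc hb) (add_one_div_two_mem_Icc hc) (add_one_div_two_mem_Icc hd)
    hQac hQbd
  have hlabel : ∀ x, Q.part ((x + 1) / 2) = Q.part ((a + 1) / 2) →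
      label Q x = (Q.part ((a + 1) / 2)).cyclicPred (x / 2 + 1) := fun x hx => by rw [label, hx]
  have horder := cyclicPred_cyclic_order (C := Q.part ((a + 1) / 2)) (x₁ := a / 2 + 1)
    (x₂ := b / 2 + 1) (x₃ := c / 2 + 1) (x₄ := d / 2 + 1) (by omega) (by omega) (by omega)
  rw [← hlabel a rfl, ← hlabel b hab'.symm, ← hlabel c hQac.symm,
    ← hlabel d (hQbd.symm.trans hab'.symm)] at horder
  rcases horder (fun h => hne (congrArg P.part h))
    (fun h => hne (hac.trans (congrArg P.part h).symm))
    (fun h => hne (hac.trans ((congrArg P.part h).trans hbd.symm)))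
    (fun h => hne ((congrArg P.part h).symm.trans hbd.symm)) with ⟨h₁, h₂, h₃⟩ | ⟨h₁, h₂, h₃⟩
  · exact hne (hPnc h₁ h₂ h₃ hya hyb hyc hyd hac hbd)
  · exact hne (hac.trans (hPnc h₁ h₂ h₃ hyb hyc hyd hya hbd hac.symm).symm)

theorem evenPart_doubling : evenPart (doubling P Q) = P :=
  Finpartition.ext_of_part_eq_part_iff fun i hi j hj => by
    rw [evenPart_part_eq_iff hi hj, doubling_part_eq_iff (two_mul_mem_Icc hi) (two_mul_mem_Icc hj),
      label_two_mul hi, label_two_mul hj]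

theorem eqvGen_linked_doubling_iff (href : Refines P Q) (hi : i ∈ Icc 1 m) (hj : j ∈ Icc 1 m) :
    EqvGen (linked (doubling P Q)) i j ↔ Q.part i = Q.part j := by
  constructor
  · refine apply_eq_of_eqvGen fun a b hab => ?_
    have hb2 : 2 * b ∈ Icc 1 (2 * m) := (doubling P Q).part_nonempty.1 ⟨_, hab⟩
    have hb : b ∈ Icc 1 m := by rw [mem_Icc] at hb2 ⊢; omega
    obtain ⟨ha2, hlab⟩ := (mem_doubling_part hb2).1 hab
    have ha : a ∈ Icc 1 m := by rw [mem_Icc] at ha2 ⊢; omega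
    rw [label_two_mul hb, label_two_mul_sub_one (mem_Icc.1 ha).1] at hlab
    have hv := cyclicPred_mem (i := a) ⟨a, Q.mem_part ha⟩
    rw [← Q.part_eq_of_mem (Q.part_mem.2 ha) hv]
    exact href.part_eq_part (Q.part_subset a hv) hb
      ((P.mem_part_iff_part_eq_part (Q.part_subset a hv) hb).1 hlab)
  · intro hij
    refine eqvGen_of_cyclicPred (fun k hk => ?_) (Q.mem_part hi) (hij ▸ Q.mem_part hj)
    have hkm := Q.part_subset i hk
    rw [← Q.part_eq_of_mem (Q.part_mem.2 hi) hk]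
    have hv := Q.part_subset k (cyclicPred_mem (i := k) ⟨k, Q.mem_part hkm⟩)
    rw [linked, mem_doubling_part (two_mul_mem_Icc hv), label_two_mul hv,
      label_two_mul_sub_one (mem_Icc.1 hkm).1]
    exact ⟨two_mul_sub_one_mem_Icc hkm, P.mem_part hv⟩

theorem linkPart_doubling (href : Refines P Q) : linkPart (doubling P Q) = Q :=
  Finpartition.ext_of_part_eq_part_iff fun i hi j hj => by
    rw [linkPart_part_eq_iff hi hj, eqvGen_linked_doubling_iff href hi hj]

theorem part_two_mul_label_linkPart {π : Finpartition (Icc 1 (2 * m))} (hπ : IsNoncrossing π)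
    (heven : ∀ B ∈ π.parts, Even #B) (hp : p ∈ Icc 1 (2 * m)) :
    π.part (2 * label (linkPart π) p) = π.part p := by
  rw [mem_Icc] at hp
  obtain ⟨k, rfl | rfl⟩ := Nat.even_or_odd' p
  · rw [label_two_mul (by rw [mem_Icc]; omega)]
  · rw [show 2 * k + 1 = 2 * (k + 1) - 1 by omega, label_two_mul_sub_one (by omega)]
    exact part_two_mul_cyclicPred_linkPart hπ heven (by rw [mem_Icc]; omega)

theorem doubling_evenPart_linkPart {π : Finpartition (Icc 1 (2 * m))} (hπ : IsNoncrossing π)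
    (heven : ∀ B ∈ π.parts, Even #B) : doubling (evenPart π) (linkPart π) = π :=
  Finpartition.ext_of_part_eq_part_iff fun p hp p' hp' => by
    rw [doubling_part_eq_iff hp hp', evenPart_part_eq_iff (label_mem_Icc hp) (label_mem_Icc hp'),
      part_two_mul_label_linkPart hπ heven hp, part_two_mul_label_linkPart hπ heven hp']

end Doubling

end NoncrossingDoubling

open NoncrossingDoubling in
theorem bijection_2q_partitions_double_partitions_general (q : ℕ) (n : ℕ) :
    Nonempty
      ({P : Finpartition (Finset.Icc 1 (2 * q * n)) //
          IsNoncrossing P ∧ ∀ B ∈ P.parts, B.card = 2 * q} ≃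
        {PP : Finpartition (Finset.Icc 1 (q * n)) × Finpartition (Finset.Icc 1 (q * n)) //
          IsNoncrossing PP.1 ∧ (∀ B ∈ PP.1.parts, B.card = q) ∧
          IsNoncrossing PP.2 ∧ Refines PP.1 PP.2}) := by
  rw [mul_assoc]
  have heven {π : Finpartition (Icc 1 (2 * (q * n)))} (hcard : ∀ B ∈ π.parts, #B = 2 * q) :
      ∀ B ∈ π.parts, Even #B := fun B hB => hcard B hB ▸ even_two_mul q
  refine ⟨{
    toFun := fun π => ⟨(evenPart π.1, linkPart π.1), isNoncrossing_evenPart π.2.1,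
      fun B hB => ?_, isNoncrossing_linkPart π.2.1 (heven π.2.2),
      refines_evenPart_linkPart π.2.1 (heven π.2.2)⟩
    invFun := fun PP => ⟨doubling PP.1.1 PP.1.2,
      isNoncrossing_doubling PP.2.1 PP.2.2.2.1 PP.2.2.2.2, fun F hF => ?_⟩
    left_inv := fun π => Subtype.ext (doubling_evenPart_linkPart π.2.1 (heven π.2.2))
    right_inv := fun PP => Subtype.ext
      (Prod.ext evenPart_doubling (linkPart_doubling PP.2.2.2.2)) }⟩
  · obtain ⟨j, hj, rfl⟩ := (evenPart π.1).part_surjOn hB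
    have := two_mul_card_evenPart_part π.2.1 (heven π.2.2) hj
    rw [π.2.2 _ (π.1.part_mem.2 (two_mul_mem_Icc hj))] at this
    omega
  · obtain ⟨p, hp, rfl⟩ := (doubling PP.1.1 PP.1.2).part_surjOn hF
    rw [card_doubling_part PP.2.2.2.2 hp, PP.2.2.1 _ (PP.1.1.part_mem.2 (label_mem_Icc hp))]

/-- For every positive `q` and every `n`, there is a bijection between noncrossing
partitions of `{1,…,2qn}` with all blocks of exactly `2q` elements, and pairs `(P₁, P₂)`
where `P₁` is a noncrossing partition of `{1,…,qn}` with all blocks of exactly `q` elements,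
`P₂` is a noncrossing partition of `{1,…,qn}`, and `P₁` refines `P₂`. -/
theorem bijection_2q_partitions_double_partitions (q : ℕ) (hq : 0 < q) (n : ℕ) :
    Nonempty
      ({P : Finpartition (Finset.Icc 1 (2 * q * n)) //
          IsNoncrossing P ∧ ∀ B ∈ P.parts, B.card = 2 * q} ≃
        {PP : Finpartition (Finset.Icc 1 (q * n)) × Finpartition (Finset.Icc 1 (q * n)) //
          IsNoncrossing PP.1 ∧ (∀ B ∈ PP.1.parts, B.card = q) ∧
          IsNoncrossing PP.2 ∧ Refines PP.1 PP.2}) :=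
  bijection_2q_partitions_double_partitions_general q n
end

section
/- For every integer p ≥ 2 and every natural number n, there is a bijection between the set of noncrossing partitions of {1,…,pn} all of whose blocks have exactly p elements, and the set of ordered rooted trees with n internal nodes in which every node has either 0 or exactly p children (full p-ary plane trees). -/
/-- A full `p`-ary plane tree: every node has either `0` or exactly `p` ordered children. -/
inductive PTree (p : ℕ) : Type
  | leaf : PTree p
  | node : (Fin p → PTree p) → PTree p

/-- The number of internal nodes (nodes with `p` children) of a full `p`-ary plane tree. -/
def PTree.internalNodes {p : ℕ} : PTree p → ℕ
  | .leaf => 0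
  | .node f => 1 + ∑ i : Fin p, (f i).internalNodes

/-!
Both sides obey the same recursion. A tree with `n + 1` internal nodes is a root with `p`
subtrees whose sizes `k 0, …, k (p - 1)` sum to `n`. In a noncrossing `p`-partition of
`[c, c + p (n + 1))`, let `c = e 0 < ⋯ < e (p - 1)` be the block of `c` and `e p` the end of the
interval: noncrossing forces every other block into a single gap `(e i, e (i + 1))`, so the gaps
carry noncrossing `p`-partitions of sizes `p * k i` with `∑ k i = n`, and conversely any such data
glue to a noncrossing `p`-partition. Strong induction on `n`, uniformly in the offset `c`, matches
the two recursions.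
-/

open Finset

abbrev NCPartition (p : ℕ) (s : Finset ℕ) :=
  {P : Finpartition s // IsNoncrossing P ∧ ∀ B ∈ P.parts, B.card = p}

theorem Finpartition.eq_of_parts_subset {α : Type*} [DecidableEq α] {s : Finset α}
    {P Q : Finpartition s} (h : P.parts ⊆ Q.parts) : P = Q := by
  refine Finpartition.ext (Subset.antisymm h fun B hB => ?_)
  obtain ⟨x, hx⟩ := Q.nonempty_of_mem_parts hB
  obtain ⟨B', hB', hxB'⟩ := P.exists_mem (Q.le hB hx)
  rwa [← Q.eq_of_mem_parts (h hB') hB hxB' hx]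

/-- A block meeting the stretch between consecutive elements `u < v` of another block `R` stays
inside it. The bound `v` may also lie beyond the ground set: then the minimum `c` of the ground
set, which lies in `R`, closes the stretch from the other side. -/
theorem IsNoncrossing.subset_Ioo {s : Finset ℕ} {P : Finpartition s} (hP : IsNoncrossing P)
    {R B : Finset ℕ} (hR : R ∈ P.parts) (hB : B ∈ P.parts) {c u v x : ℕ} (hc : c ∈ R)
    (hcs : ∀ y ∈ s, c ≤ y) (hu : u ∈ R) (hv : v ∈ R ∨ ∀ y ∈ s, y < v)
    (hRuv : ∀ r ∈ R, r ≤ u ∨ v ≤ r) (hx : x ∈ B) (hux : u < x) (hxv : x < v) :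
    B ⊆ Ioo u v := by
  have hBR : B ≠ R := by
    rintro rfl
    rcases hRuv x hx with h | h <;> omega
  intro y hy
  have hyR : y ∉ R := fun h => hBR (P.eq_of_mem_parts hB hR hy h)
  rw [mem_Ioo]
  by_contra hyuv
  rcases le_or_gt y u with hyu | huy
  · have hcy : c < y := lt_of_le_of_ne (hcs y (P.le hB hy)) (by rintro rfl; exact hyR hc)
    have hyu' : y < u := lt_of_le_of_ne hyu (by rintro rfl; exact hyR hu)
    exact hBR (hP c y u x hcy hyu' hux R hR B hB hc hu hy hx).symm
  · have hvy : v ≤ y := by omega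
    rcases hv with hv | hv
    · have hvy' : v < y := lt_of_le_of_ne hvy (by rintro rfl; exact hyR hv)
      exact hBR (hP u x v y hux hxv hvy' R hR B hB hu hv hx hy).symm
    · exact absurd (hv y (P.le hB hy)) (not_lt.2 hvy)

namespace NCPartition

variable {p : ℕ} {s t : Finset ℕ}

def congr (h : s = t) : NCPartition p s ≃ NCPartition p t :=
  Equiv.cast (congrArg (NCPartition p) h)

instance : Unique (NCPartition p ∅) where
  default := ⟨Finpartition.empty _, fun _ _ _ _ _ _ _ B hB => by simp at hB, by simp⟩
  uniq X := Subtype.ext <| Finpartition.ext <| by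
    rw [X.1.parts_eq_empty_iff.2 rfl]
    rfl

theorem card_eq_mul (X : NCPartition p s) : s.card = p * X.1.parts.card := by
  rw [← X.1.sum_card_parts, sum_congr rfl X.2.2, sum_const, smul_eq_mul, mul_comm]

def restrict (X : NCPartition p s) (hts : t ⊆ s)
    (ht : ∀ B ∈ X.1.parts, ∀ x ∈ B, x ∈ t → B ⊆ t) : NCPartition p t :=
  ⟨X.1.ofSubset (filter_subset (· ⊆ t) X.1.parts) <| by
      refine le_antisymm (Finset.sup_le fun B hB => (mem_filter.1 hB).2) fun x hx => ?_
      obtain ⟨B, hB, hxB⟩ := X.1.exists_mem (hts hx)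
      exact Finset.le_sup (f := id) (mem_filter.2 ⟨hB, ht B hB x hxB hx⟩) hxB,
    fun a b c d hab hbc hcd B₁ h₁ B₂ h₂ =>
      X.2.1 a b c d hab hbc hcd B₁ (mem_filter.1 h₁).1 B₂ (mem_filter.1 h₂).1,
    fun B hB => X.2.2 B (mem_filter.1 hB).1⟩

end NCPartition

section CutPoints

variable {m : ℕ} {e : Fin (m + 1) → ℕ}

def gap (e : Fin (m + 1) → ℕ) (i : Fin m) : Finset ℕ :=
  Ioo (e i.castSucc) (e i.succ)

def rootSet (e : Fin (m + 1) → ℕ) : Finset ℕ :=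
  univ.image (e ∘ Fin.castSucc)

theorem apply_notMem_gap (he : StrictMono e) (i : Fin m) (j : Fin (m + 1)) :
    e j ∉ gap e i := by
  rw [gap, mem_Ioo, he.lt_iff_lt, he.lt_iff_lt, Fin.lt_def, Fin.lt_def]
  simp only [Fin.val_castSucc, Fin.val_succ]
  omega

theorem eq_of_mem_gap (he : StrictMono e) {i j : Fin m} {x : ℕ} (hi : x ∈ gap e i)
    (hj : x ∈ gap e j) : i = j := by
  rw [gap, mem_Ioo] at hi hj
  by_contra hij
  rcases lt_or_gt_of_ne hij with h | h <;>
  · have := he.monotone (Fin.succ_le_castSucc_iff.2 h)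
    omega

theorem exists_eq_or_mem_gap {x : ℕ} (h0 : e 0 ≤ x) (hx : x < e (Fin.last m)) :
    (∃ j : Fin m, e j.castSucc = x) ∨ ∃ i, x ∈ gap e i := by
  obtain ⟨j, hj, hjmax⟩ := exists_max_image (univ.filter (e · ≤ x)) id ⟨0, by simpa⟩
  simp only [mem_filter, mem_univ, true_and, id] at hj hjmax
  obtain ⟨i, rfl⟩ | rfl := Fin.eq_castSucc_or_eq_last j
  · have hxi : x < e i.succ :=
      not_le.1 fun h => (Fin.castSucc_lt_succ (i := i)).not_ge (hjmax _ h)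
    rcases hj.eq_or_lt with h | h
    · exact .inl ⟨i, h⟩
    · exact .inr ⟨i, mem_Ioo.2 ⟨h, hxi⟩⟩
  · omega

theorem card_rootSet (he : StrictMono e) : (rootSet e).card = m := by
  rw [rootSet, card_image_of_injective _ (he.injective.comp (Fin.castSucc_injective m)),
    card_univ, Fintype.card_fin]

theorem castSucc_eq_of_rootSet_eq {e' : Fin (m + 1) → ℕ} (he : StrictMono e)
    (he' : StrictMono e') (h : rootSet e = rootSet e') (j : Fin m) :
    e j.castSucc = e' j.castSucc := by
  have hmem (f : Fin (m + 1) → ℕ) (j : Fin m) : f j.castSucc ∈ rootSet f :=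
    mem_image_of_mem _ (mem_univ j)
  have h₁ := orderEmbOfFin_unique (card_rootSet he) (hmem e) (he.comp Fin.strictMono_castSucc)
  have h₂ := orderEmbOfFin_unique (card_rootSet he) (f := e' ∘ Fin.castSucc) (h ▸ hmem e')
    (he'.comp Fin.strictMono_castSucc)
  exact congrFun (h₁.trans h₂.symm) j

theorem apply_zero_mem_rootSet (hm : 0 < m) : e 0 ∈ rootSet e :=
  mem_image.2 ⟨⟨0, hm⟩, mem_univ _, congrArg e (Fin.ext (by simp))⟩

theorem supIndep_gap (he : StrictMono e) : (univ : Finset (Fin m)).SupIndep (gap e) :=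
  supIndep_iff_pairwiseDisjoint.2 fun _ _ _ _ hij =>
    disjoint_left.2 fun _ hi hj => hij (eq_of_mem_gap he hi hj)

theorem disjoint_sup_gap_rootSet (he : StrictMono e) :
    Disjoint (univ.sup (gap e)) (rootSet e) := by
  refine disjoint_left.2 fun x hx hxR => ?_
  obtain ⟨i, -, hi⟩ := mem_sup.1 hx
  obtain ⟨j, -, rfl⟩ := mem_image.1 hxR
  exact apply_notMem_gap he i _ hi

theorem sup_gap_sup_rootSet (he : StrictMono e) :
    univ.sup (gap e) ⊔ rootSet e = Ico (e 0) (e (Fin.last m)) := by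
  ext x
  simp only [sup_eq_union, mem_union, mem_sup, mem_univ, true_and, mem_Ico]
  constructor
  · rintro (⟨i, hi⟩ | hx)
    · rw [gap, mem_Ioo] at hi
      have := he.monotone (Fin.zero_le i.castSucc)
      have := he.monotone (Fin.le_last i.succ)
      omega
    · obtain ⟨j, -, rfl⟩ := mem_image.1 hx
      exact ⟨he.monotone (Fin.zero_le _), he (Fin.castSucc_lt_last j)⟩
  · rintro ⟨h0, hx⟩
    rcases exists_eq_or_mem_gap h0 hx with ⟨j, rfl⟩ | hi
    · exact .inr (mem_image_of_mem _ (mem_univ j))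
    · exact .inl hi

def Finpartition.glueGaps (hm : 0 < m) (he : StrictMono e) (P : ∀ i, Finpartition (gap e i)) :
    Finpartition (Ico (e 0) (e (Fin.last m))) :=
  (Finpartition.combine P (supIndep_gap he)).extend
    (ne_empty_of_mem (apply_zero_mem_rootSet hm)) (disjoint_sup_gap_rootSet he)
    (sup_gap_sup_rootSet he)

variable {hm : 0 < m} {he : StrictMono e} {P : ∀ i, Finpartition (gap e i)}

theorem Finpartition.glueGaps_parts :
    (glueGaps hm he P).parts = insert (rootSet e) (univ.biUnion fun i => (P i).parts) :=
  rfl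

theorem Finpartition.glueGaps_parts_filter (i : Fin m) :
    (glueGaps hm he P).parts.filter (· ⊆ gap e i) = (P i).parts := by
  ext B
  simp only [mem_filter, glueGaps_parts, mem_insert, mem_biUnion, mem_univ, true_and]
  constructor
  · rintro ⟨rfl | ⟨j, hj⟩, hBi⟩
    · exact absurd (hBi (apply_zero_mem_rootSet hm)) (apply_notMem_gap he i 0)
    · obtain ⟨x, hx⟩ := (P j).nonempty_of_mem_parts hj
      rwa [eq_of_mem_gap he (hBi hx) ((P j).le hj hx)]
  · exact fun hB => ⟨.inr ⟨i, hB⟩, (P i).le hB⟩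

theorem isNoncrossing_glueGaps (hP : ∀ i, IsNoncrossing (P i)) :
    IsNoncrossing (Finpartition.glueGaps hm he P) := by
  have hconv {i a b c} (ha : a ∈ gap e i) (hc : c ∈ gap e i) (hab : a < b) (hbc : b < c) :
      b ∈ gap e i := by
    rw [gap, mem_Ioo] at *
    omega
  intro a b c d hab hbc hcd B₁ h₁ B₂ h₂ ha hc hb hd
  simp only [Finpartition.glueGaps_parts, mem_insert, mem_biUnion, mem_univ, true_and] at h₁ h₂
  rcases h₁ with rfl | ⟨i, h₁⟩ <;> rcases h₂ with rfl | ⟨j, h₂⟩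
  · rfl
  · obtain ⟨l, -, rfl⟩ := mem_image.1 hc
    exact absurd (hconv ((P j).le h₂ hb) ((P j).le h₂ hd) hbc hcd) (apply_notMem_gap he j _)
  · obtain ⟨l, -, rfl⟩ := mem_image.1 hb
    exact absurd (hconv ((P i).le h₁ ha) ((P i).le h₁ hc) hab hbc) (apply_notMem_gap he i _)
  · obtain rfl := eq_of_mem_gap he (hconv ((P i).le h₁ ha) ((P i).le h₁ hc) hab hbc)
      ((P j).le h₂ hb)
    exact hP i a b c d hab hbc hcd B₁ h₁ B₂ h₂ ha hc hb hd

end CutPoints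

section RootPositions

variable {p : ℕ}

/-- Where the block of `c` must sit for its gaps to hold `p * k 0, …, p * k (p - 1)` points;
the last value is the end of the interval. -/
def rootPos (p c : ℕ) (k : Fin p → ℕ) (i : Fin (p + 1)) : ℕ :=
  c + i + p * Fin.partialSum k i

variable (c : ℕ) (k : Fin p → ℕ)

theorem rootPos_zero : rootPos p c k 0 = c := by
  simp [rootPos]

theorem rootPos_succ (i : Fin p) :
    rootPos p c k i.succ = rootPos p c k i.castSucc + 1 + p * k i := by
  simp only [rootPos, Fin.partialSum_succ, Fin.val_succ, Fin.val_castSucc]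
  ring

theorem rootPos_last : rootPos p c k (Fin.last p) = c + p * (∑ i, k i + 1) := by
  rw [rootPos, Fin.partialSum, Fin.val_last, List.take_of_length_le (by simp), List.sum_ofFn]
  ring

theorem rootPos_strictMono : StrictMono (rootPos p c k) :=
  Fin.strictMono_iff_lt_succ.2 fun i => by
    rw [rootPos_succ]
    omega

theorem gap_rootPos (i : Fin p) :
    gap (rootPos p c k) i =
      Ico (rootPos p c k i.castSucc + 1) (rootPos p c k i.castSucc + 1 + p * k i) := by
  rw [gap, rootPos_succ, Ico_add_one_left_eq_Ioo]

theorem rootPos_injective (hp : 0 < p) : Function.Injective (rootPos p c) := by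
  intro k k' h
  funext i
  have := congrFun h i.succ
  rw [rootPos_succ, rootPos_succ, congrFun h i.castSucc] at this
  exact Nat.eq_of_mul_eq_mul_left hp (by omega)

end RootPositions

namespace NCPartition

variable {p n c : ℕ}

abbrev Decomposition (p n c : ℕ) :=
  Σ k : {k : Fin p → ℕ // ∑ i, k i = n}, ∀ i, NCPartition p (gap (rootPos p c k.1) i)

def glue (hp : 0 < p) (x : Decomposition p n c) : NCPartition p (Ico c (c + p * (n + 1))) :=
  ⟨(Finpartition.glueGaps hp (rootPos_strictMono c x.1.1) fun i => (x.2 i).1).copy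
      (by rw [rootPos_zero, rootPos_last, x.1.2]),
    isNoncrossing_glueGaps (hm := hp) (he := rootPos_strictMono c x.1.1) fun i => (x.2 i).2.1,
    fun B hB => by
      rw [Finpartition.copy_parts, Finpartition.glueGaps_parts, mem_insert, mem_biUnion] at hB
      obtain rfl | ⟨i, -, hB⟩ := hB
      · exact card_rootSet (rootPos_strictMono c x.1.1)
      · exact (x.2 i).2.2 B hB⟩

theorem glue_parts (hp : 0 < p) (x : Decomposition p n c) :
    (glue hp x).1.parts =
      insert (rootSet (rootPos p c x.1.1)) (univ.biUnion fun i => (x.2 i).1.parts) :=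
  rfl

theorem glue_injective (hp : 0 < p) :
    Function.Injective (glue hp : Decomposition p n c → _) := by
  rintro ⟨⟨k, hk⟩, Q⟩ ⟨⟨k', hk'⟩, Q'⟩ h
  have hparts :
      (glue hp ⟨⟨k, hk⟩, Q⟩).1.parts = (glue hp ⟨⟨k', hk'⟩, Q'⟩).1.parts :=
    congrArg (·.1.parts) h
  have hroot : rootSet (rootPos p c k) = rootSet (rootPos p c k') := by
    have hmem (k : Fin p → ℕ) : c ∈ rootSet (rootPos p c k) :=
      rootPos_zero c k ▸ apply_zero_mem_rootSet hp
    refine (glue hp ⟨⟨k, hk⟩, Q⟩).1.eq_of_mem_parts (mem_insert_self _ _) ?_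
      (hmem k) (hmem k')
    rw [hparts]
    exact mem_insert_self _ _
  obtain rfl : k = k' := rootPos_injective c hp <| funext <| Fin.lastCases
    (by rw [rootPos_last, rootPos_last, hk, hk'])
    (castSucc_eq_of_rootSet_eq (rootPos_strictMono c k) (rootPos_strictMono c k') hroot)
  obtain rfl : Q = Q' := funext fun i => Subtype.ext <| Finpartition.ext <| by
    have hQ := Finpartition.glueGaps_parts_filter (hm := hp) (he := rootPos_strictMono c k)
      (P := fun i => (Q i).1) i
    have hQ' := Finpartition.glueGaps_parts_filter (hm := hp) (he := rootPos_strictMono c k)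
      (P := fun i => (Q' i).1) i
    exact hQ.symm.trans ((congrArg (filter (· ⊆ gap _ i)) hparts).trans hQ')
  rfl

section Decompose

variable (X : NCPartition p (Ico c (c + p * (n + 1))))

def rootBlock : Finset ℕ := X.1.part c

theorem left_mem_Ico_add_mul (hp : 0 < p) : c ∈ Ico c (c + p * (n + 1)) :=
  left_mem_Ico.2 (Nat.lt_add_of_pos_right (Nat.mul_pos hp n.succ_pos))

theorem rootBlock_mem (hp : 0 < p) : rootBlock X ∈ X.1.parts :=
  X.1.part_mem.2 (left_mem_Ico_add_mul hp)

theorem mem_rootBlock (hp : 0 < p) : c ∈ rootBlock X :=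
  X.1.mem_part (left_mem_Ico_add_mul hp)

def cutSet : Finset ℕ := insert (c + p * (n + 1)) (rootBlock X)

theorem card_cutSet (hp : 0 < p) : (cutSet X).card = p + 1 := by
  rw [cutSet, card_insert_of_notMem, X.2.2 _ (rootBlock_mem X hp)]
  exact fun h => by simpa using X.1.part_subset c h

theorem bounds_of_mem_cutSet {y : ℕ} (hy : y ∈ cutSet X) :
    c ≤ y ∧ y ≤ c + p * (n + 1) := by
  rcases mem_insert.1 hy with rfl | hy
  · omega
  · have := mem_Ico.1 (X.1.part_subset c hy)
    omega

def cuts (hp : 0 < p) : Fin (p + 1) → ℕ :=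
  (cutSet X).orderEmbOfFin (card_cutSet X hp)

variable (hp : 0 < p)

theorem cuts_strictMono : StrictMono (cuts X hp) :=
  (orderEmbOfFin _ _).strictMono

theorem cuts_mem (j : Fin (p + 1)) : cuts X hp j ∈ cutSet X :=
  orderEmbOfFin_mem _ _ j

theorem exists_cuts_eq {y : ℕ} (hy : y ∈ cutSet X) : ∃ j, cuts X hp j = y := by
  rwa [← Set.mem_range, cuts, range_orderEmbOfFin]

theorem cuts_zero : cuts X hp 0 = c := by
  obtain ⟨j, hj⟩ := exists_cuts_eq X hp (mem_insert_of_mem (mem_rootBlock X hp))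
  have := (cuts_strictMono X hp).monotone (Fin.zero_le j)
  have := (bounds_of_mem_cutSet X (cuts_mem X hp 0)).1
  omega

theorem cuts_last : cuts X hp (Fin.last p) = c + p * (n + 1) := by
  obtain ⟨j, hj⟩ := exists_cuts_eq X hp (mem_insert_self _ _)
  have := (cuts_strictMono X hp).monotone (Fin.le_last j)
  have := (bounds_of_mem_cutSet X (cuts_mem X hp (Fin.last p))).2
  omega

theorem rootSet_cuts : rootSet (cuts X hp) = rootBlock X := by
  refine eq_of_subset_of_card_le (fun y hy => ?_)
    (by rw [card_rootSet (cuts_strictMono X hp), X.2.2 _ (rootBlock_mem X hp)])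
  obtain ⟨j, -, rfl⟩ := mem_image.1 hy
  have hlt := cuts_strictMono X hp (Fin.castSucc_lt_last j)
  rw [cuts_last] at hlt
  exact (mem_insert.1 (cuts_mem X hp _)).resolve_left hlt.ne

theorem gap_cuts_subset (i : Fin p) : gap (cuts X hp) i ⊆ Ico c (c + p * (n + 1)) := by
  have h := sup_gap_sup_rootSet (cuts_strictMono X hp)
  rw [cuts_zero, cuts_last] at h
  exact (le_sup (f := gap _) (mem_univ i)).trans (le_sup_left.trans h.le)

theorem subset_gap_cuts (i : Fin p) :
    ∀ B ∈ X.1.parts, ∀ x ∈ B, x ∈ gap (cuts X hp) i → B ⊆ gap (cuts X hp) i := by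
  intro B hB x hxB hx
  have hroot : cuts X hp i.castSucc ∈ rootBlock X :=
    rootSet_cuts X hp ▸ mem_image_of_mem _ (mem_univ i)
  refine X.2.1.subset_Ioo (rootBlock_mem X hp) hB (mem_rootBlock X hp)
    (fun y hy => (mem_Ico.1 hy).1) hroot ?_ ?_ hxB (mem_Ioo.1 hx).1 (mem_Ioo.1 hx).2
  · rcases mem_insert.1 (cuts_mem X hp i.succ) with h | h
    · exact .inr fun y hy => h ▸ (mem_Ico.1 hy).2
    · exact .inl h
  · intro r hr
    obtain ⟨j, rfl⟩ := exists_cuts_eq X hp (mem_insert_of_mem hr)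
    have := apply_notMem_gap (cuts_strictMono X hp) i j
    rw [gap, mem_Ioo] at this
    omega

def gapSize (i : Fin p) : ℕ :=
  (X.restrict (gap_cuts_subset X hp i) (subset_gap_cuts X hp i)).1.parts.card

theorem cuts_succ (i : Fin p) :
    cuts X hp i.succ = cuts X hp i.castSucc + 1 + p * gapSize X hp i := by
  have hcard := card_eq_mul (X.restrict (gap_cuts_subset X hp i) (subset_gap_cuts X hp i))
  have hlt := cuts_strictMono X hp (Fin.castSucc_lt_succ (i := i))
  have hgap : (gap (cuts X hp) i).card = cuts X hp i.succ - cuts X hp i.castSucc - 1 :=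
    Nat.card_Ioo _ _
  rw [gapSize]
  omega

theorem cuts_eq_rootPos : cuts X hp = rootPos p c (gapSize X hp) := by
  funext j
  induction j using Fin.induction with
  | zero => rw [cuts_zero, rootPos_zero]
  | succ i ih => rw [cuts_succ, rootPos_succ, ih]

theorem sum_gapSize : ∑ i, gapSize X hp i = n := by
  have h := cuts_last X hp
  rw [cuts_eq_rootPos, rootPos_last] at h
  have := Nat.eq_of_mul_eq_mul_left hp
    (show p * (∑ i, gapSize X hp i + 1) = p * (n + 1) by omega)
  omega

end Decompose

theorem glue_surjective (hp : 0 < p) :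
    Function.Surjective (glue hp : Decomposition p n c → _) := by
  intro X
  have hcuts := cuts_eq_rootPos X hp
  refine ⟨⟨⟨gapSize X hp, sum_gapSize X hp⟩, fun i =>
    X.restrict (hcuts ▸ gap_cuts_subset X hp i) (hcuts ▸ subset_gap_cuts X hp i)⟩,
    Subtype.ext (Finpartition.eq_of_parts_subset ?_)⟩
  rw [glue_parts]
  refine insert_subset ?_ (biUnion_subset.2 fun i _ => filter_subset _ _)
  show rootSet (rootPos p c (gapSize X hp)) ∈ X.1.parts
  rw [← hcuts, rootSet_cuts]
  exact rootBlock_mem X hp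

noncomputable def decompositionEquiv (hp : 0 < p) :
    NCPartition p (Ico c (c + p * (n + 1))) ≃ Decomposition p n c :=
  (Equiv.ofBijective _ ⟨glue_injective hp, glue_surjective hp⟩).symm

end NCPartition

def sigmaPiFiberEquiv {ι α : Type*} [Fintype ι] (N : α → ℕ) (n : ℕ) :
    (Σ k : {k : ι → ℕ // ∑ i, k i = n}, ∀ i, {a // N a = k.1 i}) ≃
      {g : ι → α // ∑ i, N (g i) = n} where
  toFun x := ⟨fun i => (x.2 i).1, by simp only [(x.2 _).2, x.1.2]⟩
  invFun g := ⟨⟨fun i => N (g.1 i), g.2⟩, fun i => ⟨g.1 i, rfl⟩⟩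
  left_inv := by
    rintro ⟨⟨k, hk⟩, t⟩
    obtain ⟨s, hs, rfl⟩ :
        ∃ (s : ι → α) (hs : ∀ i, N (s i) = k i), t = fun i => ⟨s i, hs i⟩ :=
      ⟨fun i => (t i).1, fun i => (t i).2, rfl⟩
    obtain rfl : (fun i => N (s i)) = k := funext hs
    rfl
  right_inv _ := rfl

namespace PTree

variable {p : ℕ}

instance : Unique {t : PTree p // t.internalNodes = 0} where
  default := ⟨.leaf, rfl⟩
  uniq := by
    rintro ⟨_ | g, h⟩
    · rfl
    · rw [internalNodes] at h
      omega

def nodeEquiv (p n : ℕ) :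
    {t : PTree p // t.internalNodes = n + 1} ≃
      {g : Fin p → PTree p // ∑ i, (g i).internalNodes = n} where
  toFun
    | ⟨.leaf, h⟩ => (n.succ_ne_zero h.symm).elim
    | ⟨.node g, h⟩ => ⟨g, by rw [internalNodes] at h; omega⟩
  invFun g := ⟨.node g.1, by rw [internalNodes, g.2, add_comm]⟩
  left_inv := by
    rintro ⟨_ | g, h⟩
    · exact (n.succ_ne_zero h.symm).elim
    · rfl
  right_inv _ := rfl

end PTree

theorem nonempty_ncPartition_equiv {p : ℕ} (hp : 0 < p) (n c : ℕ) :
    Nonempty (NCPartition p (Ico c (c + p * n)) ≃ {t : PTree p // t.internalNodes = n}) := by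
  induction n using Nat.strong_induction_on generalizing c with
  | _ n ih =>
    cases n with
    | zero =>
      rw [mul_zero, add_zero, Ico_self]
      exact ⟨Equiv.ofUnique _ _⟩
    | succ n =>
      have gapEquiv (k : {k : Fin p → ℕ // ∑ i, k i = n}) (i : Fin p) :
          NCPartition p (gap (rootPos p c k.1) i) ≃ {t : PTree p // t.internalNodes = k.1 i} :=
        have hki : k.1 i < n + 1 := Nat.lt_succ_of_le <|
          (single_le_sum (fun j _ => Nat.zero_le (k.1 j)) (mem_univ i)).trans_eq k.2
        (NCPartition.congr (gap_rootPos c k.1 i)).trans (ih _ hki _).some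
      exact ⟨(NCPartition.decompositionEquiv hp).trans <|
        (Equiv.sigmaCongrRight fun k => Equiv.piCongrRight (gapEquiv k)).trans <|
        (sigmaPiFiberEquiv PTree.internalNodes n).trans (PTree.nodeEquiv p n).symm⟩

/-- For every integer `p ≥ 2` and every natural number `n`, there is a bijection between
noncrossing partitions of `{1,…,pn}` all of whose blocks have exactly `p` elements, and
full `p`-ary plane trees with `n` internal nodes. -/
theorem bijection_p_partitions_p_ary_trees (p : ℕ) (hp : 2 ≤ p) (n : ℕ) :
    Nonempty
      ({P : Finpartition (Finset.Icc 1 (p * n)) //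
          IsNoncrossing P ∧ ∀ B ∈ P.parts, B.card = p} ≃
        {t : PTree p // t.internalNodes = n}) := by
  obtain ⟨e⟩ := nonempty_ncPartition_equiv (by omega : 0 < p) n 1
  have hIcc : Icc 1 (p * n) = Ico 1 (1 + p * n) := by
    rw [add_comm, Ico_add_one_right_eq_Icc]
  exact ⟨(NCPartition.congr hIcc).trans e⟩
end
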